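/- arXiv:1003.5405 — 8 statements merged into one kernel-verified Lean document; each statement's English description precedes it below -/
import Mathlib

section
/- Let Q be a central simple algebra that is finite-dimensional over its center Z(Q), let σ be a ring automorphism of Q, let q ∈ Z(Q) with q ≠ 1, σ(q) = q, and let δ be a q-skew σ-derivation of Q with δ(q) = 0. Then δ is σ-inner: there exists b ∈ Q such that δ(r) = b·r − σ(r)·b for all r ∈ Q (equivalently, the element y = x − b of the Ore extension Q[x;σ,δ] satisfies y·r = σ(r)·y for all r ∈ Q, so Q[x;σ,δ] = Q[y;σ]). -/
universe u v w

/-- `δ` is a `σ`-derivation of `R`: an additive map satisfying the twisted Leibniz rule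
`δ (a * b) = σ a * δ b + δ a * b`. -/
def IsSigmaDerivation {R : Type u} [Ring R] (σ : R ≃+* R) (δ : R → R) : Prop :=
  (∀ a b : R, δ (a + b) = δ a + δ b) ∧ (∀ a b : R, δ (a * b) = σ a * δ b + δ a * b)

/-- `δ` is a `q`-skew `σ`-derivation of `R`: a `σ`-derivation with `q` central,
`σ q = q`, `δ q = 0` and `δ ∘ σ = q • (σ ∘ δ)`. -/
def IsQSkewDerivation {R : Type u} [Ring R] (σ : R ≃+* R) (δ : R → R) (q : R) : Prop :=
  IsSigmaDerivation σ δ ∧ q ∈ Subring.center R ∧ σ q = q ∧ δ q = 0 ∧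
    ∀ r : R, δ (σ r) = q * σ (δ r)

/-- `S`, together with the embedding `ι : R →+* S` and the element `x : S`, is an Ore
extension `R[x;σ,δ]`: `x * r = σ r * x + δ r`, and every element of `S` is uniquely a left
polynomial `∑ aᵢ xⁱ` with coefficients in `R`. -/
structure IsOreExtension {R : Type u} {S : Type v} [Ring R] [Ring S]
    (ι : R →+* S) (x : S) (σ : R ≃+* R) (δ : R → R) : Prop where
  inj : Function.Injective ι
  sderiv : IsSigmaDerivation σ δ
  rel : ∀ r : R, x * ι r = ι (σ r) * x + ι (δ r)
  gen : ∀ s : S, ∃ (m : ℕ) (a : ℕ → R), s = ∑ i ∈ Finset.range m, ι (a i) * x ^ i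
  indep : ∀ (m : ℕ) (a : ℕ → R),
    (∑ i ∈ Finset.range m, ι (a i) * x ^ i) = 0 → ∀ i < m, a i = 0

/-- The coefficients (indexed by words in the free monoid) of an element of the free
`ℤ`-algebra on countably many noncommuting variables. -/
noncomputable def piCoeffs (p : FreeAlgebra ℤ ℕ) : MonoidAlgebra ℤ (FreeMonoid ℕ) :=
  FreeAlgebra.equivMonoidAlgebraFreeMonoid p

/-- A ring `A` is a PI ring: some nonzero polynomial in the free `ℤ`-algebra on countably
many noncommuting variables, one of whose monomials of highest total degree has
coefficient `1`, vanishes under every substitution of elements of `A` for the variables. -/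
def IsPIRing (A : Type u) [Ring A] : Prop :=
  ∃ p : FreeAlgebra ℤ ℕ, p ≠ 0 ∧
    (∃ w ∈ (piCoeffs p).coeff.support,
      (∀ w' ∈ (piCoeffs p).coeff.support, FreeMonoid.length w' ≤ FreeMonoid.length w) ∧
      (piCoeffs p).coeff w = 1) ∧
    ∀ f : ℕ → A, (FreeAlgebra.lift ℤ f) p = 0

/-- `R` is a prime ring: `R ≠ 0` and `a R b = 0` implies `a = 0` or `b = 0`. -/
def IsPrimeRing (R : Type u) [Ring R] : Prop :=
  (0 : R) ≠ 1 ∧ ∀ a b : R, (∀ r : R, a * r * b = 0) → a = 0 ∨ b = 0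

/-- `S` is a right Ore set in `R`. -/
def IsRightOreSet {R : Type u} [Ring R] (S : Set R) : Prop :=
  (1 : R) ∈ S ∧ (∀ s ∈ S, ∀ t ∈ S, s * t ∈ S) ∧
    ∀ (r : R), ∀ s ∈ S, ∃ (r' : R), ∃ s' ∈ S, r * s' = s * r'

/-- `ι : R →+* Q` realizes `Q` as the right Ore localization `R S⁻¹`: elements of `S`
become units, every element of `Q` is a right fraction, and the kernel of `ι` is the set of
elements annihilated on the right by some element of `S`. -/
def IsRightLocalization {R : Type u} {Q : Type v} [Ring R] [Ring Q]
    (ι : R →+* Q) (S : Set R) : Prop :=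
  (∀ s ∈ S, IsUnit (ι s)) ∧
  (∀ z : Q, ∃ (r : R) (s : R), s ∈ S ∧ z * ι s = ι r) ∧
  (∀ r : R, ι r = 0 → ∃ s ∈ S, r * s = 0)

/-- `ι : R →+* Q` realizes `Q` as the classical right quotient ring `Q(R)`, i.e. the right
Ore localization of `R` at the set of regular elements. -/
def IsClassicalRightQuotientRing {R : Type u} {Q : Type v} [Ring R] [Ring Q]
    (ι : R →+* Q) : Prop :=
  IsRightLocalization ι {r : R | IsRegular r}

/-- The composite embedding `A j →+* A i` along a tower of rings. -/
def emb {A : ℕ → Type u} [∀ i, Ring (A i)] (ι : ∀ i, A i →+* A (i + 1)) (j i : ℕ)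
    (h : j ≤ i) : A j →+* A i :=
  Nat.leRecOn h (fun {k} f => (ι k).comp f) (RingHom.id (A j))

/-- In a simple ring, `1` is a finite sum `∑ xⱼ a yⱼ` for any nonzero `a`. -/
lemma my_exists_rep_one {Q : Type u} [Ring Q] (hs : IsSimpleRing Q) {a : Q} (ha : a ≠ 0) :
    ∃ (m : ℕ) (x y : Fin m → Q), ∑ j, x j * a * y j = 1 := by
  classical
  let C : Set Q := {z | ∃ (m : ℕ) (x y : Fin m → Q), z = ∑ j, x j * a * y j}
  have zero_mem : (0 : Q) ∈ C := ⟨0, ![], ![], by simp⟩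
  have add_mem : ∀ {z w : Q}, z ∈ C → w ∈ C → z + w ∈ C := by
    rintro z w ⟨m, x, y, rfl⟩ ⟨m', x', y', rfl⟩
    refine ⟨m + m', Fin.append x x', Fin.append y y', ?_⟩
    rw [Fin.sum_univ_add]
    simp [Fin.append_left, Fin.append_right]
  have neg_mem : ∀ {z : Q}, z ∈ C → -z ∈ C := by
    rintro z ⟨m, x, y, rfl⟩
    exact ⟨m, fun j => -(x j), y, by simp [Finset.sum_neg_distrib]⟩
  have mul_mem_left : ∀ {r z : Q}, z ∈ C → r * z ∈ C := by
    rintro r z ⟨m, x, y, rfl⟩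
    exact ⟨m, fun j => r * x j, y, by rw [Finset.mul_sum]; simp [mul_assoc]⟩
  have mul_mem_right : ∀ {z r : Q}, z ∈ C → z * r ∈ C := by
    rintro z r ⟨m, x, y, rfl⟩
    exact ⟨m, x, fun j => y j * r, by rw [Finset.sum_mul]; simp [mul_assoc]⟩
  let I : TwoSidedIdeal Q := TwoSidedIdeal.mk' C zero_mem add_mem neg_mem mul_mem_left mul_mem_right
  have haI : a ∈ I := by
    rw [TwoSidedIdeal.mem_mk']
    exact ⟨1, fun _ => 1, fun _ => 1, by simp⟩
  have hItop : I = ⊤ := by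
    rcases hs.simple.eq_bot_or_eq_top I with h | h
    · rw [h, TwoSidedIdeal.mem_bot] at haI
      exact absurd haI ha
    · exact h
  have h1 : (1 : Q) ∈ I := by rw [hItop]; exact TwoSidedIdeal.mem_top _
  rw [TwoSidedIdeal.mem_mk'] at h1
  obtain ⟨m, x, y, h⟩ := h1
  exact ⟨m, x, y, h.symm⟩

/-- Artin–Whaples style independence: in a simple ring, if `∑ aᵢ r bᵢ = 0` for all `r`
with `bᵢ` linearly independent over a central field `K`, then all `aᵢ = 0`. -/
lemma my_lin_indep_coeffs {K : Type v} [Field K] {Q : Type u} [Ring Q] [Algebra K Q]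
    (hs : IsSimpleRing Q) {n : ℕ} {b : Fin n → Q} (hb : LinearIndependent K b)
    (hZ : ∀ c : Q, (∀ x : Q, c * x = x * c) → ∃ z : K, c = algebraMap K Q z) :
    ∀ (s : Finset (Fin n)) (a : Fin n → Q), (∀ i, a i ≠ 0 → i ∈ s) →
      (∀ r : Q, ∑ i, a i * r * b i = 0) → ∀ i, a i = 0 := by
  classical
  haveI := hs
  intro s
  induction s using Finset.strongInduction with
  | _ s ih =>
    intro a hsupp hrel i0
    by_contra hne
    have hk : i0 ∈ s := hsupp _ hne
    obtain ⟨m, x, y, hxy⟩ := my_exists_rep_one hs hne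
    set a' : Fin n → Q := fun i => ∑ j, x j * a i * y j with ha'
    have hrel' : ∀ r : Q, ∑ i, a' i * r * b i = 0 := by
      intro r
      have h1 : ∑ i, a' i * r * b i = ∑ j, x j * ∑ i, a i * (y j * r) * b i :=
        calc ∑ i, a' i * r * b i = ∑ i, ∑ j, x j * (a i * (y j * r) * b i) := by
              refine Finset.sum_congr rfl fun i _ => ?_
              rw [ha']
              simp only [Finset.sum_mul]
              exact Finset.sum_congr rfl fun j _ => by simp [mul_assoc]
        _ = ∑ j, ∑ i, x j * (a i * (y j * r) * b i) := Finset.sum_comm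
        _ = ∑ j, x j * ∑ i, a i * (y j * r) * b i := by
              exact Finset.sum_congr rfl fun j _ => (Finset.mul_sum _ _ _).symm
      rw [h1]
      simp [hrel]
    have ha'i0 : a' i0 = 1 := hxy
    have ha'supp : ∀ i, a' i ≠ 0 → i ∈ s := by
      intro i hi
      refine hsupp i fun h0 => hi ?_
      simp [ha', h0]
    have hcomm : ∀ (r : Q) (i : Fin n), a' i * r - r * a' i = 0 := by
      intro r
      refine ih (s.erase i0) (Finset.erase_ssubset hk) (fun i => a' i * r - r * a' i) ?_ ?_
      · intro i hi
        have hi' : a' i * r - r * a' i ≠ 0 := hi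
        rw [Finset.mem_erase]
        constructor
        · rintro rfl
          rw [ha'i0, one_mul, mul_one, sub_self] at hi'
          exact hi' rfl
        · refine ha'supp i fun h0 => hi ?_
          simp only [h0, zero_mul, mul_zero, sub_self]
      · intro t
        have h2 : ∑ i, (a' i * r - r * a' i) * t * b i
            = (∑ i, a' i * (r * t) * b i) - r * ∑ i, a' i * t * b i := by
          rw [Finset.mul_sum, ← Finset.sum_sub_distrib]
          exact Finset.sum_congr rfl fun i _ => by simp [sub_mul, mul_assoc]
        rw [h2, hrel' (r * t), hrel' t, mul_zero, sub_zero]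
    have hcentral : ∀ i, ∃ zz : K, a' i = algebraMap K Q zz := by
      intro i
      refine hZ (a' i) fun t => ?_
      have h4 := hcomm t i
      have := sub_eq_zero.mp h4
      exact this
    choose z hz using hcentral
    have hsum : ∑ i, z i • b i = 0 := by
      have h3 := hrel' 1
      calc ∑ i, z i • b i = ∑ i, a' i * 1 * b i := by
            refine Finset.sum_congr rfl fun i _ => ?_
            rw [hz i, mul_one, Algebra.smul_def]
      _ = 0 := h3
    have hz0 : z i0 = 0 := Fintype.linearIndependent_iff.mp hb z hsum i0
    have : a' i0 = 0 := by rw [hz i0, hz0, map_zero]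
    rw [ha'i0] at this
    exact one_ne_zero this

/-- Skolem–Noether style: an automorphism-intertwining element exists for any ring
automorphism of a finite-dimensional central simple algebra fixing the base field. -/
lemma my_exists_intertwiner {K : Type v} [Field K] {Q : Type u} [Ring Q] [Algebra K Q]
    [FiniteDimensional K Q] (hs : IsSimpleRing Q)
    (hZ : ∀ c : Q, (∀ x : Q, c * x = x * c) → ∃ z : K, c = algebraMap K Q z)
    (σ : Q ≃+* Q) (hσK : ∀ z : K, σ (algebraMap K Q z) = algebraMap K Q z) :
    ∃ u : Q, u ≠ 0 ∧ ∀ r : Q, u * r = σ r * u := by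
  classical
  haveI := hs
  set n := Module.finrank K Q with hn
  have hpos : 0 < n := Module.finrank_pos
  let i₀ : Fin n := ⟨0, hpos⟩
  let b : Module.Basis (Fin n) K Q := Module.finBasis K Q
  have hσs : ∀ (z : K) (m : Q), σ (z • m) = z • σ m := fun z m => by
    rw [Algebra.smul_def, map_mul, hσK, Algebra.smul_def]
  let mul3 : Q → Q → Q →ₗ[K] Q := fun c d =>
    { toFun := fun m => c * m * d
      map_add' := fun m₁ m₂ => by simp [mul_add, add_mul]
      map_smul' := fun z m => by simp [mul_smul_comm, smul_mul_assoc] }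
  have hmul3 : ∀ (c d m : Q), mul3 c d m = c * m * d := fun _ _ _ => rfl
  let Θ : (Fin n → Q) →ₗ[K] (Q →ₗ[K] Q) :=
    { toFun := fun d => ∑ i, mul3 (d i) (b i)
      map_add' := fun d₁ d₂ => by
        refine LinearMap.ext fun m => ?_
        simp [mul3, LinearMap.sum_apply, add_mul, Finset.sum_add_distrib]
      map_smul' := fun z d => by
        refine LinearMap.ext fun m => ?_
        simp [mul3, LinearMap.sum_apply, smul_mul_assoc, Finset.smul_sum] }
  have hΘ : ∀ (d : Fin n → Q) (m : Q), Θ d m = ∑ i, d i * m * b i := fun d m => by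
    simp [Θ, mul3, LinearMap.sum_apply]
  have h0 : ∀ d, Θ d = 0 → d = 0 := by
    intro d hd
    funext i
    refine my_lin_indep_coeffs hs b.linearIndependent hZ Finset.univ d
      (fun _ _ => Finset.mem_univ _) (fun r => ?_) i
    rw [← hΘ, hd]
    rfl
  have hΘinj : Function.Injective Θ :=
    LinearMap.ker_eq_bot.mp (LinearMap.ker_eq_bot'.mpr h0)
  have hfr : Module.finrank K (Fin n → Q) = Module.finrank K (Q →ₗ[K] Q) := by
    rw [Module.finrank_pi_fintype, Module.finrank_linearMap]
    simp [← hn, Finset.sum_const, Fintype.card_fin, smul_eq_mul]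
  have hΘsurj : Function.Surjective Θ :=
    (LinearMap.injective_iff_surjective_of_finrank_eq_finrank hfr).mp hΘinj
  let Θσ : (Fin n → Q) → (Q →ₗ[K] Q) := fun d => Θ (fun i => σ (d i))
  let dcomp : (Fin n → Q) → (Fin n → Q) → (Fin n → Q) := fun e e' k =>
    ∑ i, ∑ j, b.repr (b j * b i) k • (e i * e' j)
  have Hcomp : ∀ e e', Θ (dcomp e e') = (Θ e) ∘ₗ (Θ e') := by
    intro e e'
    refine LinearMap.ext fun m => ?_
    rw [LinearMap.comp_apply, hΘ, hΘ, hΘ]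
    calc ∑ k, dcomp e e' k * m * b k
        = ∑ k, ∑ i, ∑ j, (e i * e' j * m) * (b.repr (b j * b i) k • b k) := by
          refine Finset.sum_congr rfl fun k _ => ?_
          simp only [dcomp, Finset.sum_mul]
          refine Finset.sum_congr rfl fun i _ => Finset.sum_congr rfl fun j _ => ?_
          rw [smul_mul_assoc, smul_mul_assoc, mul_smul_comm, mul_assoc]
      _ = ∑ i, ∑ j, ∑ k, (e i * e' j * m) * (b.repr (b j * b i) k • b k) := by
          rw [Finset.sum_comm]
          refine Finset.sum_congr rfl fun i _ => Finset.sum_comm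
      _ = ∑ i, ∑ j, (e i * e' j * m) * (b j * b i) := by
          refine Finset.sum_congr rfl fun i _ => Finset.sum_congr rfl fun j _ => ?_
          rw [← Finset.mul_sum, Module.Basis.sum_repr]
      _ = ∑ i, e i * (∑ j, e' j * m * b j) * b i := by
          refine Finset.sum_congr rfl fun i _ => ?_
          rw [Finset.mul_sum, Finset.sum_mul]
          exact Finset.sum_congr rfl fun j _ => by simp [mul_assoc]
  have hσd : ∀ e e', (fun k => σ (dcomp e e' k))
      = dcomp (fun i => σ (e i)) (fun j => σ (e' j)) := by
    intro e e'
    funext k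
    simp [dcomp, map_sum, map_mul, hσs]
  have Hcompσ : ∀ e e', Θσ (dcomp e e') = (Θσ e) ∘ₗ (Θσ e') := by
    intro e e'
    show Θ _ = _
    rw [hσd, Hcomp]
  let dL : Q → Q → (Fin n → Q) := fun a x j => b.repr x j • a
  have hdL : ∀ a x, Θ (dL a x) = mul3 a x := by
    intro a x
    refine LinearMap.ext fun m => ?_
    rw [hΘ, hmul3]
    calc ∑ j, (b.repr x j • a) * m * b j = ∑ j, (a * m) * (b.repr x j • b j) := by
          refine Finset.sum_congr rfl fun j _ => ?_
          rw [smul_mul_assoc, smul_mul_assoc, mul_smul_comm]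
      _ = a * m * x := by rw [← Finset.mul_sum, Module.Basis.sum_repr]
  have hdLσ : ∀ a x, Θσ (dL a x) = mul3 (σ a) x := by
    intro a x
    show Θ _ = _
    have he : (fun j => σ (dL a x j)) = dL (σ a) x := by
      funext j
      simp [dL, hσs]
    rw [he, hdL]
  let T : Q → (Q →ₗ[K] Q) := fun x => (b.coord i₀).smulRight x
  have hT : ∀ x m, T x m = b.coord i₀ m • x := fun x m => by simp [T]
  have hc : ∀ x : Q, ∃ d, Θ d = T x := fun x => hΘsurj (T x)
  choose cc hcc using hc
  have habs : ∀ (aa x bb : Q), Θσ (cc (aa * x * bb)) = mul3 (σ aa) bb ∘ₗ Θσ (cc x) := by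
    intro aa x bb
    have h1 : T (aa * x * bb) = mul3 aa bb ∘ₗ T x := by
      refine LinearMap.ext fun m => ?_
      rw [LinearMap.comp_apply, hT, hT, hmul3, mul_smul_comm, smul_mul_assoc]
    have h3 : cc (aa * x * bb) = dcomp (dL aa bb) (cc x) := by
      apply hΘinj
      rw [hcc, Hcomp, hdL, hcc, h1]
    rw [h3, Hcompσ, hdLσ]
  have hTidem : T (b i₀) ∘ₗ T (b i₀) = T (b i₀) := by
    refine LinearMap.ext fun m => ?_
    simp [T, Module.Basis.coord_apply, Module.Basis.repr_self, smul_smul]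
  have h4 : cc (b i₀) = dcomp (cc (b i₀)) (cc (b i₀)) := by
    apply hΘinj
    rw [hcc, Hcomp, hcc, hTidem]
  have hpidem : Θσ (cc (b i₀)) ∘ₗ Θσ (cc (b i₀)) = Θσ (cc (b i₀)) := by
    rw [← Hcompσ, ← h4]
  have hb0 : (b i₀ : Q) ≠ 0 := b.ne_zero i₀
  have hp0 : Θσ (cc (b i₀)) ≠ 0 := by
    intro h
    have h5 : (fun i => σ (cc (b i₀) i)) = 0 := h0 _ h
    have h6 : cc (b i₀) = 0 := by
      funext i
      have h7 := congrFun h5 i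
      simp only [Pi.zero_apply] at h7
      exact σ.injective (by simp [h7])
    have h8 := hcc (b i₀)
    rw [h6, map_zero] at h8
    have h9 := LinearMap.congr_fun h8 (b i₀)
    simp only [LinearMap.zero_apply, hT, Module.Basis.coord_apply, Module.Basis.repr_self,
      Finsupp.single_eq_same, one_smul] at h9
    exact hb0 h9.symm
  obtain ⟨y0, hy0⟩ : ∃ y, Θσ (cc (b i₀)) y ≠ 0 := by
    by_contra h
    push_neg at h
    exact hp0 (LinearMap.ext fun m => by simpa using h m)
  set w0 : Q := Θσ (cc (b i₀)) y0 with hw0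
  let g : Q → Q := fun x => Θσ (cc x) w0
  have hg1 : ∀ aa x bb, g (aa * x * bb) = σ aa * g x * bb := by
    intro aa x bb
    have h10 := LinearMap.congr_fun (habs aa x bb) w0
    rw [LinearMap.comp_apply, hmul3] at h10
    exact h10
  have hgb0 : g (b i₀) = w0 := by
    show Θσ (cc (b i₀)) w0 = w0
    rw [hw0, ← LinearMap.comp_apply, hpidem]
  have hgu : ∀ m, g m = σ m * g 1 := by
    intro m
    have := hg1 m 1 1
    rw [mul_one, mul_one, mul_one] at this
    exact this
  have hgu' : ∀ m, g m = g 1 * m := by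
    intro m
    have := hg1 1 1 m
    rw [mul_one, one_mul, map_one, one_mul] at this
    exact this
  refine ⟨g 1, ?_, fun r => ?_⟩
  · intro h
    have h11 := hgu (b i₀)
    rw [h, mul_zero, hgb0] at h11
    exact hy0 h11
  · rw [← hgu' r, hgu r]

/-- An intertwining element in a finite-dimensional simple algebra is a unit. -/
lemma my_intertwine_unit {K : Type v} [Field K] {Q : Type u} [Ring Q] [Algebra K Q]
    [FiniteDimensional K Q] (hs : IsSimpleRing Q) (σ : Q ≃+* Q) {u : Q} (hu : u ≠ 0)
    (hrel : ∀ r : Q, u * r = σ r * u) : ∃ v : Q, u * v = 1 ∧ v * u = 1 := by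
  haveI := hs
  let Lu : Q →ₗ[K] Q :=
    { toFun := fun m => u * m
      map_add' := fun m₁ m₂ => mul_add u m₁ m₂
      map_smul' := fun z m => by simp [mul_smul_comm] }
  have hinj : Function.Injective Lu := by
    rw [← LinearMap.ker_eq_bot]
    rw [LinearMap.ker_eq_bot']
    intro x hx
    by_contra hx0
    obtain ⟨m, aa, cb, h1⟩ := my_exists_rep_one hs hx0
    have hx' : u * x = 0 := hx
    have h2 : u = ∑ j, σ (aa j) * (u * x) * cb j := by
      calc u = u * 1 := (mul_one u).symm
        _ = u * ∑ j, aa j * x * cb j := by rw [h1]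
        _ = ∑ j, u * (aa j * x * cb j) := Finset.mul_sum _ _ _
        _ = ∑ j, σ (aa j) * (u * x) * cb j := by
            refine Finset.sum_congr rfl fun j _ => ?_
            rw [← mul_assoc, ← mul_assoc, hrel (aa j)]; simp [mul_assoc]
    rw [hx'] at h2
    simp at h2
    exact hu h2
  have hsurj : Function.Surjective Lu := LinearMap.surjective_of_injective hinj
  obtain ⟨v, hv⟩ := hsurj 1
  have huv : u * v = 1 := hv
  have hσv : σ v * u = 1 := by rw [← hrel, huv]
  have hveq : σ v = v := by
    calc σ v = σ v * (u * v) := by rw [huv, mul_one]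
      _ = (σ v * u) * v := (mul_assoc _ _ _).symm
      _ = v := by rw [hσv, one_mul]
  exact ⟨v, huv, by rw [← hveq, hσv]⟩


/-- A `q`-skew `σ`-derivation, `q ≠ 1`, of a central simple algebra `Q`
finite-dimensional over its center is `σ`-inner; equivalently, `y = x - b` in the Ore
extension `Q[x;σ,δ]` satisfies `y * r = σ r * y`, so `Q[x;σ,δ] = Q[y;σ]`. -/
theorem erasing_derivation_csa {Q : Type u} [Ring Q]
    (hsimple : IsSimpleRing Q)
    (hfin : ∃ (m : ℕ) (v : Fin m → Q), ∀ r : Q, ∃ c : Fin m → Q,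
      (∀ i, c i ∈ Subring.center Q) ∧ r = ∑ i, c i * v i)
    (σ : Q ≃+* Q) (δ : Q → Q) (q : Q) (hq1 : q ≠ 1)
    (hskew : IsQSkewDerivation σ δ q) :
    ∃ b : Q, (∀ r : Q, δ r = b * r - σ r * b) ∧
      ∀ (S : Type u) [Ring S] (ι : Q →+* S) (x : S), IsOreExtension ι x σ δ →
        ∀ r : Q, (x - ι b) * ι r = ι (σ r) * (x - ι b) := by
  classical
  haveI := hsimple
  obtain ⟨⟨hadd, hmul⟩, hqc, hσq, hδq, hqskew⟩ := hskew
  have hδ1 : δ 1 = 0 := by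
    have h := hmul 1 1
    rw [mul_one, map_one, one_mul, mul_one] at h
    have h' : δ 1 + δ 1 = δ 1 := h.symm
    simpa using h'
  letI : Field (Subring.center Q) := (IsSimpleRing.isField_center Q).toField
  haveI : Module.Finite (Subring.center Q) Q := by
    obtain ⟨m, v, hv⟩ := hfin
    refine ⟨⟨(Set.finite_range v).toFinset, ?_⟩⟩
    rw [Set.Finite.coe_toFinset, eq_top_iff]
    rintro r -
    obtain ⟨cf, hcmem, hr⟩ := hv r
    rw [hr]
    refine Submodule.sum_mem _ fun i _ => ?_
    have h1 : cf i * v i = (⟨cf i, hcmem i⟩ : Subring.center Q) • v i := rfl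
    rw [h1]
    exact Submodule.smul_mem _ _ (Submodule.subset_span ⟨i, rfl⟩)
  have hZ : ∀ c : Q, (∀ x : Q, c * x = x * c) →
      ∃ z : Subring.center Q, c = algebraMap (Subring.center Q) Q z := by
    intro c hc
    exact ⟨⟨c, Subring.mem_center_iff.mpr fun g => (hc g).symm⟩, rfl⟩
  -- the fundamental identity for central elements
  have hstar : ∀ z : Q, z ∈ Subring.center Q → ∀ r : Q,
      z * δ r - σ z * δ r = δ z * r - σ r * δ z := by
    intro z hz r
    have h1 := hmul z r
    have h2 := hmul r z
    have h3 : z * r = r * z := (Subring.mem_center_iff.mp hz r).symm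
    rw [h3] at h1
    have h4 : σ z * δ r + δ z * r = σ r * δ z + δ r * z := h1.symm.trans h2
    have h5 : δ r * z = z * δ r := Subring.mem_center_iff.mp hz (δ r)
    rw [h5] at h4
    rw [sub_eq_sub_iff_add_eq_add]
    rw [add_comm (z * δ r), add_comm (δ z * r)]
    exact h4.symm
  have hmain : ∃ b : Q, ∀ r : Q, δ r = b * r - σ r * b := by
    by_cases hcase1 : ∃ z : Q, z ∈ Subring.center Q ∧ σ z ≠ z
    · -- σ moves some central element
      obtain ⟨z, hz, hσz⟩ := hcase1
      have hσzc : σ z ∈ Subring.center Q := by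
        rw [Subring.mem_center_iff]
        intro g
        have h6 : σ.symm g * z = z * σ.symm g :=
          Subring.mem_center_iff.mp hz (σ.symm g)
        calc g * σ z = σ (σ.symm g * z) := by rw [map_mul, RingEquiv.apply_symm_apply]
          _ = σ (z * σ.symm g) := by rw [h6]
          _ = σ z * g := by rw [map_mul, RingEquiv.apply_symm_apply]
      set w : Subring.center Q := ⟨z, hz⟩ - ⟨σ z, hσzc⟩ with hw
      have hwne : w ≠ 0 := by
        intro h
        apply hσz
        have h7 : z - σ z = 0 := congrArg Subtype.val h
        rw [sub_eq_zero] at h7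
        exact h7.symm
      set ee : Subring.center Q := w⁻¹ with hee
      have hewQ : (ee : Q) * (z - σ z) = 1 := by
        have h8 := congrArg Subtype.val (inv_mul_cancel₀ hwne)
        exact h8
      have he_c : ∀ g : Q, g * (ee : Q) = (ee : Q) * g :=
        fun g => Subring.mem_center_iff.mp ee.2 g
      refine ⟨(ee : Q) * δ z, fun r => ?_⟩
      have h6 := hstar z hz r
      calc δ r = ((ee : Q) * (z - σ z)) * δ r := by rw [hewQ, one_mul]
        _ = (ee : Q) * ((z - σ z) * δ r) := mul_assoc _ _ _
        _ = (ee : Q) * (δ z * r - σ r * δ z) := by rw [sub_mul, h6]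
        _ = (ee : Q) * δ z * r - σ r * ((ee : Q) * δ z) := by
            rw [mul_sub, mul_assoc, ← mul_assoc (ee : Q) (σ r), ← he_c (σ r), mul_assoc]
    · -- σ fixes the center pointwise
      push_neg at hcase1
      have hfix : ∀ z : Q, z ∈ Subring.center Q → σ z = z := hcase1
      obtain ⟨u, hu0, hrelu⟩ := my_exists_intertwiner (K := Subring.center Q) hsimple hZ σ
        (fun z => hfix z.1 z.2)
      obtain ⟨v, huv, hvu⟩ := my_intertwine_unit (K := Subring.center Q) hsimple σ hu0 hrelu
      have hσr : ∀ r : Q, σ r = u * r * v := by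
        intro r
        calc σ r = σ r * (u * v) := by rw [huv, mul_one]
          _ = (σ r * u) * v := (mul_assoc _ _ _).symm
          _ = (u * r) * v := by rw [← hrelu]
      have hσu : σ u = u := by
        rw [hσr u, mul_assoc, huv, mul_one]
      have hδv : δ v = -(v * (δ u * v)) := by
        have h7 : δ (u * v) = 0 := by rw [huv, hδ1]
        have h8 := hmul u v
        rw [h7, hσu] at h8
        have h9 : u * δ v = -(δ u * v) := by
          rw [eq_neg_iff_add_eq_zero]
          exact h8.symm
        calc δ v = (v * u) * δ v := by rw [hvu, one_mul]
          _ = v * (u * δ v) := mul_assoc _ _ _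
          _ = -(v * (δ u * v)) := by rw [h9, mul_neg]
      have hq1c : (1 : Q) - q ∈ Subring.center Q := sub_mem (Subring.one_mem _) hqc
      set wq : Subring.center Q := ⟨1 - q, hq1c⟩ with hwq
      have hwqne : wq ≠ 0 := by
        intro h
        have h10 : (1 : Q) - q = 0 := congrArg Subtype.val h
        rw [sub_eq_zero] at h10
        exact hq1 h10.symm
      set ee : Subring.center Q := wq⁻¹ with heedef
      have heeQ : (ee : Q) * ((1 : Q) - q) = 1 := congrArg Subtype.val (inv_mul_cancel₀ hwqne)
      have hee_c : ∀ g : Q, g * (ee : Q) = (ee : Q) * g :=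
        fun g => Subring.mem_center_iff.mp ee.2 g
      -- the key identity
      have hkey : ∀ r : Q, ((1 : Q) - q) * (u * δ r) = σ (σ r) * δ u - δ u * r := by
        intro r
        have h10 := hqskew r
        rw [hσr (δ r)] at h10
        rw [hσr r, mul_assoc u r v] at h10
        rw [hmul u (r * v), hσu, hmul r v, mul_add] at h10
        -- h10 : u * (σ r * δ v) + u * (δ r * v) + δ u * (r * v) = q * (u * δ r * v)
        have hE2 := congrArg (fun t => t * u) h10
        simp only [add_mul] at hE2
        have hc1 : ∀ a c : Q, a * (c * v) * u = a * c := by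
          intro a c
          rw [mul_assoc, mul_assoc, hvu, mul_one]
        have hc2 : (u * (δ r * v)) * u = u * δ r := hc1 u (δ r)
        have hc3 : (δ u * (r * v)) * u = δ u * r := hc1 (δ u) r
        have hc4 : (q * (u * δ r * v)) * u = q * (u * δ r) := by
          rw [mul_assoc q, mul_assoc (u * δ r) v u, hvu, mul_one]
        have hc5 : (u * (σ r * δ v)) * u = -(σ (σ r) * δ u) := by
          rw [hδv, mul_neg, mul_neg, neg_mul]
          congr 1
          calc (u * (σ r * (v * (δ u * v)))) * u
              = ((u * σ r * v) * δ u) * (v * u) := by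
                simp only [mul_assoc]
            _ = σ (σ r) * δ u := by rw [hvu, mul_one, ← hσr (σ r)]
        rw [hc2, hc3, hc4, hc5] at hE2
        -- hE2 : -(σ (σ r) * δ u) + u * δ r + δ u * r = q * (u * δ r)
        rw [sub_mul, one_mul, sub_eq_sub_iff_add_eq_add]
        calc u * δ r + δ u * r
            = σ (σ r) * δ u + ((-(σ (σ r) * δ u) + u * δ r) + δ u * r) := by abel
          _ = σ (σ r) * δ u + q * (u * δ r) := by rw [hE2]
      refine ⟨-((ee : Q) * (v * δ u)), fun r => ?_⟩
      have h11 : u * δ r = (ee : Q) * (σ (σ r) * δ u - δ u * r) := by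
        calc u * δ r = ((ee : Q) * ((1 : Q) - q)) * (u * δ r) := by rw [heeQ, one_mul]
          _ = (ee : Q) * (((1 : Q) - q) * (u * δ r)) := mul_assoc _ _ _
          _ = (ee : Q) * (σ (σ r) * δ u - δ u * r) := by rw [hkey r]
      have hvσ2 : v * σ (σ r) = σ r * v := by
        rw [hσr (σ r)]
        calc v * (u * σ r * v) = ((v * u) * σ r) * v := by simp only [mul_assoc]
          _ = σ r * v := by rw [hvu, one_mul]
      have h12 : δ r = σ r * ((ee : Q) * (v * δ u)) - ((ee : Q) * (v * δ u)) * r := by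
        calc δ r = (v * u) * δ r := by rw [hvu, one_mul]
          _ = v * (u * δ r) := mul_assoc _ _ _
          _ = v * ((ee : Q) * (σ (σ r) * δ u - δ u * r)) := by rw [h11]
          _ = (ee : Q) * (v * (σ (σ r) * δ u - δ u * r)) := by
              rw [← mul_assoc, hee_c v, mul_assoc]
          _ = (ee : Q) * ((v * σ (σ r)) * δ u - (v * δ u) * r) := by
              rw [mul_sub]
              simp only [mul_assoc]
          _ = (ee : Q) * ((σ r * v) * δ u - (v * δ u) * r) := by rw [hvσ2]
          _ = σ r * ((ee : Q) * (v * δ u)) - ((ee : Q) * (v * δ u)) * r := by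
              rw [mul_sub]
              congr 1
              · rw [mul_assoc (σ r) v (δ u), ← mul_assoc, ← hee_c (σ r), mul_assoc]
              · rw [← mul_assoc]
      rw [h12, neg_mul, mul_neg, sub_neg_eq_add]
      abel
  obtain ⟨b, hb⟩ := hmain
  refine ⟨b, hb, ?_⟩
  intro S _ ι x hOre r
  have h1 := hOre.rel r
  have h2 : ι (δ r) = ι b * ι r - ι (σ r) * ι b := by
    rw [hb r, map_sub, map_mul, map_mul]
  rw [sub_mul, h1, h2, mul_sub]
  abel
end

section
/- Let Q be a central simple algebra that is finite-dimensional over its center Z(Q), let σ be a ring automorphism of Q that fixes Z(Q) pointwise, let q ∈ Z(Q) with q ≠ 1, σ(q) = q, and let δ be a q-skew σ-derivation of Q with δ(q) = 0. Then δ(z) = 0 for all z ∈ Z(Q). -/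
universe u v w

private lemma ann_aux {Q : Type u} [Ring Q] (hs : IsSimpleRing Q) (c : Q)
    (h : ∀ r x : Q, c * x = 0 → c * (r * x) = 0) :
    ∀ x : Q, c * x = 0 → c = 0 ∨ x = 0 := by
  intro x hx
  let I : TwoSidedIdeal Q := TwoSidedIdeal.mk' {y | c * y = 0}
    (by simp)
    (fun {a b} ha hb => by
      simp only [Set.mem_setOf_eq] at *; rw [mul_add, ha, hb, add_zero])
    (fun {a} ha => by
      simp only [Set.mem_setOf_eq] at *; rw [mul_neg, ha, neg_zero])
    (fun {r y} hy => h r y hy)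
    (fun {y r} hy => by
      simp only [Set.mem_setOf_eq] at *; rw [← mul_assoc, hy, zero_mul])
  haveI := hs.simple
  rcases eq_bot_or_eq_top I with hI | hI
  · right
    have hxI : x ∈ I := by
      simp only [I, TwoSidedIdeal.mem_mk', Set.mem_setOf_eq]
      exact hx
    rw [hI] at hxI
    exact (TwoSidedIdeal.mem_bot Q).mp hxI
  · left
    have h1 : (1 : Q) ∈ I := by rw [hI]; exact TwoSidedIdeal.mem_top Q
    have hc1 : c * 1 = 0 := by
      simpa only [I, TwoSidedIdeal.mem_mk', Set.mem_setOf_eq] using h1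
    simpa using hc1

/-- If `σ` fixes the center of a finite-dimensional central simple algebra
`Q` pointwise and `δ` is a `q`-skew `σ`-derivation with `q ≠ 1`, then `δ` vanishes on the
center of `Q`. -/
theorem qskew_derivation_vanishes_on_center {Q : Type u} [Ring Q]
    (hsimple : IsSimpleRing Q)
    (hfin : ∃ (m : ℕ) (v : Fin m → Q), ∀ r : Q, ∃ c : Fin m → Q,
      (∀ i, c i ∈ Subring.center Q) ∧ r = ∑ i, c i * v i)
    (σ : Q ≃+* Q) (hσcen : ∀ z ∈ Subring.center Q, σ z = z)
    (δ : Q → Q) (q : Q) (hq1 : q ≠ 1)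
    (hskew : IsQSkewDerivation σ δ q) :
    ∀ z ∈ Subring.center Q, δ z = 0 := by
  obtain ⟨⟨hadd, hmul⟩, hqc, hσq, hδq, hcomp⟩ := hskew
  intro z hz
  set d := δ z with hd
  have hσz : σ z = z := hσcen z hz
  have hcz : ∀ r : Q, z * r = r * z := fun r =>
    (Subring.mem_center_iff.mp hz r).symm
  -- Key: d * r = σ r * d for all r
  have key : ∀ r : Q, d * r = σ r * d := by
    intro r
    have h1 : δ (z * r) = z * δ r + d * r := by rw [hmul, hσz, ← hd]
    have h2 : δ (r * z) = σ r * d + z * δ r := by rw [hmul, ← hd, hcz]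
    have h3 : z * δ r + d * r = σ r * d + z * δ r := by
      rw [← h1, hcz, h2]
    have h4 : z * δ r + d * r = z * δ r + σ r * d := by
      rw [h3, add_comm]
    exact add_left_cancel h4
  -- d = q * σ d
  have hqd : d = q * σ d := by
    have := hcomp z
    rwa [hσz, ← hd] at this
  -- (1 - q) * (d * d) = 0
  have hdd : d * d = q * (d * d) := by
    calc d * d = (q * σ d) * d := by rw [← hqd]
      _ = q * (σ d * d) := by rw [mul_assoc]
      _ = q * (d * d) := by rw [← key d]
  have h1q : (1 - q) * (d * d) = 0 := by
    rw [sub_mul, one_mul, ← hdd, sub_self]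
  -- 1 - q is central, so the annihilator argument applies
  have hqcen : ∀ r : Q, q * r = r * q := fun r => Subring.mem_center_iff.mp hqc r |>.symm
  have hsq : d * d = 0 := by
    rcases ann_aux hsimple (1 - q)
      (fun r x hx => by
        have : (1 - q) * (r * x) = r * ((1 - q) * x) := by
          rw [sub_mul, sub_mul, one_mul, one_mul, mul_sub,
            ← mul_assoc q r x, hqcen r, mul_assoc]
        rw [this, hx, mul_zero])
      (d * d) h1q with h | h
    · exact absurd (sub_eq_zero.mp h).symm hq1
    · exact h
  -- d * x = 0 is preserved by left mult: d * (r * x) = σ r * (d * x)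
  rcases ann_aux hsimple d
    (fun r x hx => by rw [← mul_assoc, key r, mul_assoc, hx, mul_zero])
    d hsq with h | h
  · exact h
  · exact h
end

section
/- Let R be a ring, σ a ring automorphism of R, δ a σ-derivation of R, and suppose there exists c ∈ Z(R) such that u = σ(c) − c is invertible in R. Then δ(r) = σ(r)·w − w·r for all r ∈ R, where w = u⁻¹δ(c); in particular δ is σ-inner, and the element y = x + u⁻¹δ(c) of the Ore extension R[x;σ,δ] satisfies y·r = σ(r)·y for all r ∈ R, so R[x;σ,δ] = R[y;σ]. -/
universe u v w

/-- If `u = σ c - c` is invertible for some central `c`, then `δ` is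
`σ`-inner, implemented by `w = u⁻¹ * δ c`; moreover `y = x + u⁻¹ δ c` in the Ore extension
`R[x;σ,δ]` satisfies `y * r = σ r * y`, so `R[x;σ,δ] = R[y;σ]`. -/
theorem sigma_inner_of_central_unit_difference {R : Type u} [Ring R]
    (σ : R ≃+* R) (δ : R → R) (hδ : IsSigmaDerivation σ δ)
    (c : R) (hc : c ∈ Subring.center R) (hu : IsUnit (σ c - c)) :
    (∀ r : R, δ r = σ r * (Ring.inverse (σ c - c) * δ c)
        - (Ring.inverse (σ c - c) * δ c) * r) ∧
      ∀ (S : Type v) [Ring S] (ι : R →+* S) (x : S), IsOreExtension ι x σ δ →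
        ∀ r : R, (x + ι (Ring.inverse (σ c - c) * δ c)) * ι r
          = ι (σ r) * (x + ι (Ring.inverse (σ c - c) * δ c)) := by

  -- `σ c` is central, hence `u = σ c - c` is central, hence its inverse is central.
  have hcc : ∀ a : R, c * a = a * c := fun a => (Subring.mem_center_iff.mp hc a).symm
  have hscc : ∀ a : R, σ c * a = a * σ c := by
    intro a
    have := congrArg σ (hcc (σ.symm a))
    simpa using this
  set u : R := σ c - c with hu_def
  have huc : ∀ a : R, u * a = a * u := by
    intro a
    simp only [hu_def, sub_mul, mul_sub, hscc a, hcc a]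
  have hinvc : ∀ a : R, Ring.inverse u * a = a * Ring.inverse u := by
    intro a
    obtain ⟨v, hv⟩ := hu
    have h1 : Ring.inverse u = ↑v⁻¹ := by rw [← hv, Ring.inverse_unit]
    rw [h1]
    calc (↑v⁻¹ : R) * a = ↑v⁻¹ * (a * ↑v) * ↑v⁻¹ := by
          rw [mul_assoc, mul_assoc, Units.mul_inv, mul_one]
      _ = ↑v⁻¹ * (↑v * a) * ↑v⁻¹ := by rw [hv, huc a]
      _ = a * ↑v⁻¹ := by rw [← mul_assoc, Units.inv_mul, one_mul]
  obtain ⟨hadd, hmul⟩ := hδ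
  have key : ∀ r : R, u * δ r = σ r * δ c - δ c * r := by
    intro r
    have h1 : δ (c * r) = σ c * δ r + δ c * r := hmul c r
    have h2 : δ (r * c) = σ r * δ c + δ r * c := hmul r c
    have h3 : δ (c * r) = δ (r * c) := by rw [hcc r]
    have : σ c * δ r + δ c * r = σ r * δ c + δ r * c := by rw [← h1, ← h2, h3]
    have h4 : δ r * c = c * δ r := (hcc (δ r)).symm
    rw [h4] at this
    rw [hu_def, sub_mul, sub_eq_sub_iff_add_eq_add]
    exact this
  have hmain : ∀ r : R, δ r = σ r * (Ring.inverse u * δ c) - (Ring.inverse u * δ c) * r := by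
    intro r
    have hinvu : Ring.inverse u * u = 1 := Ring.inverse_mul_cancel u hu
    calc δ r = Ring.inverse u * (u * δ r) := by rw [← mul_assoc, hinvu, one_mul]
      _ = Ring.inverse u * (σ r * δ c - δ c * r) := by rw [key r]
      _ = Ring.inverse u * (σ r * δ c) - Ring.inverse u * δ c * r := by
          rw [mul_sub, mul_assoc]
      _ = σ r * (Ring.inverse u * δ c) - (Ring.inverse u * δ c) * r := by
          rw [← mul_assoc, hinvc (σ r), mul_assoc]
  refine ⟨hmain, ?_⟩
  intro S _ ι x hOre r
  have hrel := hOre.rel r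
  set w : R := Ring.inverse u * δ c with hw
  have hkey : δ r + w * r = σ r * w := by rw [hmain r, sub_add_cancel]
  calc (x + ι w) * ι r = ι (σ r) * x + (ι (δ r) + ι w * ι r) := by
        rw [add_mul, hrel, add_assoc]
    _ = ι (σ r) * x + ι (δ r + w * r) := by rw [map_add, map_mul ι w r]
    _ = ι (σ r) * x + ι (σ r) * ι w := by rw [hkey, map_mul ι (σ r) w]
    _ = ι (σ r) * (x + ι w) := by rw [mul_add]
end

section
/- Let R be a ring, σ a ring automorphism of R, δ a σ-derivation of R, and S ⊆ R a right Ore set consisting of regular elements such that σ(S) ⊆ S. Then S is a right Ore set of regular elements of the Ore extension R[x;σ,δ], and the localization (R[x;σ,δ])S⁻¹ is isomorphic to (RS⁻¹)[x;σ,δ], where σ and δ denote their unique extensions to RS⁻¹. -/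
universe u v w

namespace OreLoc
open Polynomial Finset

variable {R : Type u} {A : Type v} [Ring R] [Ring A]

/-- evaluation of a polynomial as a left skew polynomial -/
noncomputable def oev (ι : R →+* A) (x : A) : R[X] →+ A where
  toFun p := p.sum fun i a => ι a * x ^ i
  map_zero' := Polynomial.sum_zero_index _
  map_add' p q := Polynomial.sum_add_index p q (fun i a => ι a * x ^ i)
    (fun i => by simp) (fun a b₁ b₂ => by rw [map_add, add_mul])

lemma oev_eq_sum (ι : R →+* A) (x : A) {p : R[X]} {n : ℕ} (h : p.natDegree < n) :
    oev ι x p = ∑ i ∈ range n, ι (p.coeff i) * x ^ i := by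
  show p.sum (fun i a => ι a * x ^ i) = _
  exact p.sum_over_range' (fun _ => by simp) n h

lemma oev_monomial (ι : R →+* A) (x : A) (n : ℕ) (a : R) :
    oev ι x (monomial n a) = ι a * x ^ n := by
  show (monomial n a).sum (fun i a => ι a * x ^ i) = _
  exact Polynomial.sum_monomial_index a _ (by simp)

lemma oev_C (ι : R →+* A) (x : A) (a : R) : oev ι x (C a) = ι a := by
  rw [← monomial_zero_left, oev_monomial, pow_zero, mul_one]

lemma oev_C_mul (ι : R →+* A) (x : A) (a : R) (p : R[X]) :
    oev ι x (C a * p) = ι a * oev ι x p := by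
  induction p using Polynomial.induction_on' with
  | add p q hp hq => rw [mul_add, map_add, map_add, hp, hq, mul_add]
  | monomial n b => rw [C_mul_monomial, oev_monomial, oev_monomial, map_mul, mul_assoc]

lemma oev_mul_X (ι : R →+* A) (x : A) (p : R[X]) :
    oev ι x (p * X) = oev ι x p * x := by
  induction p using Polynomial.induction_on' with
  | add p q hp hq => rw [add_mul, map_add, map_add, hp, hq, add_mul]
  | monomial n b => rw [monomial_mul_X, oev_monomial, oev_monomial, pow_succ, mul_assoc]

lemma oev_mul_X_pow (ι : R →+* A) (x : A) (p : R[X]) (j : ℕ) :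
    oev ι x (p * X ^ j) = oev ι x p * x ^ j := by
  induction j with
  | zero => simp
  | succ j ih => rw [pow_succ, ← mul_assoc, oev_mul_X, ih, pow_succ, mul_assoc]

lemma oev_map {R₂ : Type w} [Ring R₂] (f : R →+* R₂) (ι₂ : R₂ →+* A) (x : A) (p : R[X]) :
    oev ι₂ x (p.map f) = oev (ι₂.comp f) x p := by
  induction p using Polynomial.induction_on' with
  | add p q hp hq => rw [Polynomial.map_add, map_add, map_add, hp, hq]
  | monomial n b => rw [map_monomial, oev_monomial, oev_monomial, RingHom.comp_apply]

/-- the commutation polynomial: `x^i * r = (cp σ δ i r)(x)` -/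
noncomputable def cp (σ : R ≃+* R) (δ : R → R) : ℕ → R → R[X]
  | 0, r => C r
  | (i+1), r => cp σ δ i (σ r) * X + cp σ δ i (δ r)

lemma cp_map {R₂ : Type w} [Ring R₂] (σ : R ≃+* R) (δ : R → R) (f : R →+* R₂)
    (σ₂ : R₂ ≃+* R₂) (δ₂ : R₂ → R₂) (hσ : ∀ r, σ₂ (f r) = f (σ r))
    (hδ : ∀ r, δ₂ (f r) = f (δ r)) (i : ℕ) (r : R) :
    (cp σ δ i r).map f = cp σ₂ δ₂ i (f r) := by
  induction i generalizing r with
  | zero => simp [cp]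
  | succ i ih =>
    simp only [cp, Polynomial.map_add, Polynomial.map_mul, Polynomial.map_X, ih, hσ, hδ]

section Ore
variable {σ : R ≃+* R} {δ : R → R} {ι : R →+* A} {x : A}

lemma oev_cp (hO : IsOreExtension ι x σ δ) (i : ℕ) (r : R) :
    x ^ i * ι r = oev ι x (cp σ δ i r) := by
  induction i generalizing r with
  | zero => simp [cp, oev_C]
  | succ i ih =>
    rw [pow_succ, mul_assoc, hO.rel, mul_add, ← mul_assoc, ih, ih, cp, map_add,
      oev_mul_X]

lemma oev_ker (hO : IsOreExtension ι x σ δ) {p : R[X]} (h : oev ι x p = 0) : p = 0 := by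
  rw [oev_eq_sum ι x (Nat.lt_succ_self p.natDegree)] at h
  have := hO.indep _ _ h
  ext i
  rcases lt_or_ge i (p.natDegree + 1) with hi | hi
  · simpa using this i hi
  · rw [p.coeff_eq_zero_of_natDegree_lt (by omega), coeff_zero]

lemma oev_injective (hO : IsOreExtension ι x σ δ) : Function.Injective (oev ι x) := by
  intro p q h
  have : oev ι x (p - q) = 0 := by rw [map_sub, h, sub_self]
  exact sub_eq_zero.mp (oev_ker hO this)

lemma oev_surjective (hO : IsOreExtension ι x σ δ) : Function.Surjective (oev ι x) := by
  intro s
  obtain ⟨m, a, rfl⟩ := hO.gen s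
  refine ⟨∑ i ∈ range m, monomial i (a i), ?_⟩
  rw [map_sum]
  exact Finset.sum_congr rfl fun i _ => oev_monomial ι x i (a i)

/-- map coefficients by δ -/
noncomputable def dmap (δ : R → R) (p : R[X]) : R[X] := p.sum fun k a => monomial k (δ a)

variable (hδa : ∀ a b : R, δ (a + b) = δ a + δ b)

include hδa in
lemma dzero : δ (0 : R) = 0 := by
  have := hδa 0 0
  rw [add_zero] at this
  exact (left_eq_add.mp this)

include hδa in
lemma dmap_add (p q : R[X]) : dmap δ (p + q) = dmap δ p + dmap δ q :=
  Polynomial.sum_add_index p q _ (fun i => by rw [dzero hδa, monomial_zero_right])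
    (fun a b₁ b₂ => by rw [hδa, map_add])

include hδa in
lemma dmap_monomial (n : ℕ) (a : R) : dmap δ (monomial n a) = monomial n (δ a) :=
  Polynomial.sum_monomial_index a _ (by rw [dzero hδa, monomial_zero_right])

include hδa in
lemma coeff_dmap (u : R[X]) (k : ℕ) : (dmap δ u).coeff k = δ (u.coeff k) := by
  induction u using Polynomial.induction_on' with
  | add p q hp hq => rw [dmap_add hδa, coeff_add, coeff_add, hp, hq, hδa]
  | monomial n b =>
    rw [dmap_monomial hδa, coeff_monomial, coeff_monomial]
    split
    · rfl
    · rw [dzero hδa]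

lemma oev_T (hO : IsOreExtension ι x σ δ) (u : R[X]) :
    x * oev ι x u = oev ι x (u.map (σ : R →+* R) * X + dmap δ u) := by
  have hδa := hO.sderiv.1
  induction u using Polynomial.induction_on' with
  | add p q hp hq =>
    simp only [map_add, mul_add, Polynomial.map_add, add_mul, dmap_add hδa, hp, hq]
    abel
  | monomial n b =>
    rw [oev_monomial, ← mul_assoc, hO.rel, map_monomial, monomial_mul_X,
      dmap_monomial hδa, map_add, oev_monomial, oev_monomial, add_mul, mul_assoc,
      ← pow_succ']
    rfl

lemma key_peel (hO : IsOreExtension ι x σ δ) {b : R} {w : A} (h : ι b + x * w = 0) :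
    b = 0 ∧ w = 0 := by
  have hδa := hO.sderiv.1
  obtain ⟨u, rfl⟩ := oev_surjective hO w
  have h2 : oev ι x (C b + (u.map (σ : R →+* R) * X + dmap δ u)) = 0 := by
    rw [map_add, oev_C, ← oev_T hO]
    exact h
  have h3 := oev_ker hO h2
  have hu : u = 0 := by
    by_contra hu0
    have hc := congrArg (fun p => Polynomial.coeff p (u.natDegree + 1)) h3
    simp only [coeff_add, coeff_zero, coeff_C, Nat.succ_ne_zero, if_false,
      coeff_mul_X, coeff_map, coeff_dmap hδa,
      u.coeff_eq_zero_of_natDegree_lt (Nat.lt_succ_self _), dzero hδa, add_zero,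
      zero_add] at hc
    exact hu0 (Polynomial.leadingCoeff_eq_zero.mp (σ.injective (by simpa using hc)))
  subst hu
  rw [Polynomial.map_zero, zero_mul, zero_add] at h3
  have hd : dmap δ (0 : R[X]) = 0 := Polynomial.sum_zero_index _
  rw [hd, add_zero] at h3
  refine ⟨by simpa using (Polynomial.C_eq_zero).mp h3, by rw [map_zero]⟩

lemma rev_indep (hO : IsOreExtension ι x σ δ) :
    ∀ (m : ℕ) (p : ℕ → R), (∑ i ∈ range m, x ^ i * ι (p i)) = 0 → ∀ i < m, p i = 0 := by
  intro m
  induction m with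
  | zero => intro p _ i hi; omega
  | succ m ih =>
    intro p h i hi
    rw [Finset.sum_range_succ'] at h
    simp only [pow_zero, one_mul, pow_succ] at h
    have h' : ι (p 0) + x * ∑ i ∈ range m, x ^ i * ι (p (i + 1)) = 0 := by
      rw [← h, Finset.mul_sum, add_comm]
      congr 1
      refine Finset.sum_congr rfl fun j _ => ?_
      rw [← mul_assoc, ← pow_succ', pow_succ]
    obtain ⟨hb, hw⟩ := key_peel hO h'
    rcases i with _ | i
    · exact hb
    · exact ih _ hw i (by omega)

lemma rgen (hO : IsOreExtension ι x σ δ) (z : A) :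
    ∃ (m : ℕ) (p : ℕ → R), z = ∑ i ∈ range m, x ^ i * ι (p i) := by
  set RF : Set A := {z | ∃ (m : ℕ) (p : ℕ → R), z = ∑ i ∈ range m, x ^ i * ι (p i)} with hRF
  have hpad : ∀ (m n : ℕ) (p : ℕ → R), m ≤ n →
      ∑ i ∈ range m, x ^ i * ι (p i) =
        ∑ i ∈ range n, x ^ i * ι (if i < m then p i else 0) := by
    intro m n p hmn
    rw [← Finset.sum_subset (Finset.range_subset_range.mpr hmn)
      (fun j _ hj => by rw [if_neg (by simpa using hj), map_zero, mul_zero])]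
    exact Finset.sum_congr rfl fun j hj => by rw [if_pos (Finset.mem_range.mp hj)]
  have hadd : ∀ z ∈ RF, ∀ w ∈ RF, z + w ∈ RF := by
    rintro z ⟨m, p, rfl⟩ w ⟨n, q, rfl⟩
    refine ⟨max m n, (fun i => (if i < m then p i else 0) + (if i < n then q i else 0)), ?_⟩
    rw [hpad m (max m n) p (le_max_left _ _), hpad n (max m n) q (le_max_right _ _),
      ← Finset.sum_add_distrib]
    exact Finset.sum_congr rfl fun j _ => by rw [map_add, mul_add]
  have hneg : ∀ z ∈ RF, -z ∈ RF := by
    rintro z ⟨m, p, rfl⟩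
    refine ⟨m, fun i => -p i, ?_⟩
    rw [← Finset.sum_neg_distrib]
    exact Finset.sum_congr rfl fun j _ => by rw [map_neg, mul_neg]
  have hxmul : ∀ z ∈ RF, x * z ∈ RF := by
    rintro z ⟨m, p, rfl⟩
    refine ⟨m + 1, fun i => if i = 0 then 0 else p (i - 1), ?_⟩
    rw [Finset.sum_range_succ', Finset.mul_sum]
    simp only [Nat.succ_ne_zero, if_false, Nat.add_sub_cancel, if_true, pow_zero, one_mul,
      map_zero, add_zero, reduceIte]
    refine Finset.sum_congr rfl fun j _ => ?_
    rw [← mul_assoc, ← pow_succ']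
  have hmono : ∀ (i : ℕ) (q : R), ι q * x ^ i ∈ RF := by
    intro i
    induction i with
    | zero => exact fun q => ⟨1, fun _ => q, by simp⟩
    | succ i ih =>
      intro q
      have hrel : ι q * x ^ (i + 1) =
          x * (ι (σ.symm q) * x ^ i) + -(ι (δ (σ.symm q)) * x ^ i) := by
        have := hO.rel (σ.symm q)
        rw [σ.apply_symm_apply] at this
        simp only [pow_succ', ← mul_assoc, this, add_mul]
        abel
      rw [hrel]
      exact hadd _ (hxmul _ (ih _)) _ (hneg _ (ih _))
  obtain ⟨m, a, rfl⟩ := hO.gen z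
  have : ∀ n : ℕ, (∑ i ∈ range n, ι (a i) * x ^ i) ∈ RF := by
    intro n
    induction n with
    | zero => exact ⟨0, fun _ => 0, by simp⟩
    | succ n ih => rw [Finset.sum_range_succ]; exact hadd _ ih _ (hmono n (a n))
  exact this m

end Ore
end OreLoc

open Polynomial Finset OreLoc in
/-- If `S` is a right Ore set of regular elements of `R` with `σ(S) ⊆ S`,
then `S` is a right Ore set of regular elements of the Ore extension `R[x;σ,δ]`, and
`(R[x;σ,δ]) S⁻¹ ≅ (R S⁻¹)[x;σ,δ]`. -/
theorem localize_ore_extension {R : Type u} {Q A B : Type v}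
    [Ring R] [Ring Q] [Ring A] [Ring B]
    (σ : R ≃+* R) (δ : R → R) (hδ : IsSigmaDerivation σ δ)
    (S : Set R) (hS : IsRightOreSet S) (hreg : ∀ s ∈ S, IsRegular s)
    (hσS : ∀ s ∈ S, σ s ∈ S)
    (ιA : R →+* A) (x : A) (hA : IsOreExtension ιA x σ δ)
    (ιQ : R →+* Q) (hQ : IsRightLocalization ιQ S)
    (σ' : Q ≃+* Q) (hσ' : ∀ r : R, σ' (ιQ r) = ιQ (σ r))
    (δ' : Q → Q) (hδ'1 : IsSigmaDerivation σ' δ') (hδ'2 : ∀ r : R, δ' (ιQ r) = ιQ (δ r))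
    (ιB : Q →+* B) (y : B) (hB : IsOreExtension ιB y σ' δ') :
    (IsRightOreSet (⇑ιA '' S) ∧ ∀ s ∈ S, IsRegular (ιA s)) ∧
    ∃ ψ : A →+* B, (∀ r : R, ψ (ιA r) = ιB (ιQ r)) ∧ ψ x = y ∧
      IsRightLocalization ψ (⇑ιA '' S) := by
  classical
  obtain ⟨hS1, hSmul, hOre⟩ := hS
  have hφ : ∀ r : R, (ιB.comp ιQ) r = ιB (ιQ r) := fun r => rfl
  -- F of commutation polynomials
  have hFcp : ∀ (n : ℕ) (b : R),
      y ^ n * ιB (ιQ b) = oev (ιB.comp ιQ) y (cp σ δ n b) := by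
    intro n b
    rw [oev_cp hB n (ιQ b), ← cp_map σ δ ιQ σ' δ' hσ' hδ'2 n b, oev_map]
  -- multiplication compatibility
  have hstep1 : ∀ (p : R[X]) (b : R) (j : ℕ), ∃ c : R[X],
      oev ιA x c = oev ιA x p * (ιA b * x ^ j) ∧
      oev (ιB.comp ιQ) y c = oev (ιB.comp ιQ) y p * (ιB (ιQ b) * y ^ j) := by
    intro p b j
    induction p using Polynomial.induction_on' with
    | add p q hp hq =>
      obtain ⟨c1, hc1, hc1'⟩ := hp; obtain ⟨c2, hc2, hc2'⟩ := hq
      exact ⟨c1 + c2, by rw [map_add, hc1, hc2, map_add, add_mul],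
        by rw [map_add, hc1', hc2', map_add, add_mul]⟩
    | monomial n a =>
      refine ⟨Polynomial.C a * cp σ δ n b * Polynomial.X ^ j, ?_, ?_⟩
      · rw [oev_mul_X_pow, oev_C_mul, oev_monomial, ← oev_cp hA]
        simp only [mul_assoc]
      · rw [oev_mul_X_pow, oev_C_mul, oev_monomial, ← hFcp, hφ]
        simp only [mul_assoc]
  have hmulc : ∀ (p q : R[X]), ∃ c : R[X],
      oev ιA x c = oev ιA x p * oev ιA x q ∧
      oev (ιB.comp ιQ) y c = oev (ιB.comp ιQ) y p * oev (ιB.comp ιQ) y q := by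
    intro p q
    induction q using Polynomial.induction_on' with
    | add q1 q2 h1 h2 =>
      obtain ⟨c1, hc1, hc1'⟩ := h1; obtain ⟨c2, hc2, hc2'⟩ := h2
      exact ⟨c1 + c2, by rw [map_add, hc1, hc2, map_add, mul_add],
        by rw [map_add, hc1', hc2', map_add, mul_add]⟩
    | monomial n a =>
      obtain ⟨c, hc, hc'⟩ := hstep1 p a n
      exact ⟨c, by rw [hc, oev_monomial], by rw [hc', oev_monomial, hφ]⟩
  -- the homomorphism ψ
  have hbij : Function.Bijective (oev ιA x) := ⟨oev_injective hA, oev_surjective hA⟩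
  let e : R[X] ≃ A := Equiv.ofBijective _ hbij
  let ψ0 : A → B := fun a => oev (ιB.comp ιQ) y (e.symm a)
  have hψ0E : ∀ p : R[X], ψ0 (oev ιA x p) = oev (ιB.comp ιQ) y p := by
    intro p
    show oev (ιB.comp ιQ) y (e.symm (e p)) = _
    rw [Equiv.symm_apply_apply]
  have hEsymm : ∀ a : A, oev ιA x (e.symm a) = a := fun a => e.apply_symm_apply a
  have hψ0add : ∀ a b : A, ψ0 (a + b) = ψ0 a + ψ0 b := by
    intro a b
    rw [← hEsymm a, ← hEsymm b, ← map_add, hψ0E, hψ0E, hψ0E, map_add]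
  have hψ0mul : ∀ a b : A, ψ0 (a * b) = ψ0 a * ψ0 b := by
    intro a b
    obtain ⟨c, hc, hc'⟩ := hmulc (e.symm a) (e.symm b)
    rw [← hEsymm a, ← hEsymm b, ← hc, hψ0E, hψ0E, hψ0E, hc']
  have hψ0one : ψ0 1 = 1 := by
    have h1 : oev ιA x (Polynomial.C 1) = 1 := by rw [oev_C, map_one]
    have h2 : oev (ιB.comp ιQ) y (Polynomial.C 1) = 1 := by rw [oev_C, map_one]
    rw [← h1, hψ0E, h2]
  have hψ0zero : ψ0 0 = 0 := by
    rw [← map_zero (oev ιA x), hψ0E, map_zero]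
  let ψ : A →+* B :=
    { toFun := ψ0, map_one' := hψ0one, map_mul' := hψ0mul,
      map_zero' := hψ0zero, map_add' := hψ0add }
  have hψι : ∀ r : R, ψ (ιA r) = ιB (ιQ r) := by
    intro r
    show ψ0 (ιA r) = _
    rw [← oev_C ιA x r, hψ0E, oev_C, hφ]
  have hψx : ψ x = y := by
    show ψ0 x = y
    have h1 : oev ιA x (Polynomial.X : R[X]) = x := by
      rw [← Polynomial.monomial_one_one_eq_X, oev_monomial, map_one, one_mul, pow_one]
    have h2 : oev (ιB.comp ιQ) y (Polynomial.X : R[X]) = y := by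
      rw [← Polynomial.monomial_one_one_eq_X, oev_monomial, map_one, one_mul, pow_one]
    rw [← h1, hψ0E, h2]
  -- common denominators and annihilators
  have CD : ∀ (m : ℕ) (p : ℕ → Q), ∃ s ∈ S, ∃ r : ℕ → R,
      ∀ i < m, p i * ιQ s = ιQ (r i) := by
    intro m p
    induction m with
    | zero => exact ⟨1, hS1, fun _ => 0, fun i hi => absurd hi (by omega)⟩
    | succ m ih =>
      obtain ⟨s₀, hs₀, r₀, h₀⟩ := ih
      obtain ⟨rm, sm, hsm, hm⟩ := hQ.2.1 (p m)
      obtain ⟨r', s', hs', heq⟩ := hOre s₀ sm hsm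
      refine ⟨s₀ * s', hSmul _ hs₀ _ hs',
        fun i => if i = m then rm * r' else r₀ i * s', fun i hi => ?_⟩
      beta_reduce
      rcases Nat.lt_succ_iff_lt_or_eq.mp hi with hi' | rfl
      · rw [if_neg (by omega : ¬ i = m)]
        simp only [map_mul]
        rw [← mul_assoc, h₀ i hi']
      · rw [if_pos rfl, heq]
        simp only [map_mul]
        rw [← mul_assoc, hm]
  have CA : ∀ (m : ℕ) (b : ℕ → R), (∀ i < m, ιQ (b i) = 0) →
      ∃ s ∈ S, ∀ i < m, b i * s = 0 := by
    intro m b hb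
    induction m with
    | zero => exact ⟨1, hS1, fun i hi => absurd hi (by omega)⟩
    | succ m ih =>
      obtain ⟨s₀, hs₀, h₀⟩ := ih (fun i hi => hb i (by omega))
      obtain ⟨sm, hsm, hm⟩ := hQ.2.2 (b m) (hb m (by omega))
      obtain ⟨r', s', hs', heq⟩ := hOre s₀ sm hsm
      refine ⟨s₀ * s', hSmul _ hs₀ _ hs', fun i hi => ?_⟩
      rcases Nat.lt_succ_iff_lt_or_eq.mp hi with hi' | rfl
      · rw [← mul_assoc, h₀ i hi', zero_mul]
      · rw [heq, ← mul_assoc, hm, zero_mul]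
  -- L2 : right fractions
  have L2 : ∀ z : B, ∃ (a : A) (s : R), s ∈ S ∧ z * ψ (ιA s) = ψ a := by
    intro z
    obtain ⟨m, p, rfl⟩ := rgen hB z
    obtain ⟨s, hs, r, hr⟩ := CD m p
    refine ⟨∑ i ∈ range m, x ^ i * ιA (r i), s, hs, ?_⟩
    rw [map_sum, Finset.sum_mul, hψι]
    refine Finset.sum_congr rfl fun i hi => ?_
    rw [map_mul, map_pow, hψx, hψι, mul_assoc, ← map_mul, hr i (Finset.mem_range.mp hi)]
  -- L3 : kernel
  have L3 : ∀ a : A, ψ a = 0 → ∃ s ∈ S, a * ιA s = 0 := by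
    intro a ha
    obtain ⟨m, b, rfl⟩ := rgen hA a
    have hc : (∑ i ∈ range m, y ^ i * ιB (ιQ (b i))) = 0 := by
      rw [← ha, map_sum]
      refine Finset.sum_congr rfl fun i _ => ?_
      rw [map_mul, map_pow, hψx, hψι]
    have hz := rev_indep hB m (fun i => ιQ (b i)) hc
    obtain ⟨s, hs, hann⟩ := CA m b hz
    refine ⟨s, hs, ?_⟩
    rw [Finset.sum_mul]
    refine Finset.sum_eq_zero fun i _ => ?_
    rw [mul_assoc, ← map_mul, hann i (Finset.mem_range.mp ‹i ∈ range m›), map_zero, mul_zero]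
  -- regularity
  have hregA : ∀ s ∈ S, IsRegular (ιA s) := by
    intro s hs
    constructor
    · intro a b hab
      have hab' : ιA s * a = ιA s * b := hab
      obtain ⟨p, hp⟩ := oev_surjective hA (a - b)
      have h0 : oev ιA x (Polynomial.C s * p) = 0 := by
        rw [oev_C_mul, hp, mul_sub, hab', sub_self]
      have h1 := oev_ker hA h0
      have hp0 : p = 0 := by
        ext i
        have h2 := congrArg (fun q => Polynomial.coeff q i) h1
        simp only [Polynomial.coeff_C_mul, Polynomial.coeff_zero] at h2
        rw [Polynomial.coeff_zero]
        exact (hreg s hs).left (show s * p.coeff i = s * 0 by rw [mul_zero, h2])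
      have h3 : a - b = 0 := by rw [← hp, hp0, map_zero]
      exact sub_eq_zero.mp h3
    · intro a b hab
      have hab' : (a - b) * ιA s = 0 := by
        rw [sub_mul, sub_eq_zero]
        exact hab
      obtain ⟨m, c, hc⟩ := rgen hA (a - b)
      have h0 : (∑ i ∈ range m, x ^ i * ιA (c i * s)) = 0 := by
        rw [← hab', hc, Finset.sum_mul]
        exact Finset.sum_congr rfl fun i _ => by rw [map_mul, mul_assoc]
      have h1 := rev_indep hA m _ h0
      have h3 : a - b = 0 := by
        rw [hc]
        refine Finset.sum_eq_zero fun i hi => ?_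
        have hcz : c i = 0 := (hreg s hs).right
          (show c i * s = 0 * s by rw [zero_mul]; exact h1 i (Finset.mem_range.mp hi))
        rw [hcz, map_zero, mul_zero]
      exact sub_eq_zero.mp h3
  -- right Ore condition in A
  have hOreA : ∀ (f : A), ∀ g ∈ ⇑ιA '' S, ∃ f', ∃ g' ∈ ⇑ιA '' S, f * g' = g * f' := by
    rintro f g ⟨s, hs, rfl⟩
    have hu : IsUnit (ιB (ιQ s)) := (hQ.1 s hs).map ιB
    obtain ⟨a, t, ht, hzt⟩ := L2 (↑hu.unit⁻¹ * ψ f)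
    have hsψ : ψ (ιA s) = ↑hu.unit := by rw [hψι]; exact hu.unit_spec.symm
    have hkey : ψ (f * ιA t - ιA s * a) = 0 := by
      rw [map_sub, map_mul, map_mul, hsψ]
      rw [mul_assoc] at hzt
      have h4 := congrArg (fun z => (↑hu.unit : B) * z) hzt
      rw [← mul_assoc, Units.mul_inv, one_mul] at h4
      rw [h4, sub_self]
    obtain ⟨u, hu', hann⟩ := L3 _ hkey
    refine ⟨a * ιA u, ιA (t * u), ⟨t * u, hSmul t ht u hu', rfl⟩, ?_⟩
    have h2 : (f * ιA t - ιA s * a) * ιA u = 0 := hann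
    rw [sub_mul, sub_eq_zero] at h2
    rw [map_mul, ← mul_assoc, h2, mul_assoc]
  refine ⟨⟨⟨⟨1, hS1, map_one ιA⟩, ?_, hOreA⟩, hregA⟩, ψ, hψι, hψx, ?_, ?_, ?_⟩
  · rintro _ ⟨s, hs, rfl⟩ _ ⟨t, ht, rfl⟩
    exact ⟨s * t, hSmul s hs t ht, (map_mul ιA s t)⟩
  · rintro _ ⟨s, hs, rfl⟩
    rw [hψι]
    exact (hQ.1 s hs).map ιB
  · intro z
    obtain ⟨a, s, hs, h⟩ := L2 z
    exact ⟨a, ιA s, ⟨s, hs, rfl⟩, h⟩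
  · intro a ha
    obtain ⟨s, hs, h⟩ := L3 a ha
    exact ⟨ιA s, ⟨s, hs, rfl⟩, h⟩
end

section
/- Let R be a prime PI ring, σ a ring automorphism of R, and δ a σ-derivation of R, and suppose the Ore extension R[x;σ,δ] is a PI ring. Then Q(R)[x;σ,δ] embeds canonically into the classical right quotient ring Q(R[x;σ,δ]), and Q(R[x;σ,δ]) is isomorphic to Q(Q(R)[x;σ,δ]), where σ and δ denote their unique extensions to Q(R). -/
universe u v w

section Aux
variable {R : Type u} [Ring R]

lemma isRegular_equiv (e : R ≃+* R) {r : R} (h : IsRegular r) : IsRegular (e r) := by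
  constructor
  · intro a b hab
    have h1 : e (r * e.symm a) = e (r * e.symm b) := by
      simp only [map_mul, e.apply_symm_apply]
      simpa using hab
    have h2 := h.left (e.injective h1)
    simpa using congrArg e h2
  · intro a b hab
    have h1 : e (e.symm a * r) = e (e.symm b * r) := by
      simp only [map_mul, e.apply_symm_apply]
      simpa using hab
    have h2 := h.right (e.injective h1)
    simpa using congrArg e h2

lemma isRegular_iterate (e : R ≃+* R) {r : R} (h : IsRegular r) (n : ℕ) :
    IsRegular ((⇑e)^[n] r) := by
  induction n with
  | zero => simpa using h
  | succ n ih => rw [Function.iterate_succ_apply']; exact isRegular_equiv e ih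

end Aux

section Loc
variable {R : Type u} {Q : Type v} {T : Type w} [Ring R] [Ring Q] [Ring T]
  {ι : R →+* Q} {S : Set R}

lemma loc_inj (h : IsRightLocalization ι S) (hS : ∀ s ∈ S, IsRegular s) :
    Function.Injective ι := by
  have h0 : ∀ r, ι r = 0 → r = 0 := by
    intro r hr
    obtain ⟨s, hs, hrs⟩ := h.2.2 r hr
    exact (hS s hs).right (by simpa using hrs)
  intro a b hab
  have : ι (a - b) = 0 := by rw [map_sub, hab, sub_self]
  exact sub_eq_zero.mp (h0 _ this)

lemma loc_g_eq (h : IsRightLocalization ι S) {g : R →+* T} (hg : ∀ s ∈ S, IsUnit (g s))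
    {u v : R} (huv : ι u = ι v) : g u = g v := by
  have h1 : ι (u - v) = 0 := by rw [map_sub, huv, sub_self]
  obtain ⟨s, hs, hsz⟩ := h.2.2 _ h1
  have h2 : (g u - g v) * g s = 0 * g s := by
    rw [← map_sub, ← map_mul, hsz, map_zero, zero_mul]
  exact sub_eq_zero.mp ((hg s hs).mul_right_cancel h2)

lemma loc_comm_denom (h : IsRightLocalization ι S)
    (hmul : ∀ s ∈ S, ∀ t ∈ S, s * t ∈ S) (z1 z2 : Q) :
    ∃ r1 r2 s, s ∈ S ∧ z1 * ι s = ι r1 ∧ z2 * ι s = ι r2 := by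
  obtain ⟨r1, s1, hs1, e1⟩ := h.2.1 z1
  obtain ⟨r2, s2, hs2, e2⟩ := h.2.1 z2
  set u1 := (h.1 s1 hs1).unit with hu1
  have hu1c : (u1 : Q) = ι s1 := (h.1 s1 hs1).unit_spec
  obtain ⟨c, t, ht, et⟩ := h.2.1 ((↑u1⁻¹ : Q) * ι s2)
  have hst : ι s2 * ι t = ι s1 * ι c := by
    rw [← et, ← mul_assoc, ← mul_assoc, ← hu1c, Units.mul_inv, one_mul]
  refine ⟨r1 * c, r2 * t, s2 * t, hmul _ hs2 _ ht, ?_, ?_⟩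
  · rw [map_mul, ← mul_assoc, mul_assoc z1, hst, ← mul_assoc, e1, ← map_mul]
  · rw [map_mul, ← mul_assoc, e2, ← map_mul]

lemma loc_ext (h : IsRightLocalization ι S) (h1 : (1 : R) ∈ S)
    (hmul : ∀ s ∈ S, ∀ t ∈ S, s * t ∈ S)
    (g : R →+* T) (hg : ∀ s ∈ S, IsUnit (g s)) :
    ∃ G : Q →+* T, ∀ (z : Q) (r s : R), s ∈ S → z * ι s = ι r → G z * g s = g r := by
  classical
  choose num den hprop using h.2.1
  have hden : ∀ z, den z ∈ S := fun z => (hprop z).1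
  have hspec : ∀ z, z * ι (den z) = ι (num z) := fun z => (hprop z).2
  set Gf : Q → T := fun z => g (num z) * ↑((hg (den z) (hden z)).unit)⁻¹ with hGf
  have key : ∀ (z : Q) (r s : R), s ∈ S → z * ι s = ι r → Gf z * g s = g r := by
    intro z r s hs hzs
    have hs' : den z ∈ S := hden z
    have hz' : z * ι (den z) = ι (num z) := hspec z
    set u' := (h.1 (den z) hs').unit with hu'
    have hu'c : (u' : Q) = ι (den z) := (h.1 (den z) hs').unit_spec
    set w : Q := (↑u'⁻¹ : Q) * ι s with hw
    have hwt : w * ι (den w) = ι (num w) := hspec w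
    have ht : den w ∈ S := hden w
    have hsw : ι (den z) * w = ι s := by
      rw [hw, ← mul_assoc, ← hu'c, Units.mul_inv, one_mul]
    have e1 : ι (s * den w) = ι (den z * num w) := by
      rw [map_mul, map_mul, ← hsw, mul_assoc, hwt]
    have e2 : ι (r * den w) = ι (num z * num w) := by
      have hr : ι r = ι (num z) * w := by
        rw [← hzs, ← hsw, ← mul_assoc, hz']
      rw [map_mul, map_mul, hr, mul_assoc, hwt]
    have gA : g s * g (den w) = g (den z) * g (num w) := by
      have := loc_g_eq h hg e1; rw [map_mul, map_mul] at this; exact this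
    have gB : g r * g (den w) = g (num z) * g (num w) := by
      have := loc_g_eq h hg e2; rw [map_mul, map_mul] at this; exact this
    apply (hg (den w) ht).mul_right_cancel
    rw [hGf]
    set v' := (hg (den z) (hden z)).unit with hv'
    have hv'c : (v' : T) = g (den z) := (hg (den z) (hden z)).unit_spec
    calc g (num z) * ↑v'⁻¹ * g s * g (den w)
        = g (num z) * ↑v'⁻¹ * (g s * g (den w)) := by rw [mul_assoc]
      _ = g (num z) * ↑v'⁻¹ * (g (den z) * g (num w)) := by rw [gA]
      _ = g (num z) * (↑v'⁻¹ * g (den z)) * g (num w) := by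
          rw [mul_assoc, mul_assoc, mul_assoc]
      _ = g (num z) * g (num w) := by rw [← hv'c, Units.inv_mul, mul_one]
      _ = g r * g (den w) := gB.symm
  have hGone : Gf 1 = 1 := by
    have := key 1 1 1 h1 (by simp)
    rw [map_one, mul_one] at this
    exact this
  have hGzero : Gf 0 = 0 := by
    have := key 0 0 1 h1 (by simp)
    rw [map_one, mul_one, map_zero] at this
    exact this
  have hGadd : ∀ z1 z2, Gf (z1 + z2) = Gf z1 + Gf z2 := by
    intro z1 z2
    obtain ⟨r1, r2, s, hs, e1, e2⟩ := loc_comm_denom h hmul z1 z2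
    have e3 : (z1 + z2) * ι s = ι (r1 + r2) := by rw [add_mul, e1, e2, map_add]
    apply (hg s hs).mul_right_cancel
    rw [key _ _ _ hs e3, add_mul, key _ _ _ hs e1, key _ _ _ hs e2, map_add]
  have hGmul : ∀ z1 z2, Gf (z1 * z2) = Gf z1 * Gf z2 := by
    intro z1 z2
    obtain ⟨r1, s1, hs1, e1⟩ := h.2.1 z1
    obtain ⟨r2, s2, hs2, e2⟩ := h.2.1 z2
    set u1 := (h.1 s1 hs1).unit with hu1
    have hu1c : (u1 : Q) = ι s1 := (h.1 s1 hs1).unit_spec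
    obtain ⟨c, t, ht, et⟩ := h.2.1 ((↑u1⁻¹ : Q) * ι r2)
    have hrt : ι r2 * ι t = ι s1 * ι c := by
      rw [← et, ← mul_assoc, ← mul_assoc, ← hu1c, Units.mul_inv, one_mul]
    have emul : (z1 * z2) * ι (s2 * t) = ι (r1 * c) := by
      rw [map_mul, ← mul_assoc, mul_assoc z1, e2, mul_assoc, hrt, ← mul_assoc, e1, ← map_mul]
    have hs2t : s2 * t ∈ S := hmul _ hs2 _ ht
    apply (hg (s2 * t) hs2t).mul_right_cancel
    rw [key _ _ _ hs2t emul, map_mul, map_mul]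
    have k1 := key z1 r1 s1 hs1 e1
    have k2 := key z2 r2 s2 hs2 e2
    have grt : g r2 * g t = g s1 * g c := by
      have := loc_g_eq h hg (show ι (r2 * t) = ι (s1 * c) by rw [map_mul, map_mul, hrt])
      rw [map_mul, map_mul] at this; exact this
    symm
    calc Gf z1 * Gf z2 * (g s2 * g t)
        = Gf z1 * (Gf z2 * g s2) * g t := by rw [← mul_assoc, mul_assoc (Gf z1)]
      _ = Gf z1 * g r2 * g t := by rw [k2]
      _ = Gf z1 * (g r2 * g t) := mul_assoc _ _ _
      _ = Gf z1 * (g s1 * g c) := by rw [grt]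
      _ = Gf z1 * g s1 * g c := (mul_assoc _ _ _).symm
      _ = g r1 * g c := by rw [k1]
  exact ⟨{ toFun := Gf, map_one' := hGone, map_mul' := hGmul,
           map_zero' := hGzero, map_add' := hGadd }, key⟩

end Loc



section OreTools

variable {R : Type u} {A : Type v} [Ring R] [Ring A]

/-- generic padded-sum lemma -/
lemma gsum_pad {T : Type w} [Ring T] (G : R → T) (hG0 : G 0 = 0) (X : T) {m N : ℕ}
    (hmN : m ≤ N) (a : ℕ → R) :
    ∑ i ∈ Finset.range m, G (a i) * X ^ i
      = ∑ i ∈ Finset.range N, G (if i < m then a i else 0) * X ^ i := by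
  have h1 : ∑ i ∈ Finset.range m, G (a i) * X ^ i
      = ∑ i ∈ Finset.range m, G (if i < m then a i else 0) * X ^ i :=
    Finset.sum_congr rfl fun i hi => by rw [if_pos (Finset.mem_range.mp hi)]
  rw [h1]
  exact Finset.sum_subset (Finset.range_subset_range.mpr hmN)
    (fun i _ hi => by
      rw [if_neg (fun hc => hi (Finset.mem_range.mpr hc)), hG0, zero_mul])

lemma gsum_shift {T : Type w} [Ring T] (G : R → T) (hG0 : G 0 = 0) (X : T) (n : ℕ)
    (a : ℕ → R) :
    ∑ k ∈ Finset.range n, G (a k) * X ^ (k + 1)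
      = ∑ i ∈ Finset.range (n + 1), G (if i = 0 then 0 else a (i - 1)) * X ^ i := by
  rw [Finset.sum_range_succ' (fun i => G (if i = 0 then 0 else a (i - 1)) * X ^ i) n]
  simp [hG0]

variable (ι : R →+* A) (x : A)

def ORep (n : ℕ) (s : A) : Prop :=
  ∃ a : ℕ → R, s = ∑ i ∈ Finset.range n, ι (a i) * x ^ i

variable {ι x}

lemma rep_zero {n : ℕ} : ORep ι x n 0 :=
  ⟨0, by simp⟩

lemma rep_mono {m n : ℕ} (hmn : m ≤ n) {s : A} (hs : ORep ι x m s) : ORep ι x n s := by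
  obtain ⟨a, rfl⟩ := hs
  exact ⟨_, gsum_pad (⇑ι) (map_zero ι) x hmn a⟩

lemma rep_add {n : ℕ} {s t : A} (hs : ORep ι x n s) (ht : ORep ι x n t) :
    ORep ι x n (s + t) := by
  obtain ⟨a, rfl⟩ := hs
  obtain ⟨b, rfl⟩ := ht
  exact ⟨fun i => a i + b i, by simp [map_add, add_mul, Finset.sum_add_distrib]⟩

lemma rep_lmul {n : ℕ} {s : A} (hs : ORep ι x n s) (r : R) : ORep ι x n (ι r * s) := by
  obtain ⟨a, rfl⟩ := hs
  exact ⟨fun i => r * a i, by simp [Finset.mul_sum, map_mul, mul_assoc]⟩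

lemma rep_single {n j : ℕ} (hj : j < n) (q : R) : ORep ι x n (ι q * x ^ j) := by
  refine ⟨fun i => if i = j then q else 0, ?_⟩
  rw [Finset.sum_eq_single_of_mem j (Finset.mem_range.mpr hj)
    (fun i _ hij => by simp only [if_neg hij, map_zero, zero_mul])]
  simp

variable {σ : R ≃+* R} {δ : R → R}

lemma ore_uniq (h : IsOreExtension ι x σ δ) {m n : ℕ} {a b : ℕ → R}
    (he : ∑ i ∈ Finset.range m, ι (a i) * x ^ i = ∑ i ∈ Finset.range n, ι (b i) * x ^ i) :
    ∀ i, (if i < m then a i else 0) = (if i < n then b i else 0) := by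
  intro i
  have ha := gsum_pad (⇑ι) (map_zero ι) x (le_max_left m n) a
  have hb := gsum_pad (⇑ι) (map_zero ι) x (le_max_right m n) b
  have hz : ∑ i ∈ Finset.range (max m n),
      ι ((if i < m then a i else 0) - (if i < n then b i else 0)) * x ^ i = 0 := by
    have : ∑ i ∈ Finset.range (max m n),
        (ι (if i < m then a i else 0) * x ^ i - ι (if i < n then b i else 0) * x ^ i) = 0 := by
      rw [Finset.sum_sub_distrib, ← ha, ← hb, he, sub_self]
    simpa [map_sub, sub_mul] using this
  have hind := h.indep (max m n) _ hz
  by_cases hi : i < max m n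
  · exact sub_eq_zero.mp (hind i hi)
  · have h1 : ¬ i < m := fun hc => hi (lt_of_lt_of_le hc (le_max_left m n))
    have h2 : ¬ i < n := fun hc => hi (lt_of_lt_of_le hc (le_max_right m n))
    rw [if_neg h1, if_neg h2]

lemma rep_xmul (h : IsOreExtension ι x σ δ) {n : ℕ} {s : A} (hs : ORep ι x n s) :
    ORep ι x (n + 1) (x * s) := by
  obtain ⟨a, rfl⟩ := hs
  have he : x * ∑ i ∈ Finset.range n, ι (a i) * x ^ i
      = (∑ i ∈ Finset.range n, ι (σ (a i)) * x ^ (i + 1))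
        + ∑ i ∈ Finset.range n, ι (δ (a i)) * x ^ i := by
    rw [Finset.mul_sum, ← Finset.sum_add_distrib]
    refine Finset.sum_congr rfl fun i _ => ?_
    rw [← mul_assoc, h.rel, add_mul, mul_assoc, ← pow_succ']
  rw [he]
  refine rep_add ?_ (rep_mono (Nat.le_succ n) ⟨_, rfl⟩)
  rw [gsum_shift (⇑ι) (map_zero ι) x n]
  exact ⟨_, rfl⟩

lemma xpow_mul (h : IsOreExtension ι x σ δ) :
    ∀ (j : ℕ) (r : R), ∃ t, x ^ j * ι r = ι ((⇑σ)^[j] r) * x ^ j + t ∧ ORep ι x j t := by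
  intro j
  induction j with
  | zero => exact fun r => ⟨0, by simp, rep_zero⟩
  | succ j ih =>
    intro r
    obtain ⟨t, ht, hrep⟩ := ih r
    have h1 : x ^ (j + 1) * ι r = x * (x ^ j * ι r) := by
      rw [← mul_assoc, ← pow_succ']
    refine ⟨ι (δ ((⇑σ)^[j] r)) * x ^ j + x * t, ?_,
      rep_add (rep_single (Nat.lt_succ_self j) _) (rep_xmul h hrep)⟩
    rw [h1, ht, mul_add, ← mul_assoc, h.rel, add_mul, mul_assoc, ← pow_succ',
      Function.iterate_succ_apply', add_assoc]

lemma lead_mul (h : IsOreExtension ι x σ δ) :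
    ∀ (m : ℕ) (a : ℕ → R) (r : R), ∃ t,
      (∑ i ∈ Finset.range (m + 1), ι (a i) * x ^ i) * ι r
        = ι (a m * (⇑σ)^[m] r) * x ^ m + t ∧ ORep ι x m t := by
  intro m
  induction m with
  | zero =>
    intro a r
    refine ⟨0, ?_, rep_zero⟩
    simp [map_mul]
  | succ m ih =>
    intro a r
    obtain ⟨t, ht, hrep⟩ := ih a r
    obtain ⟨t', ht', hrep'⟩ := xpow_mul h (m + 1) r
    refine ⟨ι (a m * (⇑σ)^[m] r) * x ^ m + t + ι (a (m + 1)) * t', ?_, ?_⟩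
    · rw [Finset.sum_range_succ, add_mul, ht, mul_assoc, ht', mul_add, ← mul_assoc,
        ← map_mul]
      ring_nf
      abel
    · exact rep_add (rep_add (rep_single (Nat.lt_succ_self m) _)
        (rep_mono (Nat.le_succ m) hrep)) (rep_lmul hrep' _)

lemma rep_rmul (h : IsOreExtension ι x σ δ) {n : ℕ} {s : A} (hs : ORep ι x n s) (q : R) :
    ORep ι x n (s * ι q) := by
  obtain ⟨a, rfl⟩ := hs
  cases n with
  | zero => simpa using (rep_zero : ORep ι x 0 0)
  | succ m =>
    obtain ⟨t, ht, hrep⟩ := lead_mul h m a q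
    rw [ht]
    exact rep_add (rep_single (Nat.lt_succ_self m) _) (rep_mono (Nat.le_succ m) hrep)

lemma top_zero (h : IsOreExtension ι x σ δ) {n : ℕ} {b : R} {t : A}
    (hrep : ORep ι x n t) (he : ι b * x ^ n + t = 0) : b = 0 := by
  obtain ⟨c, rfl⟩ := hrep
  have hsum : ∑ i ∈ Finset.range (n + 1),
      ι (if i < n then c i else b) * x ^ i = 0 := by
    rw [Finset.sum_range_succ, if_neg (lt_irrefl n)]
    rw [Finset.sum_congr rfl (fun i hi => by
      rw [if_pos (Finset.mem_range.mp hi)] :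
        ∀ i ∈ Finset.range n, ι (if i < n then c i else b) * x ^ i = ι (c i) * x ^ i)]
    rw [add_comm]
    exact he
  have := h.indep (n + 1) _ hsum n (Nat.lt_succ_self n)
  rwa [if_neg (lt_irrefl n)] at this

lemma lead_exists (h : IsOreExtension ι x σ δ) {s : A} (hs : s ≠ 0) :
    ∃ (n : ℕ) (a : ℕ → R), s = ∑ i ∈ Finset.range (n + 1), ι (a i) * x ^ i ∧ a n ≠ 0 := by
  obtain ⟨m, a, rfl⟩ := h.gen s
  induction m with
  | zero => simp at hs
  | succ m ih =>
    by_cases hm : a m = 0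
    · have he : ∑ i ∈ Finset.range (m + 1), ι (a i) * x ^ i
          = ∑ i ∈ Finset.range m, ι (a i) * x ^ i := by
        rw [Finset.sum_range_succ, hm]; simp
      rw [he] at hs ⊢
      exact ih hs
    · exact ⟨m, a, rfl, hm⟩

lemma reg_lift (h : IsOreExtension ι x σ δ) {r : R} (hr : IsRegular r) :
    IsRegular (ι r) := by
  have left : ∀ s : A, ι r * s = 0 → s = 0 := by
    intro s hs
    obtain ⟨m, c, rfl⟩ := h.gen s
    rw [Finset.mul_sum] at hs
    have h1 : ∑ i ∈ Finset.range m, ι (r * c i) * x ^ i = 0 := by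
      simpa [map_mul, mul_assoc] using hs
    have hz := h.indep m _ h1
    refine Finset.sum_eq_zero fun i hi => ?_
    have hc : c i = 0 := hr.left (by simpa using hz i (Finset.mem_range.mp hi))
    rw [hc, map_zero, zero_mul]
  have right : ∀ s : A, s * ι r = 0 → s = 0 := by
    intro s hs
    by_contra hne
    obtain ⟨n, a, he, hln⟩ := lead_exists h hne
    rw [he] at hs
    obtain ⟨t, ht, hrep⟩ := lead_mul h n a r
    rw [ht] at hs
    have h0 := top_zero h hrep hs
    have hreg := isRegular_iterate σ hr n
    exact hln (hreg.right (by simpa using h0))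
  constructor
  · intro a b hab
    have := left (a - b) (by rw [mul_sub, sub_eq_zero]; exact hab)
    exact sub_eq_zero.mp this
  · intro a b hab
    have := right (a - b) (by rw [sub_mul, sub_eq_zero]; exact hab)
    exact sub_eq_zero.mp this

end OreTools

section PolyMap

variable {R : Type u} {A : Type v} [Ring R] [Ring A]
  {ι : R →+* A} {x : A} {σ : R ≃+* R} {δ : R → R}

lemma polyMap (h : IsOreExtension ι x σ δ) {T : Type w} [Ring T] (g : R →+* T) (X : T)
    (hrel : ∀ r : R, X * g r = g (σ r) * X + g (δ r)) :
    ∃ Φ : A →+* T, (∀ r : R, Φ (ι r) = g r) ∧ Φ x = X := by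
  classical
  choose deg co hco using h.gen
  set F : A → T := fun s => ∑ i ∈ Finset.range (deg s), g (co s i) * X ^ i with hF
  have Frep : ∀ (m : ℕ) (a : ℕ → R),
      F (∑ i ∈ Finset.range m, ι (a i) * x ^ i) = ∑ i ∈ Finset.range m, g (a i) * X ^ i := by
    intro m a
    set s := ∑ i ∈ Finset.range m, ι (a i) * x ^ i with hsdef
    have he : ∑ i ∈ Finset.range (deg s), ι (co s i) * x ^ i
        = ∑ i ∈ Finset.range m, ι (a i) * x ^ i := (hco s).symm.trans hsdef
    have huniq := ore_uniq h he
    have h1 : F s = ∑ i ∈ Finset.range (max (deg s) m),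
        g (if i < deg s then co s i else 0) * X ^ i := by
      rw [hF]
      exact gsum_pad (⇑g) (map_zero g) X (le_max_left _ _) _
    rw [h1, gsum_pad (⇑g) (map_zero g) X (le_max_right (deg s) m) a]
    exact Finset.sum_congr rfl fun i _ => by rw [huniq i]
  have F0 : F 0 = 0 := by
    have := Frep 0 0
    simpa using this
  have F1 : F 1 = 1 := by
    have := Frep 1 1
    simpa using this
  have Fι : ∀ r : R, F (ι r) = g r := by
    intro r
    have := Frep 1 (fun _ => r)
    simpa using this
  have Fx : F x = X := by
    have := Frep 2 (fun i => if i = 1 then 1 else 0)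
    simpa [Finset.sum_range_succ] using this
  have Fadd : ∀ s t, F (s + t) = F s + F t := by
    intro s t
    set N := max (deg s) (deg t) with hN
    have hs : s = ∑ i ∈ Finset.range N, ι (if i < deg s then co s i else 0) * x ^ i :=
      (hco s).trans (gsum_pad (⇑ι) (map_zero ι) x (le_max_left _ _) _)
    have ht : t = ∑ i ∈ Finset.range N, ι (if i < deg t then co t i else 0) * x ^ i :=
      (hco t).trans (gsum_pad (⇑ι) (map_zero ι) x (le_max_right _ _) _)
    have hst : s + t = ∑ i ∈ Finset.range N,
        ι ((if i < deg s then co s i else 0) + (if i < deg t then co t i else 0)) * x ^ i := by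
      conv_lhs => rw [hs, ht]
      rw [← Finset.sum_add_distrib]
      exact Finset.sum_congr rfl fun i _ => by rw [map_add, add_mul]
    calc F (s + t) = ∑ i ∈ Finset.range N,
        g ((if i < deg s then co s i else 0) + (if i < deg t then co t i else 0)) * X ^ i := by
          rw [hst, Frep]
      _ = (∑ i ∈ Finset.range N, g (if i < deg s then co s i else 0) * X ^ i)
          + ∑ i ∈ Finset.range N, g (if i < deg t then co t i else 0) * X ^ i := by
          rw [← Finset.sum_add_distrib]
          exact Finset.sum_congr rfl fun i _ => by rw [map_add, add_mul]
      _ = F s + F t := by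
          rw [← gsum_pad (⇑g) (map_zero g) X (le_max_left (deg s) (deg t)) _,
            ← gsum_pad (⇑g) (map_zero g) X (le_max_right (deg s) (deg t)) _]
  have Flmul : ∀ (r : R) (s : A), F (ι r * s) = g r * F s := by
    intro r s
    have hs2 : ι r * s = ∑ i ∈ Finset.range (deg s), ι (r * co s i) * x ^ i := by
      conv_lhs => rw [hco s]
      rw [Finset.mul_sum]
      exact Finset.sum_congr rfl fun i _ => by rw [← mul_assoc, ← map_mul]
    rw [hs2, Frep]
    rw [show F s = ∑ i ∈ Finset.range (deg s), g (co s i) * X ^ i from rfl, Finset.mul_sum]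
    exact Finset.sum_congr rfl fun i _ => by rw [map_mul, mul_assoc]
  have Fxmul : ∀ s : A, F (x * s) = X * F s := by
    intro s
    set m := deg s with hm
    set b := co s with hb
    have hxs : x * s = ∑ i ∈ Finset.range (m + 1),
        ι ((if i = 0 then 0 else σ (b (i - 1))) + (if i < m then δ (b i) else 0)) * x ^ i := by
      conv_lhs => rw [hco s]
      rw [Finset.mul_sum]
      have e1 : ∀ i ∈ Finset.range m,
          x * (ι (b i) * x ^ i) = ι (σ (b i)) * x ^ (i + 1) + ι (δ (b i)) * x ^ i := by
        intro i _
        rw [← mul_assoc, h.rel, add_mul, mul_assoc, ← pow_succ']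
      rw [Finset.sum_congr rfl e1, Finset.sum_add_distrib,
        gsum_shift (⇑ι) (map_zero ι) x m (fun i => σ (b i)),
        gsum_pad (⇑ι) (map_zero ι) x (Nat.le_succ m) (fun i => δ (b i)),
        ← Finset.sum_add_distrib]
      exact Finset.sum_congr rfl fun i _ => by rw [map_add, add_mul]
    rw [hxs, Frep]
    have e2 : ∀ i ∈ Finset.range (m + 1),
        g ((if i = 0 then 0 else σ (b (i - 1))) + (if i < m then δ (b i) else 0)) * X ^ i
          = g (if i = 0 then 0 else σ (b (i - 1))) * X ^ i
            + g (if i < m then δ (b i) else 0) * X ^ i := by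
      intro i _
      rw [map_add, add_mul]
    rw [Finset.sum_congr rfl e2, Finset.sum_add_distrib,
      ← gsum_shift (⇑g) (map_zero g) X m (fun i => σ (b i)),
      ← gsum_pad (⇑g) (map_zero g) X (Nat.le_succ m) (fun i => δ (b i)),
      ← Finset.sum_add_distrib]
    rw [show F s = ∑ i ∈ Finset.range m, g (b i) * X ^ i from rfl, Finset.mul_sum]
    refine Finset.sum_congr rfl fun i _ => ?_
    rw [pow_succ', ← mul_assoc, ← mul_assoc, ← add_mul, ← hrel]
  have Fsum : ∀ (m : ℕ) (f : ℕ → A),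
      F (∑ i ∈ Finset.range m, f i) = ∑ i ∈ Finset.range m, F (f i) := by
    intro m f
    induction m with
    | zero => simpa using F0
    | succ m ih => rw [Finset.sum_range_succ, Fadd, ih, Finset.sum_range_succ]
  have Fxpow : ∀ (k : ℕ) (s : A), F (x ^ k * s) = X ^ k * F s := by
    intro k
    induction k with
    | zero => intro s; simp
    | succ k ih =>
      intro s
      rw [pow_succ', mul_assoc, Fxmul, ih, pow_succ', mul_assoc]
  have Fmul : ∀ s t, F (s * t) = F s * F t := by
    intro s t
    have hs : s * t = ∑ i ∈ Finset.range (deg s), ι (co s i) * (x ^ i * t) := by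
      conv_lhs => rw [hco s]
      rw [Finset.sum_mul]
      exact Finset.sum_congr rfl fun i _ => by rw [mul_assoc]
    rw [hs, Fsum]
    have : ∀ i ∈ Finset.range (deg s), F (ι (co s i) * (x ^ i * t))
        = g (co s i) * (X ^ i * F t) := by
      intro i _
      rw [Flmul, Fxpow]
    rw [Finset.sum_congr rfl this,
      show F s = ∑ i ∈ Finset.range (deg s), g (co s i) * X ^ i from rfl, Finset.sum_mul]
    exact Finset.sum_congr rfl fun i _ => by rw [mul_assoc]
  exact ⟨{ toFun := F, map_one' := F1, map_mul' := Fmul, map_zero' := F0,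
           map_add' := Fadd }, Fι, Fx⟩

lemma ore_hom_ext (h : IsOreExtension ι x σ δ) {T : Type w} [Ring T] (Φ₁ Φ₂ : A →+* T)
    (hι : ∀ r : R, Φ₁ (ι r) = Φ₂ (ι r)) (hx : Φ₁ x = Φ₂ x) : ∀ s, Φ₁ s = Φ₂ s := by
  intro s
  obtain ⟨m, a, rfl⟩ := h.gen s
  rw [map_sum, map_sum]
  exact Finset.sum_congr rfl fun i _ => by rw [map_mul, map_mul, map_pow, map_pow, hι, hx]

end PolyMap

/-- If `R` is prime PI and `R[x;σ,δ]` is PI, then `Q(R)[x;σ,δ]` embeds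
canonically into `Q(R[x;σ,δ])`, and `Q(R[x;σ,δ]) ≅ Q(Q(R)[x;σ,δ])`. -/
theorem quotient_ring_of_ore_extension {R : Type u} {Q A B QA QB : Type v}
    [Ring R] [Ring Q] [Ring A] [Ring B] [Ring QA] [Ring QB]
    (hprime : IsPrimeRing R) (hPI : IsPIRing R)
    (σ : R ≃+* R) (δ : R → R) (hδ : IsSigmaDerivation σ δ)
    (ιQ : R →+* Q) (hQ : IsClassicalRightQuotientRing ιQ)
    (σ' : Q ≃+* Q) (hσ' : ∀ r : R, σ' (ιQ r) = ιQ (σ r))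
    (δ' : Q → Q) (hδ'1 : IsSigmaDerivation σ' δ') (hδ'2 : ∀ r : R, δ' (ιQ r) = ιQ (δ r))
    (ιA : R →+* A) (x : A) (hA : IsOreExtension ιA x σ δ)
    (ιB : Q →+* B) (y : B) (hB : IsOreExtension ιB y σ' δ')
    (hPIA : IsPIRing A)
    (ιQA : A →+* QA) (hQA : IsClassicalRightQuotientRing ιQA)
    (ιQB : B →+* QB) (hQB : IsClassicalRightQuotientRing ιQB) :
    (∃ ψ : B →+* QA, Function.Injective ψ ∧
      (∀ r : R, ψ (ιB (ιQ r)) = ιQA (ιA r)) ∧ ψ y = ιQA x) ∧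
    ∃ φ : QA ≃+* QB, (∀ r : R, φ (ιQA (ιA r)) = ιQB (ιB (ιQ r))) ∧
      φ (ιQA x) = ιQB y := by
  classical
  -- basic facts about the regular sets
  have hQA_inj : Function.Injective ιQA := loc_inj hQA (fun _ hs => hs)
  have hQ_inj : Function.Injective ιQ := loc_inj hQ (fun _ hs => hs)
  have regA : ∀ {r : R}, IsRegular r → IsRegular (ιA r) := fun hr => reg_lift hA hr
  -- the map f : Q →+* QA
  have hgf : ∀ s ∈ {r : R | IsRegular r}, IsUnit ((ιQA.comp ιA) s) :=
    fun s hs => hQA.1 (ιA s) (regA hs)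
  obtain ⟨f, fspec⟩ := loc_ext hQ (isRegular_one) (fun s hs t ht => hs.mul ht) (ιQA.comp ιA) hgf
  have f_ι : ∀ r : R, f (ιQ r) = ιQA (ιA r) := by
    intro r
    have := fspec (ιQ r) r 1 (isRegular_one) (by simp)
    simpa using this
  -- the key commutation relation in QA
  have star : ∀ q : Q, (ιQA x) * f q = f (σ' q) * (ιQA x) + f (δ' q) := by
    intro q
    obtain ⟨r, s, hs, hqs⟩ := hQ.2.1 q
    have hs : IsRegular s := hs
    have claim1 : σ' q * ιQ (σ s) = ιQ (σ r) := by
      have h1 := congrArg σ' hqs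
      rw [map_mul σ', hσ' s, hσ' r] at h1
      exact h1
    have claim2 : δ' q * ιQ s = ιQ (δ r) - σ' q * ιQ (δ s) := by
      have h1 := hδ'1.2 q (ιQ s)
      rw [hqs, hδ'2 r, hδ'2 s] at h1
      exact eq_sub_of_add_eq' h1.symm
    have fA : f q * ιQA (ιA s) = ιQA (ιA r) := by
      rw [← f_ι s, ← map_mul, hqs, f_ι]
    have fB : f (σ' q) * ιQA (ιA (σ s)) = ιQA (ιA (σ r)) := by
      rw [← f_ι (σ s), ← map_mul, claim1, f_ι]
    have fC : f (δ' q) * ιQA (ιA s) = ιQA (ιA (δ r)) - f (σ' q) * ιQA (ιA (δ s)) := by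
      have h1 := congrArg f claim2
      rw [map_mul, map_sub, map_mul, f_ι, f_ι, f_ι] at h1
      exact h1
    have hXr : ∀ r0 : R, ιQA x * ιQA (ιA r0)
        = ιQA (ιA (σ r0)) * ιQA x + ιQA (ιA (δ r0)) := by
      intro r0
      rw [← map_mul, hA.rel, map_add, map_mul]
    have hu : IsUnit (ιQA (ιA s)) := hQA.1 _ (regA hs)
    apply hu.mul_right_cancel
    calc ιQA x * f q * ιQA (ιA s)
        = ιQA x * (f q * ιQA (ιA s)) := mul_assoc _ _ _
      _ = ιQA x * ιQA (ιA r) := by rw [fA]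
      _ = ιQA (ιA (σ r)) * ιQA x + ιQA (ιA (δ r)) := hXr r
      _ = f (σ' q) * ιQA (ιA (σ s)) * ιQA x + ιQA (ιA (δ r)) := by rw [fB]
      _ = (f (σ' q) * ιQA x + f (δ' q)) * ιQA (ιA s) := by
          rw [add_mul, mul_assoc (f (σ' q)) (ιQA x), hXr s, fC, mul_add, ← mul_assoc]
          abel
  -- ψ : B →+* QA
  obtain ⟨ψ, ψι, ψy⟩ := polyMap hB f (ιQA x) star
  -- ρ : A →+* B
  have relρ : ∀ r : R, y * (ιB.comp ιQ) r = (ιB.comp ιQ) (σ r) * y + (ιB.comp ιQ) (δ r) := by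
    intro r
    simp only [RingHom.coe_comp, Function.comp_apply]
    rw [hB.rel (ιQ r), hσ', hδ'2]
  obtain ⟨ρ, ρι', ρx⟩ := polyMap hA (ιB.comp ιQ) y relρ
  have ρι : ∀ r : R, ρ (ιA r) = ιB (ιQ r) := fun r => ρι' r
  -- ψ ∘ ρ = ιQA
  have ψρ : ∀ a : A, ψ (ρ a) = ιQA a := by
    have := ore_hom_ext hA (ψ.comp ρ) ιQA
      (fun r => by simp only [RingHom.coe_comp, Function.comp_apply, ρι, ψι, f_ι])
      (by simp only [RingHom.coe_comp, Function.comp_apply, ρx, ψy])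
    exact fun a => this a
  -- iterates of σ' restrict to iterates of σ
  have σit : ∀ (n : ℕ) (u : R), (⇑σ')^[n] (ιQ u) = ιQ ((⇑σ)^[n] u) := by
    intro n
    induction n with
    | zero => intro u; simp
    | succ n ih =>
      intro u
      rw [Function.iterate_succ_apply', Function.iterate_succ_apply', ih, hσ']
  -- the right Ore property of regular "constants" in B
  have ORE : ∀ b : B, ∃ (s : R) (a : A), IsRegular s ∧ b * ιB (ιQ s) = ρ a := by
    suffices key : ∀ (n : ℕ) (c : ℕ → Q), ∃ (s : R) (a : A), IsRegular s ∧
        (∑ j ∈ Finset.range n, ιB (c j) * y ^ j) * ιB (ιQ s) = ρ a by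
      intro b
      obtain ⟨m, c, rfl⟩ := hB.gen b
      exact key m c
    intro n
    induction n with
    | zero =>
      intro c
      exact ⟨1, 0, isRegular_one, by simp⟩
    | succ n ih =>
      intro c
      obtain ⟨r, t, ht, hbt⟩ := hQ.2.1 (c n)
      have ht : IsRegular t := ht
      set s₁ := (⇑σ.symm)^[n] t with hs₁
      have hσs₁ : (⇑σ)^[n] s₁ = t :=
        (Function.LeftInverse.iterate (fun u => σ.apply_symm_apply u) n) t
      have hs₁reg : IsRegular s₁ := isRegular_iterate σ.symm ht n
      -- expand (∑_{j<n+1} ιB (c j) y^j) * ιB (ιQ s₁)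
      obtain ⟨t₀, ht₀, hrep₀⟩ := xpow_mul hB n (ιQ s₁)
      have htop : ιB (c n) * y ^ n * ιB (ιQ s₁)
          = ιB (ιQ r) * y ^ n + ιB (c n) * t₀ := by
        rw [mul_assoc, ht₀, σit, hσs₁, mul_add, ← mul_assoc, ← map_mul, hbt]
      have hlow : ORep ιB y n ((∑ j ∈ Finset.range n, ιB (c j) * y ^ j) * ιB (ιQ s₁)) :=
        rep_rmul hB ⟨c, rfl⟩ (ιQ s₁)
      have hw : ORep ιB y n ((∑ j ∈ Finset.range n, ιB (c j) * y ^ j) * ιB (ιQ s₁)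
          + ιB (c n) * t₀) :=
        rep_add hlow (rep_lmul hrep₀ _)
      obtain ⟨e, he⟩ := hw
      obtain ⟨s₂, a₂, hs₂, ha₂⟩ := ih e
      rw [← he] at ha₂
      refine ⟨s₁ * s₂, ιA r * x ^ n * ιA s₂ + a₂, hs₁reg.mul hs₂, ?_⟩
      have hsplit : (∑ j ∈ Finset.range (n + 1), ιB (c j) * y ^ j) * ιB (ιQ s₁)
          = ιB (ιQ r) * y ^ n
            + ((∑ j ∈ Finset.range n, ιB (c j) * y ^ j) * ιB (ιQ s₁) + ιB (c n) * t₀) := by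
        rw [Finset.sum_range_succ, add_mul, htop]
        abel
      rw [map_mul, map_mul, ← mul_assoc, hsplit, add_mul, mul_assoc, ha₂, map_add,
        map_mul, map_mul, ρι, ρι, map_pow, ρx, ← mul_assoc]
  -- ρ is injective
  have ρinj : Function.Injective ρ := by
    have hz : ∀ a, ρ a = 0 → a = 0 := by
      intro a ha
      obtain ⟨m, c, rfl⟩ := hA.gen a
      rw [map_sum] at ha
      have ha' : ∑ i ∈ Finset.range m, ιB (ιQ (c i)) * y ^ i = 0 := by
        have : ∀ i ∈ Finset.range m, ρ (ιA (c i) * x ^ i) = ιB (ιQ (c i)) * y ^ i := by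
          intro i _
          rw [map_mul, map_pow, ρι, ρx]
        rw [← Finset.sum_congr rfl this]
        exact ha
      have hind := hB.indep m _ ha'
      refine Finset.sum_eq_zero fun i hi => ?_
      have : c i = 0 := hQ_inj (by rw [hind i (Finset.mem_range.mp hi), map_zero])
      rw [this, map_zero, zero_mul]
    intro a b hab
    have := hz (a - b) (by rw [map_sub, hab, sub_self])
    exact sub_eq_zero.mp this
  -- ψ is injective
  have ψinj : Function.Injective ψ := by
    have hz : ∀ b, ψ b = 0 → b = 0 := by
      intro b hb
      obtain ⟨s, a, hs, hba⟩ := ORE b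
      have h1 : ιQA a = 0 := by rw [← ψρ, ← hba, map_mul, hb, zero_mul]
      have h2 : a = 0 := hQA_inj (by rw [h1, map_zero])
      rw [h2, map_zero] at hba
      exact ((hQ.1 s hs).map ιB).mul_right_cancel (by rw [hba, zero_mul])
    intro a b hab
    have := hz (a - b) (by rw [map_sub, hab, sub_self])
    exact sub_eq_zero.mp this
  -- right Ore condition in A at regular elements
  have OreA : ∀ (a s : A), IsRegular s → ∃ t d : A, IsRegular t ∧ a * t = s * d := by
    intro a s hsreg
    have hu := hQA.1 s hsreg
    obtain ⟨d, t, htmem, hzt⟩ := hQA.2.1 ((↑hu.unit⁻¹ : QA) * ιQA a)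
    refine ⟨t, d, htmem, hQA_inj ?_⟩
    rw [map_mul, map_mul]
    calc ιQA a * ιQA t = ιQA s * ↑hu.unit⁻¹ * (ιQA a * ιQA t) := by
          rw [hu.mul_val_inv, one_mul]
      _ = ιQA s * (↑hu.unit⁻¹ * ιQA a * ιQA t) := by
          rw [mul_assoc, ← mul_assoc (↑hu.unit⁻¹ : QA)]
      _ = ιQA s * ιQA d := by rw [hzt]
  -- regular elements of A stay regular in B
  have REG2 : ∀ a : A, IsRegular a → IsRegular (ρ a) := by
    intro a ha
    have left : ∀ q, ρ a * q = 0 → q = 0 := by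
      intro q hq
      obtain ⟨s, c, hs, hqc⟩ := ORE q
      have h1 : ρ (a * c) = 0 := by
        rw [map_mul, ← hqc, ← mul_assoc, hq, zero_mul]
      have hc : c = 0 := ha.left (by simpa using ρinj (by rw [h1, map_zero]))
      rw [hc, map_zero] at hqc
      exact ((hQ.1 s hs).map ιB).mul_right_cancel (by rw [hqc, zero_mul])
    have right : ∀ q, q * ρ a = 0 → q = 0 := by
      intro q hq
      obtain ⟨s₀, c, hs₀, hqc⟩ := ORE q
      obtain ⟨t, d, htreg, hadt⟩ := OreA a (ιA s₀) (regA hs₀)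
      have e1 : ιB (ιQ s₀) * ρ d = ρ a * ρ t := by
        rw [← ρι s₀, ← map_mul, ← hadt, map_mul]
      have h1 : ρ (c * d) = 0 := by
        rw [map_mul, ← hqc, mul_assoc, e1, ← mul_assoc, hq, zero_mul]
      have hcd : c * d = 0 := ρinj (by rw [h1, map_zero])
      have hat : IsUnit (ιQA (a * t)) := hQA.1 _ (ha.mul htreg)
      have hs0u : IsUnit (ιQA (ιA s₀)) := hQA.1 _ (regA hs₀)
      have hdu : IsUnit (ιQA d) := by
        have h2 : ιQA (ιA s₀) * ιQA d = ιQA (a * t) := by rw [← map_mul, ← hadt]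
        have h3 : ιQA d = ↑hs0u.unit⁻¹ * ιQA (a * t) := by
          rw [← h2, ← mul_assoc, hs0u.val_inv_mul, one_mul]
        rw [h3]
        exact (hs0u.unit⁻¹).isUnit.mul hat
      have hc : ιQA c = 0 := by
        have h4 : ιQA c * ιQA d = 0 * ιQA d := by
          rw [← map_mul, hcd, map_zero, zero_mul]
        exact hdu.mul_right_cancel h4
      have hc0 : c = 0 := hQA_inj (by rw [hc, map_zero])
      rw [hc0, map_zero] at hqc
      exact ((hQ.1 s₀ hs₀).map ιB).mul_right_cancel (by rw [hqc, zero_mul])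
    constructor
    · intro u v huv
      have := left (u - v) (by rw [mul_sub, sub_eq_zero]; exact huv)
      exact sub_eq_zero.mp this
    · intro u v huv
      have := right (u - v) (by rw [sub_mul, sub_eq_zero]; exact huv)
      exact sub_eq_zero.mp this
  -- regular elements of B become units under ψ
  have hgχ : ∀ b ∈ {r : B | IsRegular r}, IsUnit (ψ b) := by
    intro b hb
    obtain ⟨s, a, hs, hba⟩ := ORE b
    have hρa : IsRegular (ρ a) := hba ▸ (hb.mul ((hQ.1 s hs).map ιB).isRegular)
    have hareg : IsRegular a := by
      constructor
      · intro u v huv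
        have huv' : a * u = a * v := huv
        exact ρinj (hρa.left (show ρ a * ρ u = ρ a * ρ v by
          rw [← map_mul, ← map_mul, huv']))
      · intro u v huv
        have huv' : u * a = v * a := huv
        exact ρinj (hρa.right (show ρ u * ρ a = ρ v * ρ a by
          rw [← map_mul, ← map_mul, huv']))
    have hsu : IsUnit (ιQA (ιA s)) := hQA.1 _ (regA hs)
    have h2 : ψ b * ιQA (ιA s) = ιQA a := by
      have : ψ (ιB (ιQ s)) = ιQA (ιA s) := by rw [ψι, f_ι]
      rw [← this, ← map_mul, hba, ψρ]
    have h3 : ψ b = ιQA a * ↑hsu.unit⁻¹ := by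
      rw [← h2, mul_assoc, hsu.mul_val_inv, mul_one]
    rw [h3]
    exact (hQA.1 a hareg).mul (hsu.unit⁻¹).isUnit
  -- χ : QB →+* QA
  obtain ⟨χ, χspec⟩ := loc_ext hQB (isRegular_one) (fun s hs t ht => hs.mul ht) ψ hgχ
  have χιQB : ∀ b : B, χ (ιQB b) = ψ b := by
    intro b
    have := χspec (ιQB b) b 1 (isRegular_one) (by simp)
    simpa using this
  -- χ is injective
  have χinj : Function.Injective χ := by
    have hz : ∀ z, χ z = 0 → z = 0 := by
      intro z hz0
      obtain ⟨b, s, hs, e⟩ := hQB.2.1 z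
      have h1 := χspec z b s hs e
      rw [hz0, zero_mul] at h1
      have hb : b = 0 := ψinj (by rw [← h1, map_zero])
      rw [hb, map_zero] at e
      exact (hQB.1 s hs).mul_right_cancel (by rw [e, zero_mul])
    intro a b hab
    have := hz (a - b) (by rw [map_sub, hab, sub_self])
    exact sub_eq_zero.mp this
  -- χ is surjective
  have χsurj : Function.Surjective χ := by
    intro z
    obtain ⟨a, d, hd, e⟩ := hQA.2.1 z
    have hd : IsRegular d := hd
    have hρd : IsRegular (ρ d) := REG2 d hd
    have hu : IsUnit (ιQB (ρ d)) := hQB.1 _ hρd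
    refine ⟨ιQB (ρ a) * ↑hu.unit⁻¹, ?_⟩
    have h1 : χ (ιQB (ρ a)) = ιQA a := by rw [χιQB, ψρ]
    have h2 : χ (ιQB (ρ d)) = ιQA d := by rw [χιQB, ψρ]
    have hdu : IsUnit (ιQA d) := hQA.1 _ hd
    have h3 : ιQA d * χ (↑hu.unit⁻¹) = 1 := by
      rw [← h2, ← map_mul, hu.mul_val_inv, map_one]
    have h4 : χ (↑hu.unit⁻¹) = ↑hdu.unit⁻¹ := by
      have h5 : ↑hdu.unit⁻¹ * (ιQA d * χ (↑hu.unit⁻¹)) = ↑hdu.unit⁻¹ * 1 := by rw [h3]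
      rw [← mul_assoc, hdu.val_inv_mul, one_mul, mul_one] at h5
      exact h5
    have h6 : z = ιQA a * ↑hdu.unit⁻¹ := by
      rw [← e, mul_assoc, hdu.mul_val_inv, mul_one]
    rw [map_mul, h1, h4, h6]
  -- assemble
  have χeq : ∀ r : R, χ (ιQB (ιB (ιQ r))) = ιQA (ιA r) := by
    intro r
    rw [χιQB, ψι, f_ι]
  have χy : χ (ιQB y) = ιQA x := by rw [χιQB, ψy]
  constructor
  · refine ⟨ψ, ψinj, ?_, ψy⟩
    intro r
    rw [ψι, f_ι]
  · set χe : QB ≃+* QA := RingEquiv.ofBijective χ ⟨χinj, χsurj⟩ with hχe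
    have hχe_app : ∀ z, χe z = χ z := fun z => rfl
    refine ⟨χe.symm, ?_, ?_⟩
    · intro r
      apply χe.injective
      rw [χe.apply_symm_apply, hχe_app, χeq]
    · apply χe.injective
      rw [χe.apply_symm_apply, hχe_app, χy]
end

section
/- Let R be a ring, σ₁ and σ₂ ring automorphisms of R, δ₁ a σ₁-derivation of R, and λ ∈ R an invertible element. Then σ₂ extends to a ring automorphism of the Ore extension R[x₁;σ₁,δ₁] (restricting to σ₂ on R) with σ₂(x₁) = λx₁ if and only if σ₂σ₁(r) = λ·σ₁σ₂(r)·λ⁻¹ and σ₂δ₁(r) = λ·δ₁σ₂(r) for all r ∈ R. -/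
universe u v w

section Helpers

variable {R : Type u} {A : Type v} {C : Type w} [Ring R] [Ring A] [Ring C]

lemma pad_sum (f : R →+* C) (z : C) (a : ℕ → R) {m N : ℕ} (h : m ≤ N) :
    ∑ i ∈ Finset.range N, f (if i < m then a i else 0) * z ^ i
      = ∑ i ∈ Finset.range m, f (a i) * z ^ i := by
  rw [show (∑ i ∈ Finset.range m, f (a i) * z ^ i)
      = ∑ i ∈ Finset.range m, f (if i < m then a i else 0) * z ^ i from
    Finset.sum_congr rfl fun i hi => by rw [if_pos (Finset.mem_range.1 hi)]]
  exact (Finset.sum_subset (Finset.range_subset_range.2 h) fun i _ hi => by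
    rw [if_neg (by simpa using hi), map_zero, zero_mul]).symm

lemma mulx (σ : R ≃+* R) (δ : R → R) (f : R →+* C) (z : C)
    (hz : ∀ r : R, z * f r = f (σ r) * z + f (δ r)) (b : ℕ → R) (m : ℕ) :
    z * ∑ i ∈ Finset.range m, f (b i) * z ^ i
      = ∑ i ∈ Finset.range (m + 1),
          f ((if i < m then δ (b i) else 0) + (if i = 0 then 0 else σ (b (i - 1)))) * z ^ i := by
  have lhs : z * ∑ i ∈ Finset.range m, f (b i) * z ^ i
      = (∑ i ∈ Finset.range m, f (σ (b i)) * z ^ (i + 1))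
        + ∑ i ∈ Finset.range m, f (δ (b i)) * z ^ i := by
    rw [Finset.mul_sum, ← Finset.sum_add_distrib]
    refine Finset.sum_congr rfl fun i _ => ?_
    rw [← mul_assoc, hz, add_mul, mul_assoc, ← pow_succ']
  rw [lhs]
  have rhs : (∑ i ∈ Finset.range (m + 1),
        f ((if i < m then δ (b i) else 0) + (if i = 0 then 0 else σ (b (i - 1)))) * z ^ i)
      = (∑ i ∈ Finset.range (m + 1), f (if i < m then δ (b i) else 0) * z ^ i)
        + ∑ i ∈ Finset.range (m + 1), f (if i = 0 then 0 else σ (b (i - 1))) * z ^ i := by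
    rw [← Finset.sum_add_distrib]
    exact Finset.sum_congr rfl fun i _ => by rw [map_add, add_mul]
  rw [rhs, pad_sum f z (fun i => δ (b i)) (Nat.le_succ m), Finset.sum_range_succ']
  simp only [if_pos rfl, map_zero, zero_mul, add_zero, Nat.succ_ne_zero, if_neg,
    Nat.add_sub_cancel]
  rw [add_comm]
  simp

lemma coeff_unique {ι : R →+* A} {x : A} {σ : R ≃+* R} {δ : R → R}
    (hA : IsOreExtension ι x σ δ) {m : ℕ} {a b : ℕ → R}
    (h : ∑ i ∈ Finset.range m, ι (a i) * x ^ i = ∑ i ∈ Finset.range m, ι (b i) * x ^ i) :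
    ∀ i < m, a i = b i := by
  have h0 : ∑ i ∈ Finset.range m, ι (a i - b i) * x ^ i = 0 := by
    simp only [map_sub, sub_mul, Finset.sum_sub_distrib, h, sub_self]
  intro i hi
  exact sub_eq_zero.1 (hA.indep m (fun i => a i - b i) h0 i hi)

lemma eval_welldef {ι : R →+* A} {x : A} {σ : R ≃+* R} {δ : R → R}
    (hA : IsOreExtension ι x σ δ) (φ : R →+* C) (y : C) {m n : ℕ} {a b : ℕ → R}
    (h : ∑ i ∈ Finset.range m, ι (a i) * x ^ i = ∑ i ∈ Finset.range n, ι (b i) * x ^ i) :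
    ∑ i ∈ Finset.range m, φ (a i) * y ^ i = ∑ i ∈ Finset.range n, φ (b i) * y ^ i := by
  have hm : m ≤ max m n := le_max_left m n
  have hn : n ≤ max m n := le_max_right m n
  have h' : ∀ i < max m n, (if i < m then a i else 0) = (if i < n then b i else 0) :=
    coeff_unique hA (by rw [pad_sum ι x a hm, pad_sum ι x b hn]; exact h)
  calc ∑ i ∈ Finset.range m, φ (a i) * y ^ i
      = ∑ i ∈ Finset.range (max m n), φ (if i < m then a i else 0) * y ^ i :=
        (pad_sum φ y a hm).symm
    _ = ∑ i ∈ Finset.range (max m n), φ (if i < n then b i else 0) * y ^ i :=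
        Finset.sum_congr rfl fun i hi => by rw [h' i (Finset.mem_range.1 hi)]
    _ = ∑ i ∈ Finset.range n, φ (b i) * y ^ i := pad_sum φ y b hn

end Helpers

theorem ore_lift {R : Type u} {A : Type v} {B : Type w} [Ring R] [Ring A] [Ring B]
    (ι : R →+* A) (x : A) (σ : R ≃+* R) (δ : R → R)
    (hA : IsOreExtension ι x σ δ) (φ : R →+* B) (y : B)
    (hy : ∀ r : R, y * φ r = φ (σ r) * y + φ (δ r)) :
    ∃ Φ : A →+* B, (∀ r : R, Φ (ι r) = φ r) ∧ Φ x = y := by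
  classical
  set F : A → B := fun s =>
    ∑ i ∈ Finset.range (hA.gen s).choose, φ ((hA.gen s).choose_spec.choose i) * y ^ i with hF
  have key : ∀ (s : A) (m : ℕ) (a : ℕ → R),
      s = ∑ i ∈ Finset.range m, ι (a i) * x ^ i →
      F s = ∑ i ∈ Finset.range m, φ (a i) * y ^ i := fun s m a hs =>
    eval_welldef hA φ y ((hA.gen s).choose_spec.choose_spec.symm.trans hs)
  have Fι : ∀ r : R, F (ι r) = φ r := by
    intro r
    rw [key (ι r) 1 (fun _ => r) (by simp)]
    simp
  have Fx : F x = y := by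
    rw [key x 2 (fun i => if i = 0 then 0 else 1) (by simp [Finset.sum_range_succ])]
    simp [Finset.sum_range_succ]
  have F1 : F 1 = 1 := by rw [← map_one ι, Fι, map_one]
  have F0 : F 0 = 0 := by rw [key 0 0 (fun _ => 0) (by simp)]; simp
  have Fadd : ∀ s t : A, F (s + t) = F s + F t := by
    intro s t
    obtain ⟨m, a, hs⟩ := hA.gen s
    obtain ⟨n, b, ht⟩ := hA.gen t
    have hm : m ≤ max m n := le_max_left m n
    have hn : n ≤ max m n := le_max_right m n
    have hs' : s = ∑ i ∈ Finset.range (max m n), ι (if i < m then a i else 0) * x ^ i :=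
      hs.trans (pad_sum ι x a hm).symm
    have ht' : t = ∑ i ∈ Finset.range (max m n), ι (if i < n then b i else 0) * x ^ i :=
      ht.trans (pad_sum ι x b hn).symm
    have hst : s + t = ∑ i ∈ Finset.range (max m n),
        ι ((if i < m then a i else 0) + (if i < n then b i else 0)) * x ^ i := by
      rw [hs', ht', ← Finset.sum_add_distrib]
      exact Finset.sum_congr rfl fun i _ => by rw [map_add, add_mul]
    rw [key _ _ _ hst, key s _ _ hs', key t _ _ ht', ← Finset.sum_add_distrib]
    exact Finset.sum_congr rfl fun i _ => by rw [map_add, add_mul]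
  have Fsmul : ∀ (r : R) (t : A), F (ι r * t) = φ r * F t := by
    intro r t
    obtain ⟨n, b, ht⟩ := hA.gen t
    have h2 : ι r * t = ∑ i ∈ Finset.range n, ι (r * b i) * x ^ i := by
      rw [ht, Finset.mul_sum]
      exact Finset.sum_congr rfl fun i _ => by rw [map_mul, mul_assoc]
    rw [key _ _ _ h2, key t _ _ ht, Finset.mul_sum]
    exact Finset.sum_congr rfl fun i _ => by rw [map_mul, mul_assoc]
  have FmulX : ∀ t : A, F (x * t) = y * F t := by
    intro t
    obtain ⟨n, b, ht⟩ := hA.gen t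
    have h2 : x * t = ∑ i ∈ Finset.range (n + 1),
        ι ((if i < n then δ (b i) else 0) + (if i = 0 then 0 else σ (b (i - 1)))) * x ^ i := by
      rw [ht]; exact mulx σ δ ι x hA.rel b n
    rw [key _ _ _ h2, key t _ _ ht, mulx σ δ φ y hy b n]
  have FpowX : ∀ (i : ℕ) (t : A), F (x ^ i * t) = y ^ i * F t := by
    intro i
    induction i with
    | zero => intro t; simp
    | succ i ih =>
      intro t
      rw [pow_succ', mul_assoc, FmulX, ih, pow_succ', mul_assoc]
  have Fsum : ∀ (k : ℕ) (u : ℕ → A),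
      F (∑ i ∈ Finset.range k, u i) = ∑ i ∈ Finset.range k, F (u i) := by
    intro k u
    induction k with
    | zero => simpa using F0
    | succ k ih => rw [Finset.sum_range_succ, Finset.sum_range_succ, Fadd, ih]
  have Fmul : ∀ s t : A, F (s * t) = F s * F t := by
    intro s t
    obtain ⟨m, a, hs⟩ := hA.gen s
    have hst : s * t = ∑ i ∈ Finset.range m, ι (a i) * (x ^ i * t) := by
      rw [hs, Finset.sum_mul]
      exact Finset.sum_congr rfl fun i _ => by rw [mul_assoc]
    rw [hst, Fsum m (fun i => ι (a i) * (x ^ i * t)), key s _ _ hs, Finset.sum_mul]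
    exact Finset.sum_congr rfl fun i _ => by rw [Fsmul, FpowX, mul_assoc]
  exact ⟨{ toFun := F, map_one' := F1, map_mul' := Fmul, map_zero' := F0, map_add' := Fadd },
    Fι, Fx⟩

lemma deg1_unique {R : Type u} {A : Type v} [Ring R] [Ring A]
    {ι : R →+* A} {x : A} {σ : R ≃+* R} {δ : R → R}
    (hA : IsOreExtension ι x σ δ) {a b c d : R}
    (h : ι a * x + ι b = ι c * x + ι d) : a = c ∧ b = d := by
  have hsum : ∑ i ∈ Finset.range 2, ι ((fun i => if i = 0 then b - d else a - c) i) * x ^ i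
      = (ι a * x + ι b) - (ι c * x + ι d) := by
    rw [Finset.sum_range_succ, Finset.sum_range_one]
    show ι (if 0 = 0 then b - d else a - c) * x ^ 0 + ι (if 1 = 0 then b - d else a - c) * x ^ 1
      = _
    rw [if_pos rfl, if_neg (Nat.one_ne_zero), pow_zero, pow_one, mul_one, map_sub, map_sub,
      sub_mul, sub_add_sub_comm, add_comm (ι b), add_comm (ι d)]
  have h0 := hA.indep 2 _ (by rw [hsum, h, sub_self])
  exact ⟨sub_eq_zero.1 (by simpa using h0 1 (by norm_num)),
    sub_eq_zero.1 (by simpa using h0 0 (by norm_num))⟩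

/-- `σ₂` extends to an automorphism of `R[x₁;σ₁,δ₁]` with
`σ₂ x₁ = λ x₁` iff `σ₂σ₁(r) = λ σ₁σ₂(r) λ⁻¹` and `σ₂δ₁(r) = λ δ₁σ₂(r)` for all `r`. -/
theorem extend_automorphism_to_ore_extension_iff {R : Type u} {A : Type v}
    [Ring R] [Ring A]
    (σ₁ σ₂ : R ≃+* R) (δ₁ : R → R) (hδ₁ : IsSigmaDerivation σ₁ δ₁)
    (lam lamInv : R) (h1 : lam * lamInv = 1) (h2 : lamInv * lam = 1)
    (ι : R →+* A) (x₁ : A) (hA : IsOreExtension ι x₁ σ₁ δ₁) :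
    (∃ σ₂' : A ≃+* A, (∀ r : R, σ₂' (ι r) = ι (σ₂ r)) ∧ σ₂' x₁ = ι lam * x₁) ↔
      ∀ r : R, σ₂ (σ₁ r) = lam * σ₁ (σ₂ r) * lamInv ∧ σ₂ (δ₁ r) = lam * δ₁ (σ₂ r) := by
  constructor
  · rintro ⟨σ₂', hresp, hx⟩ r
    have e1 : σ₂' (x₁ * ι r) = ι (lam * σ₁ (σ₂ r)) * x₁ + ι (lam * δ₁ (σ₂ r)) := by
      rw [map_mul, hx, hresp, mul_assoc, hA.rel (σ₂ r), mul_add, ← mul_assoc, ← map_mul,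
        ← map_mul]
    have e2 : σ₂' (x₁ * ι r) = ι (σ₂ (σ₁ r) * lam) * x₁ + ι (σ₂ (δ₁ r)) := by
      rw [hA.rel r, map_add, map_mul, hresp, hresp, hx, ← mul_assoc, ← map_mul]
    obtain ⟨hc1, hc2⟩ := deg1_unique hA (e1.symm.trans e2)
    refine ⟨?_, hc2.symm⟩
    calc σ₂ (σ₁ r) = σ₂ (σ₁ r) * (lam * lamInv) := by rw [h1, mul_one]
      _ = (σ₂ (σ₁ r) * lam) * lamInv := by rw [mul_assoc]
      _ = lam * σ₁ (σ₂ r) * lamInv := by rw [← hc1]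
  · intro h
    -- forward hom
    have hyΦ : ∀ r : R, (ι lam * x₁) * (ι.comp σ₂.toRingHom) r
        = (ι.comp σ₂.toRingHom) (σ₁ r) * (ι lam * x₁) + (ι.comp σ₂.toRingHom) (δ₁ r) := by
      intro r
      have e1 : σ₂ (σ₁ r) * lam = lam * σ₁ (σ₂ r) := by
        rw [(h r).1, mul_assoc, mul_assoc, h2, mul_one]
      simp only [RingHom.coe_comp, Function.comp_apply, RingEquiv.coe_toRingHom,
        RingEquiv.toRingHom_eq_coe, RingHom.coe_coe]
      rw [mul_assoc, hA.rel (σ₂ r), mul_add, ← mul_assoc, ← map_mul, ← e1, (h r).2,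
        ← map_mul, map_mul ι (σ₂ (σ₁ r)) lam, mul_assoc]
    obtain ⟨Φ, hΦι, hΦx⟩ := ore_lift ι x₁ σ₁ δ₁ hA (ι.comp σ₂.toRingHom) (ι lam * x₁) hyΦ
    -- backward hom
    have hyΨ : ∀ r : R, (ι (σ₂.symm lamInv) * x₁) * (ι.comp σ₂.symm.toRingHom) r
        = (ι.comp σ₂.symm.toRingHom) (σ₁ r) * (ι (σ₂.symm lamInv) * x₁)
          + (ι.comp σ₂.symm.toRingHom) (δ₁ r) := by
      intro r
      have key1 : σ₂.symm lamInv * σ₁ (σ₂.symm r) = σ₂.symm (σ₁ r) * σ₂.symm lamInv := by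
        apply σ₂.injective
        rw [map_mul, map_mul, σ₂.apply_symm_apply, σ₂.apply_symm_apply]
        have := (h (σ₂.symm r)).1
        rw [σ₂.apply_symm_apply] at this
        rw [this, ← mul_assoc, ← mul_assoc, h2, one_mul]
      have key2 : σ₂.symm lamInv * δ₁ (σ₂.symm r) = σ₂.symm (δ₁ r) := by
        apply σ₂.injective
        rw [map_mul, σ₂.apply_symm_apply]
        have := (h (σ₂.symm r)).2
        rw [σ₂.apply_symm_apply] at this
        rw [this, ← mul_assoc, h2, one_mul, σ₂.apply_symm_apply]
      simp only [RingHom.coe_comp, Function.comp_apply, RingEquiv.coe_toRingHom,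
        RingEquiv.toRingHom_eq_coe, RingHom.coe_coe]
      rw [mul_assoc, hA.rel (σ₂.symm r), mul_add, ← mul_assoc,
        ← map_mul ι (σ₂.symm lamInv) (σ₁ (σ₂.symm r)), key1,
        ← map_mul ι (σ₂.symm lamInv) (δ₁ (σ₂.symm r)), key2,
        map_mul ι (σ₂.symm (σ₁ r)) (σ₂.symm lamInv), mul_assoc]
    obtain ⟨Ψ, hΨι, hΨx⟩ := ore_lift ι x₁ σ₁ δ₁ hA (ι.comp σ₂.symm.toRingHom)
      (ι (σ₂.symm lamInv) * x₁) hyΨ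
    have hΦι' : ∀ r : R, Φ (ι r) = ι (σ₂ r) := fun r => hΦι r
    have hΨι' : ∀ r : R, Ψ (ι r) = ι (σ₂.symm r) := fun r => hΨι r
    have ΨΦx : Ψ (Φ x₁) = x₁ := by
      rw [hΦx, map_mul, hΨι', hΨx, ← mul_assoc, ← map_mul, ← map_mul, h1, map_one, map_one,
        one_mul]
    have ΦΨx : Φ (Ψ x₁) = x₁ := by
      rw [hΨx, map_mul, hΦι', σ₂.apply_symm_apply, hΦx, ← mul_assoc, ← map_mul, h2, map_one,
        one_mul]
    have ΨΦ : ∀ s : A, Ψ (Φ s) = s := by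
      intro s
      obtain ⟨m, a, hs⟩ := hA.gen s
      rw [hs, map_sum, map_sum]
      refine Finset.sum_congr rfl fun i _ => ?_
      rw [map_mul, map_mul, map_pow, map_pow, hΦι', hΨι', σ₂.symm_apply_apply, ΨΦx]
    have ΦΨ : ∀ s : A, Φ (Ψ s) = s := by
      intro s
      obtain ⟨m, a, hs⟩ := hA.gen s
      rw [hs, map_sum, map_sum]
      refine Finset.sum_congr rfl fun i _ => ?_
      rw [map_mul, map_mul, map_pow, map_pow, hΨι', hΦι', σ₂.apply_symm_apply, ΦΨx]
    refine ⟨RingEquiv.ofRingHom Φ Ψ (RingHom.ext fun s => ΦΨ s) (RingHom.ext fun s => ΨΦ s),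
      hΦι', hΦx⟩
end

section
/- Let R be a ring, σ₁ and σ₂ ring automorphisms of R, δ₁ a σ₁-derivation of R, λ ∈ R invertible, and suppose σ₂ has been extended to an automorphism of R[x₁;σ₁,δ₁] with σ₂(x₁) = λx₁. Then there exist an automorphism σ₁′ and a σ₁′-derivation δ₁′ of R[x₂;σ₂] determined by σ₁′|_R = σ₁, σ₁′(x₂) = λ⁻¹x₂, δ₁′|_R = δ₁, δ₁′(x₂) = 0, and there is a ring isomorphism R[x₁;σ₁,δ₁][x₂;σ₂] ≅ R[x₂;σ₂][x₁;σ₁′,δ₁′] which is the identity on R and interchanges the indeterminates x₁ and x₂. -/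
universe u v w

section OreTools

variable {R : Type u} {S : Type v} {T : Type w} [Ring R] [Ring S] [Ring T]

lemma sd_zero {σ : R ≃+* R} {δ : R → R} (hδ : IsSigmaDerivation σ δ) : δ 0 = 0 := by
  have := hδ.1 0 0
  rw [add_zero] at this
  exact (left_eq_add.1 this)

lemma sd_one {σ : R ≃+* R} {δ : R → R} (hδ : IsSigmaDerivation σ δ) : δ 1 = 0 := by
  have := hδ.2 1 1
  simp only [mul_one, map_one, one_mul] at this
  exact left_eq_add.1 this

lemma padSum (ψ : R → T) (hψ : ψ 0 = 0) (y : T) (a : ℕ → R) {m M : ℕ} (hm : m ≤ M) :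
    ∑ i ∈ Finset.range M, ψ (if i < m then a i else 0) * y ^ i
      = ∑ i ∈ Finset.range m, ψ (a i) * y ^ i := by
  rw [← Finset.sum_subset (Finset.range_subset_range.2 hm)
      (fun i _ hi => by rw [if_neg (by simpa using hi), hψ, zero_mul])]
  exact Finset.sum_congr rfl fun i hi => by rw [if_pos (Finset.mem_range.1 hi)]

variable {ι : R →+* S} {x : S} {σ : R ≃+* R} {δ : R → R}

lemma coeff_zero (h : IsOreExtension ι x σ δ) {m : ℕ} {a b : ℕ → R}
    (heq : ∑ i ∈ Finset.range m, ι (a i) * x ^ i = ∑ i ∈ Finset.range m, ι (b i) * x ^ i) :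
    ∀ i < m, a i = b i := by
  have h0 : ∑ i ∈ Finset.range m, ι ((fun i => a i - b i) i) * x ^ i = 0 := by
    simp only [map_sub, sub_mul, Finset.sum_sub_distrib, heq, sub_self]
  intro i hi
  exact sub_eq_zero.1 (h.indep m _ h0 i hi)

lemma eval_wd (h : IsOreExtension ι x σ δ) (ψ : R → T) (hψ : ψ 0 = 0) (y : T)
    {m n : ℕ} {a b : ℕ → R}
    (heq : ∑ i ∈ Finset.range m, ι (a i) * x ^ i = ∑ i ∈ Finset.range n, ι (b i) * x ^ i) :
    ∑ i ∈ Finset.range m, ψ (a i) * y ^ i = ∑ i ∈ Finset.range n, ψ (b i) * y ^ i := by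
  have hm : m ≤ max m n := le_max_left _ _
  have hn : n ≤ max m n := le_max_right _ _
  have heq' : ∑ i ∈ Finset.range (max m n), ι (if i < m then a i else 0) * x ^ i
      = ∑ i ∈ Finset.range (max m n), ι (if i < n then b i else 0) * x ^ i := by
    rw [padSum (⇑ι) (map_zero ι) x a hm, padSum (⇑ι) (map_zero ι) x b hn]; exact heq
  have hc := coeff_zero h heq'
  rw [← padSum ψ hψ y a hm, ← padSum ψ hψ y b hn]
  exact Finset.sum_congr rfl fun i hi => by rw [hc i (Finset.mem_range.1 hi)]

noncomputable def evalFn (h : IsOreExtension ι x σ δ) (ψ : R → T) (y : T) (s : S) : T :=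
  ∑ i ∈ Finset.range (h.gen s).choose, ψ ((h.gen s).choose_spec.choose i) * y ^ i

lemma evalFn_spec (h : IsOreExtension ι x σ δ) (ψ : R → T) (hψ : ψ 0 = 0) (y : T)
    (m : ℕ) (a : ℕ → R) :
    evalFn h ψ y (∑ i ∈ Finset.range m, ι (a i) * x ^ i)
      = ∑ i ∈ Finset.range m, ψ (a i) * y ^ i :=
  eval_wd h ψ hψ y ((h.gen _).choose_spec.choose_spec).symm

lemma monoSum (ψ : R → T) (hψ : ψ 0 = 0) (y : T) (c : R) (k : ℕ) :
    ∑ i ∈ Finset.range (k + 1), ψ (if i = k then c else 0) * y ^ i = ψ c * y ^ k := by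
  rw [Finset.sum_eq_single_of_mem k (Finset.self_mem_range_succ k)
    (fun i _ hik => by rw [if_neg hik, hψ, zero_mul]), if_pos rfl]

lemma evalFn_monomial (h : IsOreExtension ι x σ δ) (ψ : R → T) (hψ : ψ 0 = 0) (y : T)
    (c : R) (k : ℕ) : evalFn h ψ y (ι c * x ^ k) = ψ c * y ^ k := by
  rw [← monoSum (⇑ι) (map_zero ι) x c k, evalFn_spec h ψ hψ y, monoSum ψ hψ y]

lemma evalFn_zero (h : IsOreExtension ι x σ δ) (ψ : R → T) (hψ : ψ 0 = 0) (y : T) :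
    evalFn h ψ y 0 = 0 := by
  simpa using evalFn_spec h ψ hψ y 0 (fun _ => 0)

lemma evalFn_add (h : IsOreExtension ι x σ δ) (ψ : R → T) (hψ0 : ψ 0 = 0)
    (hψ : ∀ a b : R, ψ (a + b) = ψ a + ψ b) (y : T) (s t : S) :
    evalFn h ψ y (s + t) = evalFn h ψ y s + evalFn h ψ y t := by
  obtain ⟨m, a, rfl⟩ := h.gen s
  obtain ⟨n, b, rfl⟩ := h.gen t
  have hm : m ≤ max m n := le_max_left _ _
  have hn : n ≤ max m n := le_max_right _ _
  rw [evalFn_spec h ψ hψ0 y, evalFn_spec h ψ hψ0 y,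
    ← padSum (⇑ι) (map_zero ι) x a hm, ← padSum (⇑ι) (map_zero ι) x b hn,
    ← Finset.sum_add_distrib]
  simp_rw [← add_mul, ← map_add]
  rw [evalFn_spec h ψ hψ0 y]
  simp_rw [hψ, add_mul]
  rw [Finset.sum_add_distrib, padSum ψ hψ0 y a hm, padSum ψ hψ0 y b hn]

noncomputable def evalAdd (h : IsOreExtension ι x σ δ) (ψ : R → T) (hψ0 : ψ 0 = 0)
    (hψ : ∀ a b : R, ψ (a + b) = ψ a + ψ b) (y : T) : S →+ T where
  toFun := evalFn h ψ y
  map_zero' := evalFn_zero h ψ hψ0 y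
  map_add' := evalFn_add h ψ hψ0 hψ y

lemma ore_pow_comm (h : IsOreExtension ι x σ (fun _ => 0)) (i : ℕ) (r : R) :
    x ^ i * ι r = ι ((⇑σ)^[i] r) * x ^ i := by
  induction i generalizing r with
  | zero => simp
  | succ i ih =>
    have hrel : x * ι r = ι (σ r) * x := by simpa using h.rel r
    rw [pow_succ, mul_assoc, hrel, ← mul_assoc, ih (σ r), Function.iterate_succ_apply,
      mul_assoc, ← pow_succ]

lemma oreHom_ext {δ : R → R} (h : IsOreExtension ι x σ δ) (f g : S →+* T)
    (h1 : ∀ r, f (ι r) = g (ι r)) (h2 : f x = g x) : f = g := by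
  ext s
  obtain ⟨m, a, rfl⟩ := h.gen s
  rw [map_sum, map_sum]
  exact Finset.sum_congr rfl fun i _ => by rw [map_mul, map_mul, map_pow, map_pow, h1, h2]

lemma oreHom (h : IsOreExtension ι x σ (fun _ => 0)) (φ : R →+* T) (y : T)
    (hy : ∀ r, y * φ r = φ (σ r) * y) :
    ∃ f : S →+* T, (∀ r, f (ι r) = φ r) ∧ f x = y := by
  have hψ0 : (⇑φ : R → T) 0 = 0 := map_zero φ
  have hψa : ∀ a b : R, φ (a + b) = φ a + φ b := map_add φ
  set E : S → T := evalFn h (⇑φ) y with hE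
  have hypow : ∀ (i : ℕ) (r : R), y ^ i * φ r = φ ((⇑σ)^[i] r) * y ^ i := by
    intro i
    induction i with
    | zero => intro r; simp
    | succ i ih =>
      intro r
      rw [pow_succ, mul_assoc, hy, ← mul_assoc, ih, Function.iterate_succ_apply,
        mul_assoc, ← pow_succ]
  have Emul_ι : ∀ (s : S) (r : R), E (s * ι r) = E s * φ r := by
    intro s r
    obtain ⟨m, a, rfl⟩ := h.gen s
    rw [Finset.sum_mul]
    simp_rw [mul_assoc, ore_pow_comm h, ← mul_assoc, ← map_mul]
    rw [hE, evalFn_spec h (⇑φ) hψ0 y, evalFn_spec h (⇑φ) hψ0 y, Finset.sum_mul]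
    simp_rw [map_mul, mul_assoc, ← hypow]
  have Emul_x : ∀ s : S, E (s * x) = E s * y := by
    intro s
    obtain ⟨m, a, rfl⟩ := h.gen s
    have key : (∑ i ∈ Finset.range m, ι (a i) * x ^ i) * x
        = ∑ i ∈ Finset.range (m + 1),
            ι (if i = 0 then 0 else a (i - 1)) * x ^ i := by
      rw [Finset.sum_range_succ' (fun i => ι (if i = 0 then 0 else a (i - 1)) * x ^ i)]
      simp only [Nat.succ_ne_zero, if_false, eq_self_iff_true, if_true, Nat.add_sub_cancel,
        map_zero, zero_mul, add_zero, pow_zero]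
      rw [Finset.sum_mul]
      exact Finset.sum_congr rfl fun i _ => by rw [mul_assoc, ← pow_succ]
    rw [key, hE, evalFn_spec h (⇑φ) hψ0 y, evalFn_spec h (⇑φ) hψ0 y,
      Finset.sum_range_succ' (fun i => φ (if i = 0 then 0 else a (i - 1)) * y ^ i)]
    simp only [Nat.succ_ne_zero, if_false, eq_self_iff_true, if_true, Nat.add_sub_cancel,
      map_zero, zero_mul, add_zero, pow_zero]
    rw [Finset.sum_mul]
    exact Finset.sum_congr rfl fun i _ => by rw [mul_assoc, ← pow_succ]
  have Emul_xpow : ∀ (s : S) (k : ℕ), E (s * x ^ k) = E s * y ^ k := by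
    intro s k
    induction k with
    | zero => simp
    | succ k ih => rw [pow_succ, ← mul_assoc, Emul_x, ih, pow_succ, mul_assoc]
  have Emul : ∀ s t : S, E (s * t) = E s * E t := by
    intro s t
    obtain ⟨n, b, rfl⟩ := h.gen t
    have hEh : ∀ u : S, E u = evalAdd h (⇑φ) hψ0 hψa y u := fun _ => rfl
    rw [Finset.mul_sum, hEh, map_sum]
    have hterm : ∀ i ∈ Finset.range n,
        evalAdd h (⇑φ) hψ0 hψa y (s * (ι (b i) * x ^ i)) = E s * (φ (b i) * y ^ i) := by
      intro i _
      rw [← hEh, ← mul_assoc, Emul_xpow, Emul_ι, mul_assoc]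
    rw [Finset.sum_congr rfl hterm, ← Finset.mul_sum, hE,
      evalFn_spec h (⇑φ) hψ0 y]
  have Eone : E 1 = 1 := by
    have h1 : (1 : S) = ι 1 * x ^ 0 := by simp
    rw [h1, hE, evalFn_monomial h (⇑φ) hψ0 y]
    simp
  refine ⟨{ toFun := E, map_one' := Eone, map_mul' := Emul,
            map_zero' := evalFn_zero h (⇑φ) hψ0 y,
            map_add' := evalFn_add h (⇑φ) hψ0 hψa y }, ?_, ?_⟩
  · intro r
    have : ι r = ι r * x ^ 0 := by simp
    show E (ι r) = φ r
    rw [this, hE, evalFn_monomial h (⇑φ) hψ0 y]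
    simp
  · have : x = ι 1 * x ^ 1 := by simp
    show E x = y
    rw [this, hE, evalFn_monomial h (⇑φ) hψ0 y]
    simp

lemma pow_expand (h : IsOreExtension ι x σ δ) {u v : R} (huv : u * v = 1) (i : ℕ) :
    ∃ w : ℕ → R, (∃ v', w i * v' = 1) ∧ (∀ l, i < l → w l = 0) ∧
      (ι u * x) ^ i = ∑ l ∈ Finset.range (i + 1), ι (w l) * x ^ l := by
  have hδ0 : δ 0 = 0 := sd_zero h.sderiv
  induction i with
  | zero =>
    exact ⟨fun l => if l = 0 then 1 else 0, ⟨1, by simp⟩,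
      fun l hl => if_neg (by omega), by simp⟩
  | succ i ih =>
    obtain ⟨w, ⟨v', hv'⟩, hvan, hw⟩ := ih
    refine ⟨fun l => u * ((if l = 0 then 0 else σ (w (l - 1))) + δ (w l)), ⟨σ v' * v, ?_⟩, ?_, ?_⟩
    · show u * ((if i + 1 = 0 then 0 else σ (w (i + 1 - 1))) + δ (w (i + 1))) * (σ v' * v) = 1
      rw [if_neg (Nat.succ_ne_zero i), hvan (i + 1) (Nat.lt_succ_self i), hδ0, add_zero,
        Nat.add_sub_cancel, mul_assoc, ← mul_assoc (σ (w i)), ← map_mul, hv', map_one,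
        one_mul, huv]
    · intro l hl
      obtain ⟨k, rfl⟩ : ∃ k, l = k + 1 := ⟨l - 1, by omega⟩
      show u * ((if k + 1 = 0 then 0 else σ (w (k + 1 - 1))) + δ (w (k + 1))) = 0
      rw [if_neg (Nat.succ_ne_zero k), Nat.add_sub_cancel, hvan k (by omega), map_zero,
        hvan (k + 1) (by omega), hδ0, add_zero, mul_zero]
    · have expand : ∀ l, ι u * x * (ι (w l) * x ^ l)
          = ι (u * σ (w l)) * x ^ (l + 1) + ι (u * δ (w l)) * x ^ l := by
        intro l
        have hstep : x * (ι (w l) * x ^ l)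
            = ι (σ (w l)) * (x * x ^ l) + ι (δ (w l)) * x ^ l := by
          rw [← mul_assoc, h.rel (w l), add_mul, mul_assoc]
        rw [mul_assoc, hstep, mul_add, ← mul_assoc (ι u) (ι (σ (w l))), ← map_mul,
          ← mul_assoc (ι u) (ι (δ (w l))), ← map_mul, ← pow_succ']
      have lhs : (ι u * x) ^ (i + 1)
          = ∑ l ∈ Finset.range (i + 1), ι (u * σ (w l)) * x ^ (l + 1)
            + ∑ l ∈ Finset.range (i + 1), ι (u * δ (w l)) * x ^ l := by
        rw [pow_succ', hw, Finset.mul_sum, Finset.sum_congr rfl fun l _ => expand l,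
          Finset.sum_add_distrib]
      have step1 : ∑ l ∈ Finset.range (i + 1), ι (u * δ (w l)) * x ^ l
          = ∑ l ∈ Finset.range (i + 1), ι (u * δ (w (l + 1))) * x ^ (l + 1)
            + ι (u * δ (w 0)) := by
        rw [Finset.sum_range_succ (fun l => ι (u * δ (w (l + 1))) * x ^ (l + 1)),
          hvan (i + 1) (Nat.lt_succ_self i), hδ0, mul_zero, map_zero, zero_mul, add_zero,
          Finset.sum_range_succ' (fun l => ι (u * δ (w l)) * x ^ l), pow_zero, mul_one]
      have rhs : ∑ l ∈ Finset.range (i + 1 + 1),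
            ι (u * ((if l = 0 then 0 else σ (w (l - 1))) + δ (w l))) * x ^ l
          = ∑ l ∈ Finset.range (i + 1), ι (u * σ (w l)) * x ^ (l + 1)
            + ∑ l ∈ Finset.range (i + 1), ι (u * δ (w (l + 1))) * x ^ (l + 1)
            + ι (u * δ (w 0)) := by
        rw [Finset.sum_range_succ'
          (fun l => ι (u * ((if l = 0 then 0 else σ (w (l - 1))) + δ (w l))) * x ^ l)]
        simp only [Nat.succ_ne_zero, if_false, Nat.add_sub_cancel, pow_zero, mul_one]
        have : ∀ l ∈ Finset.range (i + 1),
            ι (u * (σ (w l) + δ (w (l + 1)))) * x ^ (l + 1)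
              = ι (u * σ (w l)) * x ^ (l + 1) + ι (u * δ (w (l + 1))) * x ^ (l + 1) := by
          intro l _
          rw [mul_add, map_add, add_mul]
        rw [Finset.sum_congr rfl this, Finset.sum_add_distrib]
        simp only [eq_self_iff_true, if_true, zero_add]
      rw [lhs, step1, rhs, add_assoc]

lemma unit_indep (h : IsOreExtension ι x σ δ) {u v : R} (huv : u * v = 1) :
    ∀ (m : ℕ) (e : ℕ → R), (∑ i ∈ Finset.range m, ι (e i) * (ι u * x) ^ i) = 0 →
      ∀ i < m, e i = 0 := by
  intro m
  induction m with
  | zero => intro e _ i hi; omega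
  | succ m ih =>
    intro e he
    choose w hwtop hwvan hw using fun i => pow_expand h huv i
    have key : ∑ l ∈ Finset.range (m + 1),
        ι (∑ i ∈ Finset.range (m + 1), e i * w i l) * x ^ l = 0 := by
      rw [← he]
      have h1 : ∀ i ∈ Finset.range (m + 1), ι (e i) * (ι u * x) ^ i
          = ∑ l ∈ Finset.range (m + 1), ι (e i * w i l) * x ^ l := by
        intro i hi
        rw [hw i, Finset.mul_sum]
        have hsub : Finset.range (i + 1) ⊆ Finset.range (m + 1) :=
          Finset.range_subset_range.2 (by have := Finset.mem_range.1 hi; omega)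
        calc ∑ l ∈ Finset.range (i + 1), ι (e i) * (ι (w i l) * x ^ l)
            = ∑ l ∈ Finset.range (i + 1), ι (e i * w i l) * x ^ l :=
              Finset.sum_congr rfl fun l _ => by rw [← mul_assoc, ← map_mul]
          _ = ∑ l ∈ Finset.range (m + 1), ι (e i * w i l) * x ^ l :=
              Finset.sum_subset hsub (fun l _ hl => by
                rw [hwvan i l (by simp only [Finset.mem_range, not_lt] at hl; omega),
                  mul_zero, map_zero, zero_mul])
      rw [Finset.sum_congr rfl h1, Finset.sum_comm]
      exact Finset.sum_congr rfl fun l _ => by rw [map_sum, Finset.sum_mul]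
    have hcoe := h.indep (m + 1) _ key
    have hm : ∑ i ∈ Finset.range (m + 1), e i * w i m = 0 := hcoe m (Nat.lt_succ_self m)
    have htop : e m * w m m = 0 := by
      rw [Finset.sum_eq_single_of_mem m (Finset.self_mem_range_succ m)
        (fun i hi hne => by
          rw [hwvan i m (by
            have := Finset.mem_range.1 hi; omega), mul_zero])] at hm
      exact hm
    obtain ⟨v', hv'⟩ := hwtop m
    have hem : e m = 0 := by
      have : e m * (w m m * v') = 0 := by rw [← mul_assoc, htop, zero_mul]
      rwa [hv', mul_one] at this
    have he' : ∑ i ∈ Finset.range m, ι (e i) * (ι u * x) ^ i = 0 := by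
      rw [Finset.sum_range_succ, hem, map_zero, zero_mul, add_zero] at he
      exact he
    intro i hi
    rcases Nat.lt_succ_iff_lt_or_eq.1 hi with hlt | heq
    · exact ih e he' i hlt
    · rw [heq]; exact hem


lemma extract_coeff (h : IsOreExtension ι x σ δ) {p q p' q' : R}
    (hpq : ι p * x + ι q = ι p' * x + ι q') : p = p' ∧ q = q' := by
  have hsum : ∑ i ∈ Finset.range 2, ι (if i = 0 then q - q' else p - p') * x ^ i = 0 := by
    have hrw : ∑ i ∈ Finset.range 2, ι (if i = 0 then q - q' else p - p') * x ^ i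
        = (ι q - ι q') + (ι p * x - ι p' * x) := by
      rw [Finset.sum_range_succ, Finset.sum_range_one, if_pos rfl, if_neg one_ne_zero,
        pow_zero, mul_one, pow_one, map_sub, map_sub, sub_mul]
    rw [hrw, sub_add_sub_comm, sub_eq_zero, add_comm, hpq, add_comm]
  have h0 := h.indep 2 _ hsum 0 (by omega)
  have h1 := h.indep 2 _ hsum 1 (by omega)
  rw [if_pos rfl] at h0
  rw [if_neg one_ne_zero] at h1
  exact ⟨sub_eq_zero.1 h1, sub_eq_zero.1 h0⟩

end OreTools

/-- `mseq f c i = c * f c * f² c * ⋯` twisted product sequence. -/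
def mseq {R : Type u} [Ring R] (f : R → R) (c : R) : ℕ → R
  | 0 => 1
  | i + 1 => c * f (mseq f c i)

/-- `lseq f c i = fⁱ⁻¹ c * ⋯ * f c * c` twisted product sequence. -/
def lseq {R : Type u} [Ring R] (f : R → R) (c : R) : ℕ → R
  | 0 => 1
  | i + 1 => f (lseq f c i) * c

@[simp] lemma mseq_zero {R : Type u} [Ring R] (f : R → R) (c : R) : mseq f c 0 = 1 := rfl
@[simp] lemma mseq_succ {R : Type u} [Ring R] (f : R → R) (c : R) (i : ℕ) :
    mseq f c (i + 1) = c * f (mseq f c i) := rfl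
@[simp] lemma lseq_zero {R : Type u} [Ring R] (f : R → R) (c : R) : lseq f c 0 = 1 := rfl
@[simp] lemma lseq_succ {R : Type u} [Ring R] (f : R → R) (c : R) (i : ℕ) :
    lseq f c (i + 1) = f (lseq f c i) * c := rfl

/-- If `σ₂` has been extended to `R[x₁;σ₁,δ₁]` by `σ₂ x₁ = λ x₁`, then
there are an automorphism `σ₁′` and a `σ₁′`-derivation `δ₁′` of `R[x₂;σ₂]` with
`σ₁′|_R = σ₁`, `σ₁′ x₂ = λ⁻¹ x₂`, `δ₁′|_R = δ₁`, `δ₁′ x₂ = 0`, such that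
`R[x₁;σ₁,δ₁][x₂;σ₂] = R[x₂;σ₂][x₁;σ₁′,δ₁′]` (the iterated extension
`C = R[x₁;σ₁,δ₁][x₂;σ₂]` is an Ore extension of `R[x₂;σ₂]` in the variable `x₁`, via an
isomorphism which is the identity on `R` and interchanges the indeterminates). -/
theorem switch_indeterminates {R : Type u} {A B C : Type v}
    [Ring R] [Ring A] [Ring B] [Ring C]
    (σ₁ σ₂ : R ≃+* R) (δ₁ : R → R) (hδ₁ : IsSigmaDerivation σ₁ δ₁)
    (lam lamInv : R) (h1 : lam * lamInv = 1) (h2 : lamInv * lam = 1)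
    (ιA : R →+* A) (x₁ : A) (hA : IsOreExtension ιA x₁ σ₁ δ₁)
    (σ₂A : A ≃+* A) (hσ₂A : ∀ r : R, σ₂A (ιA r) = ιA (σ₂ r))
    (hσ₂x : σ₂A x₁ = ιA lam * x₁)
    (ι₂ : R →+* B) (x₂ : B) (hB : IsOreExtension ι₂ x₂ σ₂ (fun _ => 0))
    (ιC : A →+* C) (y₂ : C) (hC : IsOreExtension ιC y₂ σ₂A (fun _ => 0)) :
    ∃ (σ₁' : B ≃+* B) (δ₁' : B → B),
      (∀ r : R, σ₁' (ι₂ r) = ι₂ (σ₁ r)) ∧ σ₁' x₂ = ι₂ lamInv * x₂ ∧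
      IsSigmaDerivation σ₁' δ₁' ∧ (∀ r : R, δ₁' (ι₂ r) = ι₂ (δ₁ r)) ∧ δ₁' x₂ = 0 ∧
      ∃ j : B →+* C, (∀ r : R, j (ι₂ r) = ιC (ιA r)) ∧ j x₂ = y₂ ∧
        IsOreExtension j (ιC x₁) σ₁' δ₁' := by
  classical
  have d0 : δ₁ 0 = 0 := sd_zero hδ₁
  have d1 : δ₁ 1 = 0 := sd_one hδ₁
  have relB : ∀ r : R, x₂ * ι₂ r = ι₂ (σ₂ r) * x₂ := fun r => by simpa using hB.rel r
  have relC : ∀ a : A, y₂ * ιC a = ιC (σ₂A a) * y₂ := fun a => by simpa using hC.rel a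
  -- coefficient identities in R
  have key : ∀ r : R, ιA (lam * σ₁ (σ₂ r)) * x₁ + ιA (lam * δ₁ (σ₂ r))
      = ιA (σ₂ (σ₁ r) * lam) * x₁ + ιA (σ₂ (δ₁ r)) := by
    intro r
    have h1' := congrArg σ₂A (hA.rel r)
    rw [map_mul, map_add, map_mul, hσ₂x, hσ₂A, hσ₂A, hσ₂A] at h1'
    rw [mul_assoc, hA.rel (σ₂ r), mul_add, ← mul_assoc, ← map_mul, ← map_mul,
      ← mul_assoc, ← map_mul] at h1'
    exact h1'
  have E1 : ∀ r : R, lam * σ₁ (σ₂ r) = σ₂ (σ₁ r) * lam := fun r => (extract_coeff hA (key r)).1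
  have E2 : ∀ r : R, lam * δ₁ (σ₂ r) = σ₂ (δ₁ r) := fun r => (extract_coeff hA (key r)).2
  have E2' : ∀ r : R, δ₁ (σ₂ r) = lamInv * σ₂ (δ₁ r) := by
    intro r
    calc δ₁ (σ₂ r) = (lamInv * lam) * δ₁ (σ₂ r) := by rw [h2, one_mul]
      _ = lamInv * (lam * δ₁ (σ₂ r)) := by rw [mul_assoc]
      _ = lamInv * σ₂ (δ₁ r) := by rw [E2 r]
  have E1' : ∀ r : R, σ₁ (σ₂ r) * lamInv = lamInv * σ₂ (σ₁ r) := by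
    intro r
    have hh : σ₁ (σ₂ r) * lamInv = lamInv * ((lam * σ₁ (σ₂ r)) * lamInv) := by
      rw [← mul_assoc, ← mul_assoc, h2, one_mul]
    rw [hh, E1 r, mul_assoc, h1, mul_one]
  have E1'' : ∀ r : R, σ₁.symm lam * σ₂ (σ₁.symm r) = σ₁.symm (σ₂ r) * σ₁.symm lam := by
    intro r
    apply σ₁.injective
    rw [map_mul, map_mul, σ₁.apply_symm_apply, σ₁.apply_symm_apply]
    have := E1 (σ₁.symm r)
    rw [σ₁.apply_symm_apply] at this
    exact this
  -- the automorphism σ₁' of B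
  have hyF : ∀ r : R, (ι₂ lamInv * x₂) * (ι₂.comp σ₁.toRingHom) r
      = (ι₂.comp σ₁.toRingHom) (σ₂ r) * (ι₂ lamInv * x₂) := by
    intro r
    show (ι₂ lamInv * x₂) * ι₂ (σ₁ r) = ι₂ (σ₁ (σ₂ r)) * (ι₂ lamInv * x₂)
    rw [mul_assoc, relB (σ₁ r), ← mul_assoc, ← map_mul, ← mul_assoc, ← map_mul, E1' r]
  obtain ⟨F, hF1, hF2⟩ := oreHom hB (ι₂.comp σ₁.toRingHom) (ι₂ lamInv * x₂) hyF
  have hF1 : ∀ r : R, F (ι₂ r) = ι₂ (σ₁ r) := hF1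
  have hyG : ∀ r : R, (ι₂ (σ₁.symm lam) * x₂) * (ι₂.comp σ₁.symm.toRingHom) r
      = (ι₂.comp σ₁.symm.toRingHom) (σ₂ r) * (ι₂ (σ₁.symm lam) * x₂) := by
    intro r
    show (ι₂ (σ₁.symm lam) * x₂) * ι₂ (σ₁.symm r)
      = ι₂ (σ₁.symm (σ₂ r)) * (ι₂ (σ₁.symm lam) * x₂)
    rw [mul_assoc, relB (σ₁.symm r), ← mul_assoc, ← map_mul, ← mul_assoc, ← map_mul,
      E1'' r]
  obtain ⟨G, hG1, hG2⟩ := oreHom hB (ι₂.comp σ₁.symm.toRingHom) (ι₂ (σ₁.symm lam) * x₂) hyG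
  have hG1 : ∀ r : R, G (ι₂ r) = ι₂ (σ₁.symm r) := hG1
  have hGF : G.comp F = RingHom.id B := by
    refine oreHom_ext hB _ _ (fun r => ?_) ?_
    · rw [RingHom.comp_apply, RingHom.id_apply, hF1, hG1, RingEquiv.symm_apply_apply]
    · rw [RingHom.comp_apply, RingHom.id_apply, hF2, map_mul, hG1, hG2, ← mul_assoc,
        ← map_mul, ← map_mul, h2, map_one, map_one, one_mul]
  have hFG : F.comp G = RingHom.id B := by
    refine oreHom_ext hB _ _ (fun r => ?_) ?_
    · rw [RingHom.comp_apply, RingHom.id_apply, hG1, hF1, RingEquiv.apply_symm_apply]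
    · rw [RingHom.comp_apply, RingHom.id_apply, hG2, map_mul, hF1, hF2,
        RingEquiv.apply_symm_apply, ← mul_assoc, ← map_mul, h1, map_one, one_mul]
  -- the derivation δ₁' of B
  set ψ : R → B := fun r => ι₂ (δ₁ r) with hψdef
  have hψ0 : ψ 0 = 0 := by rw [hψdef]; simp only [d0, map_zero]
  have hψa : ∀ a b : R, ψ (a + b) = ψ a + ψ b := by
    intro a b; rw [hψdef]; simp only [hδ₁.1 a b, map_add]
  set D : B →+ B := evalAdd hB ψ hψ0 hψa x₂ with hDdef
  have Dspec : ∀ (m : ℕ) (a : ℕ → R),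
      D (∑ i ∈ Finset.range m, ι₂ (a i) * x₂ ^ i)
        = ∑ i ∈ Finset.range m, ι₂ (δ₁ (a i)) * x₂ ^ i :=
    fun m a => evalFn_spec hB ψ hψ0 x₂ m a
  have Dmono : ∀ (c : R) (k : ℕ), D (ι₂ c * x₂ ^ k) = ι₂ (δ₁ c) * x₂ ^ k :=
    fun c k => evalFn_monomial hB ψ hψ0 x₂ c k
  have Dι : ∀ r : R, D (ι₂ r) = ι₂ (δ₁ r) := by
    intro r
    rw [show (ι₂ r : B) = ι₂ r * x₂ ^ 0 from by simp, Dmono]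
    simp
  have Dx : D x₂ = 0 := by
    rw [show (x₂ : B) = ι₂ 1 * x₂ ^ 1 from by simp, Dmono, d1, map_zero, zero_mul]
  -- commuting monomials in B
  have powB : ∀ (i : ℕ) (r : R), x₂ ^ i * ι₂ r = ι₂ ((⇑σ₂)^[i] r) * x₂ ^ i :=
    fun i r => ore_pow_comm hB i r
  have powC : ∀ (k : ℕ) (a : A), y₂ ^ k * ιC a = ιC ((⇑σ₂A)^[k] a) * y₂ ^ k :=
    fun k a => ore_pow_comm hC k a
  have monoB_mul : ∀ (a : R) (i : ℕ) (b : R) (j : ℕ),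
      (ι₂ a * x₂ ^ i) * (ι₂ b * x₂ ^ j) = ι₂ (a * (⇑σ₂)^[i] b) * x₂ ^ (i + j) := by
    intro a i b j
    rw [mul_assoc, ← mul_assoc (x₂ ^ i), powB, mul_assoc, ← pow_add, ← mul_assoc, ← map_mul]
  -- sequences
  have mul_ml : ∀ i : ℕ, mseq (⇑σ₂) lamInv i * lseq (⇑σ₂) lam i = 1
      ∧ lseq (⇑σ₂) lam i * mseq (⇑σ₂) lamInv i = 1 := by
    intro i
    induction i with
    | zero => simp
    | succ i ih =>
      constructor
      · rw [mseq_succ, lseq_succ, mul_assoc, ← mul_assoc (σ₂ (mseq (⇑σ₂) lamInv i)),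
          ← map_mul, ih.1, map_one, one_mul, h2]
      · rw [mseq_succ, lseq_succ, mul_assoc, ← mul_assoc lam, h1, one_mul,
          ← map_mul, ih.2, map_one]
  have L1 : ∀ i : ℕ, (ι₂ lamInv * x₂) ^ i = ι₂ (mseq (⇑σ₂) lamInv i) * x₂ ^ i := by
    intro i
    induction i with
    | zero => simp
    | succ i ih =>
      rw [pow_succ', ih, mul_assoc, ← mul_assoc x₂, relB, mul_assoc, ← pow_succ',
        ← mul_assoc, ← map_mul, mseq_succ]
  have L2 : ∀ (i : ℕ) (r : R),
      δ₁ ((⇑σ₂)^[i] r) = mseq (⇑σ₂) lamInv i * (⇑σ₂)^[i] (δ₁ r) := by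
    intro i r
    induction i with
    | zero => simp
    | succ i ih =>
      rw [Function.iterate_succ_apply', E2' ((⇑σ₂)^[i] r), ih, map_mul, ← mul_assoc,
        ← Function.iterate_succ_apply' (⇑σ₂) i (δ₁ r), mseq_succ]
  have L3 : ∀ k : ℕ, (⇑σ₂A)^[k] x₁ = ιA (lseq (⇑σ₂) lam k) * x₁ := by
    intro k
    induction k with
    | zero => simp
    | succ k ih =>
      rw [Function.iterate_succ_apply', ih, map_mul, hσ₂A, hσ₂x, ← mul_assoc, ← map_mul,
        lseq_succ]
  have hxy : ιC x₁ * y₂ = ιC (ιA lamInv) * (y₂ * ιC x₁) := by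
    have h' : y₂ * ιC x₁ = ιC (ιA lam) * (ιC x₁ * y₂) := by
      rw [relC x₁, hσ₂x, map_mul, mul_assoc]
    rw [h', ← mul_assoc, ← map_mul, ← map_mul, h2, map_one, map_one, one_mul]
  have L4 : ∀ i : ℕ, ιC x₁ * y₂ ^ i
      = ιC (ιA (mseq (⇑σ₂) lamInv i)) * (y₂ ^ i * ιC x₁) := by
    intro i
    induction i with
    | zero => simp
    | succ i ih =>
      rw [pow_succ' y₂ i, ← mul_assoc, hxy, mul_assoc, mul_assoc, ih, ← mul_assoc y₂,
        relC, hσ₂A, mseq_succ]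
      simp only [map_mul, mul_assoc]
  have L5base : ∀ k : ℕ, y₂ ^ k * ιC x₁ = (ιC (ιA (lseq (⇑σ₂) lam k)) * ιC x₁) * y₂ ^ k := by
    intro k
    rw [powC k x₁, L3 k, map_mul]
  have L5 : ∀ (k i : ℕ), y₂ ^ k * ιC x₁ ^ i
      = (ιC (ιA (lseq (⇑σ₂) lam k)) * ιC x₁) ^ i * y₂ ^ k := by
    intro k i
    induction i with
    | zero => simp
    | succ i ih =>
      rw [pow_succ' (ιC x₁) i, ← mul_assoc, L5base, mul_assoc, ih, ← mul_assoc, ← pow_succ']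
  have Fmono : ∀ (a : R) (i : ℕ),
      F (ι₂ a * x₂ ^ i) = ι₂ (σ₁ a * mseq (⇑σ₂) lamInv i) * x₂ ^ i := by
    intro a i
    rw [map_mul, map_pow, hF1, hF2, L1 i, ← mul_assoc, ← map_mul]
  -- Leibniz rule
  have LeibMono : ∀ (a : R) (i : ℕ) (c : R) (k : ℕ),
      D ((ι₂ a * x₂ ^ i) * (ι₂ c * x₂ ^ k))
        = F (ι₂ a * x₂ ^ i) * D (ι₂ c * x₂ ^ k) + D (ι₂ a * x₂ ^ i) * (ι₂ c * x₂ ^ k) := by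
    intro a i c k
    rw [monoB_mul, Dmono, Fmono, Dmono, Dmono, monoB_mul, monoB_mul, hδ₁.2, L2]
    simp only [map_add, map_mul, add_mul, mul_assoc]
  have Leib : ∀ b c : B, D (b * c) = F b * D c + D b * c := by
    intro b c
    obtain ⟨m, ab, rfl⟩ := hB.gen b
    obtain ⟨n, cb, rfl⟩ := hB.gen c
    rw [Finset.sum_mul_sum]
    simp only [map_sum, Finset.sum_mul_sum]
    rw [← Finset.sum_add_distrib]
    refine Finset.sum_congr rfl fun i _ => ?_
    rw [← Finset.sum_add_distrib]
    refine Finset.sum_congr rfl fun k _ => ?_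
    exact LeibMono (ab i) i (cb k) k
  -- the embedding j : B →+* C
  have hyj : ∀ r : R, y₂ * (ιC.comp ιA) r = (ιC.comp ιA) (σ₂ r) * y₂ := by
    intro r
    show y₂ * ιC (ιA r) = ιC (ιA (σ₂ r)) * y₂
    rw [relC, hσ₂A]
  obtain ⟨j, hj1, hj2⟩ := oreHom hB (ιC.comp ιA) y₂ hyj
  have hj1 : ∀ r : R, j (ι₂ r) = ιC (ιA r) := hj1
  have jmono : ∀ (c : R) (k : ℕ), j (ι₂ c * x₂ ^ k) = ιC (ιA c) * y₂ ^ k := by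
    intro c k
    rw [map_mul, map_pow, hj1, hj2]
  -- the commutation relation in C
  have relFull : ∀ b : B, ιC x₁ * j b = j (F b) * ιC x₁ + j (D b) := by
    intro b
    obtain ⟨m, a, rfl⟩ := hB.gen b
    rw [Dspec]
    simp only [map_sum]
    rw [Finset.mul_sum, Finset.sum_mul, ← Finset.sum_add_distrib]
    refine Finset.sum_congr rfl fun i _ => ?_
    rw [jmono, Fmono, jmono, jmono, ← mul_assoc, ← map_mul, hA.rel, map_add, map_mul,
      add_mul, mul_assoc, L4]
    simp only [map_mul, mul_assoc]
  -- injectivity of j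
  have jinj : Function.Injective j := by
    rw [injective_iff_map_eq_zero]
    intro b hb
    obtain ⟨m, a, hab⟩ := hB.gen b
    have hs : ∑ i ∈ Finset.range m, ιC (ιA (a i)) * y₂ ^ i = 0 := by
      rw [← hb, hab, map_sum]
      exact Finset.sum_congr rfl fun i _ => (jmono (a i) i).symm
    have hz := hC.indep m (fun i => ιA (a i)) hs
    rw [hab]
    apply Finset.sum_eq_zero
    intro i hi
    have hzi : ιA (a i) = 0 := hz i (Finset.mem_range.1 hi)
    have : a i = 0 := hA.inj (by rw [hzi, map_zero])
    rw [this, map_zero, zero_mul]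
  -- generation
  have genFull : ∀ s : C, ∃ (m : ℕ) (a : ℕ → B),
      s = ∑ i ∈ Finset.range m, j (a i) * ιC x₁ ^ i := by
    set P : C → Prop := fun s => ∃ (m : ℕ) (a : ℕ → B),
      s = ∑ i ∈ Finset.range m, j (a i) * ιC x₁ ^ i with hP
    have P0 : P 0 := ⟨0, fun _ => 0, by simp⟩
    have Padd : ∀ s t : C, P s → P t → P (s + t) := by
      rintro _ _ ⟨m, a, rfl⟩ ⟨n, b, rfl⟩
      refine ⟨max m n, fun i => (if i < m then a i else 0) + (if i < n then b i else 0), ?_⟩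
      simp only [map_add, add_mul, Finset.sum_add_distrib]
      rw [padSum (⇑j) (map_zero j) (ιC x₁) a (le_max_left m n),
        padSum (⇑j) (map_zero j) (ιC x₁) b (le_max_right m n)]
    have PjB : ∀ b : B, P (j b) := fun b => ⟨1, fun _ => b, by simp⟩
    have PmulB : ∀ (b : B) (s : C), P s → P (j b * s) := by
      rintro b _ ⟨m, a, rfl⟩
      refine ⟨m, fun i => b * a i, ?_⟩
      rw [Finset.mul_sum]
      exact Finset.sum_congr rfl fun i _ => by rw [map_mul, mul_assoc]
    have Pmulx : ∀ s : C, P s → P (ιC x₁ * s) := by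
      rintro _ ⟨m, a, rfl⟩
      have hkey : ιC x₁ * ∑ i ∈ Finset.range m, j (a i) * ιC x₁ ^ i
          = (∑ i ∈ Finset.range (m + 1), j (if i = 0 then 0 else F (a (i - 1))) * ιC x₁ ^ i)
            + ∑ i ∈ Finset.range m, j (D (a i)) * ιC x₁ ^ i := by
        rw [Finset.mul_sum,
          Finset.sum_range_succ' (fun i => j (if i = 0 then 0 else F (a (i - 1))) * ιC x₁ ^ i)]
        simp only [Nat.succ_ne_zero, if_false, eq_self_iff_true, if_true, Nat.add_sub_cancel,
          map_zero, zero_mul, add_zero, pow_zero]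
        rw [← Finset.sum_add_distrib]
        refine Finset.sum_congr rfl fun i _ => ?_
        rw [← mul_assoc, relFull (a i), add_mul, mul_assoc, ← pow_succ']
      rw [hkey]
      exact Padd _ _ ⟨m + 1, _, rfl⟩ ⟨m, _, rfl⟩
    have Pmulxpow : ∀ (k : ℕ) (s : C), P s → P (ιC x₁ ^ k * s) := by
      intro k
      induction k with
      | zero => intro s hs; simpa using hs
      | succ k ih =>
        intro s hs
        rw [pow_succ', mul_assoc]
        exact Pmulx _ (ih s hs)
    have Psum : ∀ (n : ℕ) (f : ℕ → C), (∀ k, P (f k)) → P (∑ k ∈ Finset.range n, f k) := by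
      intro n f hf
      induction n with
      | zero => simpa using P0
      | succ n ih => rw [Finset.sum_range_succ]; exact Padd _ _ ih (hf n)
    intro s
    obtain ⟨K, c, rfl⟩ := hC.gen s
    refine Psum K _ fun k => ?_
    obtain ⟨L, d, hd⟩ := hA.gen (c k)
    rw [hd, map_sum, Finset.sum_mul]
    refine Psum L _ fun l => ?_
    have e1 : ιC (ιA (d l) * x₁ ^ l) * y₂ ^ k = j (ι₂ (d l)) * (ιC x₁ ^ l * j (x₂ ^ k)) := by
      rw [hj1, map_pow, hj2, map_mul, map_pow, mul_assoc]
    rw [e1]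
    exact PmulB _ _ (Pmulxpow l _ (PjB _))
  -- independence
  have indepFull : ∀ (m : ℕ) (b : ℕ → B),
      (∑ i ∈ Finset.range m, j (b i) * ιC x₁ ^ i) = 0 → ∀ i < m, b i = 0 := by
    intro m b hsum
    choose n a ha using fun i => hB.gen (b i)
    set N := (Finset.range m).sup n with hN
    have hpadb : ∀ i, i < m →
        b i = ∑ k ∈ Finset.range N, ι₂ (if k < n i then a i k else 0) * x₂ ^ k := by
      intro i hi
      rw [padSum (⇑ι₂) (map_zero ι₂) x₂ (a i) (Finset.le_sup (Finset.mem_range.2 hi))]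
      exact ha i
    have hsum2 : ∑ k ∈ Finset.range N, ιC (∑ i ∈ Finset.range m,
        ιA (if k < n i then a i k else 0) * (ιA (lseq (⇑σ₂) lam k) * x₁) ^ i) * y₂ ^ k = 0 := by
      rw [← hsum]
      have per_i : ∀ i ∈ Finset.range m, j (b i) * ιC x₁ ^ i
          = ∑ k ∈ Finset.range N, ιC (ιA (if k < n i then a i k else 0)
              * (ιA (lseq (⇑σ₂) lam k) * x₁) ^ i) * y₂ ^ k := by
        intro i hi
        rw [hpadb i (Finset.mem_range.1 hi), map_sum, Finset.sum_mul]
        refine Finset.sum_congr rfl fun k _ => ?_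
        rw [jmono, mul_assoc, L5 k i, ← mul_assoc, map_mul ιC, map_pow ιC, map_mul ιC]
      rw [Finset.sum_congr rfl per_i, Finset.sum_comm]
      exact Finset.sum_congr rfl fun k _ => by rw [map_sum, Finset.sum_mul]
    have hcoeffA := hC.indep N _ hsum2
    intro i0 hi0
    rw [hpadb i0 hi0]
    apply Finset.sum_eq_zero
    intro k hk
    have hz := unit_indep hA (mul_ml k).2 m _ (hcoeffA k (Finset.mem_range.1 hk)) i0 hi0
    rw [hz, map_zero, zero_mul]
  -- assemble
  refine ⟨RingEquiv.ofRingHom F G hFG hGF, ⇑D, hF1, hF2, ⟨fun a b => map_add D a b, Leib⟩,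
    Dι, Dx, j, hj1, hj2, ?_⟩
  exact { inj := jinj
          sderiv := ⟨fun a b => map_add D a b, Leib⟩
          rel := relFull
          gen := genFull
          indep := indepFull }
end

section
/- Let R be a ring, σ₁, σ₂ automorphisms of R, δ₁ a σ₁-derivation of R, λ ∈ R invertible, with σ₂ extended to R[x₁;σ₁,δ₁] by σ₂(x₁) = λx₁, and let σ₁′, δ₁′ be the automorphism and σ₁′-derivation of R[x₂;σ₂] with σ₁′|_R = σ₁, σ₁′(x₂) = λ⁻¹x₂, δ₁′|_R = δ₁, δ₁′(x₂) = 0. If δ₁ is a q-skew σ₁-derivation of R (q ∈ Z(R), σ₁(q) = q, δ₁(q) = 0), then δ₁′ is a q-skew σ₁′-derivation of R[x₂;σ₂] if and only if δ₁(λ) = 0. -/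
universe u v w

/-- In the situation of switching indeterminates, if `δ₁` is a `q`-skew
`σ₁`-derivation of `R`, then `δ₁′` is a `q`-skew `σ₁′`-derivation of `R[x₂;σ₂]`
(i.e. `δ₁′ ∘ σ₁′ = q ⬝ (σ₁′ ∘ δ₁′)`) if and only if `δ₁ λ = 0`. -/
theorem qskew_after_switching_iff {R : Type u} {A B : Type v}
    [Ring R] [Ring A] [Ring B]
    (σ₁ σ₂ : R ≃+* R) (δ₁ : R → R)
    (lam lamInv : R) (h1 : lam * lamInv = 1) (h2 : lamInv * lam = 1)
    (ιA : R →+* A) (x₁ : A) (hA : IsOreExtension ιA x₁ σ₁ δ₁)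
    (σ₂A : A ≃+* A) (hσ₂A : ∀ r : R, σ₂A (ιA r) = ιA (σ₂ r))
    (hσ₂x : σ₂A x₁ = ιA lam * x₁)
    (ι₂ : R →+* B) (x₂ : B) (hB : IsOreExtension ι₂ x₂ σ₂ (fun _ => 0))
    (σ₁' : B ≃+* B) (δ₁' : B → B)
    (hσ₁'r : ∀ r : R, σ₁' (ι₂ r) = ι₂ (σ₁ r)) (hσ₁'x : σ₁' x₂ = ι₂ lamInv * x₂)
    (hδ₁'d : IsSigmaDerivation σ₁' δ₁')
    (hδ₁'r : ∀ r : R, δ₁' (ι₂ r) = ι₂ (δ₁ r)) (hδ₁'x : δ₁' x₂ = 0)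
    (q : R) (hq : IsQSkewDerivation σ₁ δ₁ q) :
    (∀ b : B, δ₁' (σ₁' b) = ι₂ q * σ₁' (δ₁' b)) ↔ δ₁ lam = 0 := by
  obtain ⟨⟨hadd, hmul⟩, hqc, hqσ, hqδ, hqs⟩ := hq
  -- δ₁ 1 = 0
  have hδ1 : δ₁ 1 = 0 := by
    have h := hmul 1 1
    rw [mul_one, map_one, one_mul, mul_one] at h
    have h' : δ₁ 1 + 0 = δ₁ 1 + δ₁ 1 := by rw [add_zero]; exact h
    exact (add_left_cancel h').symm
  constructor
  · -- forward direction
    intro h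
    have hx := h x₂
    rw [hσ₁'x, hδ₁'x, map_zero, mul_zero, hδ₁'d.2, hδ₁'x, mul_zero, zero_add,
      hδ₁'r] at hx
    -- hx : ι₂ (δ₁ lamInv) * x₂ = 0
    set a : ℕ → R := fun i => if i = 1 then δ₁ lamInv else 0 with ha
    have hsum : ∑ i ∈ Finset.range 2, ι₂ (a i) * x₂ ^ i = 0 := by
      simpa [ha, Finset.sum_range_succ] using hx
    have hinv0 : δ₁ lamInv = 0 := by
      simpa [ha] using hB.indep 2 a hsum 1 (by norm_num)
    have h0 : δ₁ lam * lamInv = 0 := by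
      have h' := hmul lam lamInv
      rw [h1, hδ1, hinv0, mul_zero, zero_add] at h'
      exact h'.symm
    calc δ₁ lam = δ₁ lam * (lamInv * lam) := by rw [h2, mul_one]
    _ = (δ₁ lam * lamInv) * lam := by rw [mul_assoc]
    _ = 0 := by rw [h0, zero_mul]
  · -- backward direction
    intro hlam
    -- δ₁ lamInv = 0
    have hinv0 : δ₁ lamInv = 0 := by
      have h' := hmul lamInv lam
      rw [h2, hδ1, hlam, mul_zero, zero_add] at h'
      calc δ₁ lamInv = δ₁ lamInv * (lam * lamInv) := by rw [h1, mul_one]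
      _ = (δ₁ lamInv * lam) * lamInv := by rw [mul_assoc]
      _ = 0 := by rw [← h', zero_mul]
    -- key compatibility: δ₁ (σ₂ r) = lamInv * σ₂ (δ₁ r)
    have key : ∀ r : R, δ₁ (σ₂ r) = lamInv * σ₂ (δ₁ r) := by
      intro r
      have e1 : σ₂A (x₁ * ιA r) =
          ιA (lam * σ₁ (σ₂ r)) * x₁ + ιA (lam * δ₁ (σ₂ r)) := by
        rw [map_mul, hσ₂x, hσ₂A, mul_assoc, hA.rel, mul_add, ← mul_assoc,
          ← map_mul, ← map_mul]
      have e2 : σ₂A (x₁ * ιA r) =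
          ιA (σ₂ (σ₁ r) * lam) * x₁ + ιA (σ₂ (δ₁ r)) := by
        rw [hA.rel, map_add, map_mul, hσ₂A, hσ₂A, hσ₂x, ← mul_assoc, ← map_mul]
      set a : ℕ → R := fun i =>
        if i = 0 then lam * δ₁ (σ₂ r) - σ₂ (δ₁ r)
        else if i = 1 then lam * σ₁ (σ₂ r) - σ₂ (σ₁ r) * lam else 0 with ha
      have hsum : ∑ i ∈ Finset.range 2, ιA (a i) * x₁ ^ i = 0 := by
        have h := e1.symm.trans e2
        simp only [ha, Finset.sum_range_succ, Finset.sum_range_zero, pow_zero,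
          pow_one, zero_add, mul_one, if_pos rfl]
        norm_num
        rw [sub_mul]
        have h' : ιA lam * ιA (σ₁ (σ₂ r)) * x₁ + ιA lam * ιA (δ₁ (σ₂ r)) =
            ιA (σ₂ (σ₁ r)) * ιA lam * x₁ + ιA (σ₂ (δ₁ r)) := by
          rw [← map_mul, ← map_mul, ← map_mul]; exact h
        calc ιA lam * ιA (δ₁ (σ₂ r)) - ιA (σ₂ (δ₁ r)) +
              (ιA lam * ιA (σ₁ (σ₂ r)) * x₁ - ιA (σ₂ (σ₁ r)) * ιA lam * x₁)
            = (ιA lam * ιA (σ₁ (σ₂ r)) * x₁ + ιA lam * ιA (δ₁ (σ₂ r))) -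
              (ιA (σ₂ (σ₁ r)) * ιA lam * x₁ + ιA (σ₂ (δ₁ r))) := by abel
        _ = 0 := by rw [h', sub_self]
      have h00 : a 0 = 0 := hA.indep 2 a hsum 0 (by norm_num)
      have hl : lam * δ₁ (σ₂ r) = σ₂ (δ₁ r) := by
        simpa [ha, sub_eq_zero] using h00
      calc δ₁ (σ₂ r) = lamInv * (lam * δ₁ (σ₂ r)) := by
            rw [← mul_assoc, h2, one_mul]
      _ = lamInv * σ₂ (δ₁ r) := by rw [hl]
    -- δ₁' 1 = 0
    have hδ1' : δ₁' 1 = 0 := by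
      have h := hδ₁'d.2 1 1
      rw [mul_one, map_one, one_mul, mul_one] at h
      have h' : δ₁' 1 + 0 = δ₁' 1 + δ₁' 1 := by rw [add_zero]; exact h
      exact (add_left_cancel h').symm
    -- δ₁' kills powers of x₂
    have δpow : ∀ i : ℕ, δ₁' (x₂ ^ i) = 0 := by
      intro i
      induction i with
      | zero => simpa using hδ1'
      | succ i ih =>
        rw [pow_succ, hδ₁'d.2, hδ₁'x, mul_zero, ih, zero_mul, add_zero]
    have hmono : ∀ (s : R) (i : ℕ),
        δ₁' (ι₂ s * x₂ ^ i) = ι₂ (δ₁ s) * x₂ ^ i := by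
      intro s i
      rw [hδ₁'d.2, δpow, mul_zero, zero_add, hδ₁'r]
    -- σ₁' on powers of x₂
    have hpow : ∀ i : ℕ, ∃ c : R,
        σ₁' (x₂ ^ i) = ι₂ c * x₂ ^ i ∧ δ₁ c = 0 := by
      intro i
      induction i with
      | zero => exact ⟨1, by simp, hδ1⟩
      | succ i ih =>
        obtain ⟨c, hc, hc0⟩ := ih
        have hrel : x₂ * ι₂ c = ι₂ (σ₂ c) * x₂ := by
          simpa using hB.rel c
        refine ⟨lamInv * σ₂ c, ?_, ?_⟩
        · calc σ₁' (x₂ ^ (i + 1)) = σ₁' x₂ * σ₁' (x₂ ^ i) := by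
                rw [pow_succ', map_mul]
          _ = ι₂ lamInv * x₂ * (ι₂ c * x₂ ^ i) := by rw [hσ₁'x, hc]
          _ = ι₂ lamInv * (x₂ * ι₂ c) * x₂ ^ i := by simp [mul_assoc]
          _ = ι₂ (lamInv * σ₂ c) * x₂ ^ (i + 1) := by
                rw [hrel, map_mul]; simp [mul_assoc, pow_succ']
        · rw [hmul, key, hc0, map_zero, mul_zero, mul_zero, hinv0, zero_mul,
            add_zero]
    -- the main monomial computation
    have main : ∀ (s : R) (i : ℕ),
        δ₁' (σ₁' (ι₂ s * x₂ ^ i)) = ι₂ q * σ₁' (δ₁' (ι₂ s * x₂ ^ i)) := by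
      intro s i
      obtain ⟨c, hc, hc0⟩ := hpow i
      have l1 : σ₁' (ι₂ s * x₂ ^ i) = ι₂ (σ₁ s * c) * x₂ ^ i := by
        rw [map_mul, hσ₁'r, hc, ← mul_assoc, ← map_mul]
      have l2 : σ₁' (ι₂ (δ₁ s) * x₂ ^ i) = ι₂ (σ₁ (δ₁ s) * c) * x₂ ^ i := by
        rw [map_mul, hσ₁'r, hc, ← mul_assoc, ← map_mul]
      have hls : δ₁ (σ₁ s * c) = q * (σ₁ (δ₁ s) * c) := by
        rw [hmul, hc0, mul_zero, zero_add, hqs s, mul_assoc]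
      rw [l1, hmono, hmono, l2, hls, map_mul, mul_assoc]
    -- assemble via additivity
    let D : B →+ B := AddMonoidHom.mk' δ₁' (fun a b => hδ₁'d.1 a b)
    have Dsum : ∀ (s : Finset ℕ) (f : ℕ → B),
        δ₁' (∑ i ∈ s, f i) = ∑ i ∈ s, δ₁' (f i) := fun s f => map_sum D f s
    intro b
    obtain ⟨m, a, rfl⟩ := hB.gen b
    calc δ₁' (σ₁' (∑ i ∈ Finset.range m, ι₂ (a i) * x₂ ^ i))
        = ∑ i ∈ Finset.range m, δ₁' (σ₁' (ι₂ (a i) * x₂ ^ i)) := by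
          rw [map_sum, Dsum]
    _ = ∑ i ∈ Finset.range m, ι₂ q * σ₁' (δ₁' (ι₂ (a i) * x₂ ^ i)) :=
          Finset.sum_congr rfl (fun i _ => main (a i) i)
    _ = ι₂ q * σ₁' (δ₁' (∑ i ∈ Finset.range m, ι₂ (a i) * x₂ ^ i)) := by
          rw [Dsum, map_sum, Finset.mul_sum]
end
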